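/- arXiv:1110.1116 — 12 statements merged into one kernel-verified Lean document; each statement's English description precedes it below -/
import Mathlib

section
/- Let p be an odd prime, r an odd positive integer, and q = p^r or q = −p^r. Let s ∈ ℂ satisfy s² = q, let t be a positive integer, and let ζ be a primitive 4t-th root of unity in ℂ. If t is even, or p does not divide t, or q ≡ 1 (mod 4), then the minimal polynomial over ℚ of θ = s·ζ has degree φ(4t), and its image in ℂ[X] equals ∏_{a ∈ (ℤ/4tℤ)ˣ} (X − s·ζ^a). -/
open Polynomial IntermediateField

private lemma coprime_of_modEq' {a b n : ℕ} (h : a ≡ b [MOD n]) (hb : Nat.Coprime b n) :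
    Nat.Coprime a n := by
  have hgcd : Nat.gcd n a = Nat.gcd n b := by
    rw [Nat.gcd_rec n a, Nat.gcd_rec n b, h]
  have := hb
  unfold Nat.Coprime at *
  rw [Nat.gcd_comm, hgcd, Nat.gcd_comm]
  exact this

private lemma neg_one_pow_par' {m n : ℕ} (h : m % 2 = n % 2) : (-1 : ℂ) ^ m = (-1) ^ n := by
  rcases Nat.even_or_odd m with hm | hm
  · have hn : Even n := by rw [Nat.even_iff] at *; omega
    rw [hm.neg_one_pow, hn.neg_one_pow]
  · have hn : Odd n := by rw [Nat.odd_iff] at *; omega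
    rw [hm.neg_one_pow, hn.neg_one_pow]

private lemma pm_pow_odd' {z : ℂ} (h : z = 1 ∨ z = -1) {r : ℕ} (hr : Odd r) : z ^ r = z := by
  rcases h with h | h <;> subst h
  · simp
  · simp [hr.neg_one_pow]

set_option maxHeartbeats 1000000 in
/-- Let p be an odd prime, r an odd positive integer, and q = p^r or q = −p^r.
Let s ∈ ℂ satisfy s² = q, let t be a positive integer, and let ζ be a primitive 4t-th root of
unity in ℂ. If t is even, or p does not divide t, or q ≡ 1 (mod 4), then the minimal polynomial
over ℚ of θ = s·ζ has degree φ(4t), and its image in ℂ[X] equals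
∏_{a ∈ (ℤ/4tℤ)ˣ} (X − s·ζ^a). -/
theorem stmt_0 (p : ℕ) (hp : p.Prime) (hpodd : Odd p)
    (r : ℕ) (hr : Odd r) (hr0 : 0 < r)
    (q : ℤ) (hq : q = (p : ℤ) ^ r ∨ q = -((p : ℤ) ^ r))
    (s : ℂ) (hs : s ^ 2 = (q : ℂ))
    (t : ℕ) (ht : 0 < t)
    (ζ : ℂ) (hζ : IsPrimitiveRoot ζ (4 * t))
    (hcase : Even t ∨ ¬ (p ∣ t) ∨ q % 4 = 1) :
    (minpoly ℚ (s * ζ)).natDegree = Nat.totient (4 * t) ∧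
    (minpoly ℚ (s * ζ)).map (algebraMap ℚ ℂ) =
      ∏ a ∈ (Finset.range (4 * t)).filter (fun a => Nat.Coprime a (4 * t)),
        (X - C (s * ζ ^ a)) := by
  classical
  haveI : Fact p.Prime := ⟨hp⟩
  have hp2 : p ≠ 2 := by
    rintro rfl
    rw [Nat.odd_iff] at hpodd
    omega
  have hppos : 0 < p := hp.pos
  have ht4 : 0 < 4 * t := by omega
  have hq0 : q ≠ 0 := by
    have hpr : ((p : ℤ)) ^ r ≠ 0 := pow_ne_zero _ (by exact_mod_cast hp.ne_zero)
    rcases hq with h | h <;> simp [h, hpr]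
  have hs0 : s ≠ 0 := by
    intro h
    rw [h] at hs
    simp only [ne_eq, zero_pow, OfNat.ofNat_ne_zero, not_false_eq_true] at hs
    exact hq0 (by exact_mod_cast hs.symm)
  have hζ1 : ζ ^ (4 * t) = 1 := hζ.pow_eq_one
  have hζ2t : ζ ^ (2 * t) = -1 := (hζ.pow ht4 (by ring)).eq_neg_one_of_two_right
  -- totient fact
  have htot : Nat.totient (4 * t) = 2 * Nat.totient (2 * t) := by
    have h := Nat.totient_mul_of_prime_of_dvd Nat.prime_two (dvd_mul_right 2 t)
    rw [show 4 * t = 2 * (2 * t) by ring]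
    exact h
  -- ###### Upper bound for the degree
  have hupper : (minpoly ℚ (s * ζ)).natDegree ≤ Nat.totient (4 * t) := by
    have hq0' : ((q : ℚ)) ≠ 0 := Int.cast_ne_zero.mpr hq0
    set f : ℚ[X] := (cyclotomic (2 * t) ℚ).comp (C ((q : ℚ)⁻¹) * X ^ 2) with hf
    have hfdeg : f.natDegree = 2 * Nat.totient (2 * t) := by
      rw [hf, natDegree_comp, natDegree_cyclotomic, natDegree_C_mul (inv_ne_zero hq0'),
        natDegree_X_pow]
      ring
    have hf0 : f ≠ 0 := by
      intro h
      rw [h, natDegree_zero] at hfdeg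
      have := Nat.totient_pos.mpr (by omega : 0 < 2 * t)
      omega
    have hfθ : aeval (s * ζ) f = 0 := by
      rw [hf, aeval_comp]
      have h1 : aeval (s * ζ) (C ((q : ℚ)⁻¹) * X ^ 2) = ζ ^ 2 := by
        rw [map_mul, aeval_C, map_pow, aeval_X, mul_pow, hs]
        have : (algebraMap ℚ ℂ) ((q : ℚ)⁻¹) = ((q : ℂ))⁻¹ := by
          rw [map_inv₀, map_intCast]
        rw [this]
        have hqc : (q : ℂ) ≠ 0 := Int.cast_ne_zero.mpr hq0
        field_simp
      rw [h1]
      have hprim2 : IsPrimitiveRoot (ζ ^ 2) (2 * t) := hζ.pow ht4 (by ring)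
      haveI : NeZero (((2 * t : ℕ)) : ℂ) := ⟨by exact_mod_cast (by omega : (2 * t) ≠ 0)⟩
      rw [aeval_def, ← eval_map, map_cyclotomic]
      exact isRoot_cyclotomic_iff.mpr hprim2
    calc (minpoly ℚ (s * ζ)).natDegree ≤ f.natDegree :=
          natDegree_le_of_dvd (minpoly.dvd ℚ _ hfθ) hf0
      _ = Nat.totient (4 * t) := by rw [hfdeg, htot]
  -- ###### The big cyclotomic field
  set Mn := 4 * t * p with hMn
  have hM0 : Mn ≠ 0 := by positivity
  have hMpos : 0 < Mn := Nat.pos_of_ne_zero hM0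
  obtain ⟨j, hjlt, hjcop, hjζ⟩ := (Complex.isPrimitiveRoot_iff ζ (4 * t) (by omega)).mp hζ
  set ξ : ℂ := Complex.exp (2 * Real.pi * Complex.I / Mn) with hξdef
  have hξ : IsPrimitiveRoot ξ Mn := Complex.isPrimitiveRoot_exp Mn hM0
  have hζeq : ξ ^ (p * j) = ζ := by
    rw [hξdef, ← Complex.exp_nat_mul, ← hjζ]
    congr 1
    have hpc : ((p : ℕ) : ℂ) ≠ 0 := Nat.cast_ne_zero.mpr hp.ne_zero
    have htc : ((t : ℕ) : ℂ) ≠ 0 := Nat.cast_ne_zero.mpr (by omega)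
    rw [hMn]
    push_cast
    field_simp
  have hint : IsIntegral ℚ ξ := (hξ.isIntegral hMpos).tower_top
  haveI hfd : FiniteDimensional ℚ ℚ⟮ξ⟯ := IntermediateField.adjoin.finiteDimensional hint
  set g0 : ℚ⟮ξ⟯ := IntermediateField.AdjoinSimple.gen ℚ ξ with hg0def
  have hg0ι : algebraMap ℚ⟮ξ⟯ ℂ g0 = ξ := IntermediateField.AdjoinSimple.algebraMap_gen ℚ ξ
  have hιinj : Function.Injective (algebraMap ℚ⟮ξ⟯ ℂ) := (algebraMap ℚ⟮ξ⟯ ℂ).injective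
  haveI : CharZero ℚ⟮ξ⟯ := charZero_of_injective_algebraMap (algebraMap ℚ ℚ⟮ξ⟯).injective
  -- roots of unity inside
  set ζp : ℂ := ξ ^ (4 * t) with hζpdef
  have hζpprim : IsPrimitiveRoot ζp p := hξ.pow hMpos rfl
  have hζp1 : ζp ^ p = 1 := hζpprim.pow_eq_one
  set i0 : ℂ := ξ ^ (t * p) with hi0def
  have hi02 : i0 ^ 2 = -1 := by
    rw [hi0def, ← pow_mul]
    exact (hξ.pow hMpos (by ring)).eq_neg_one_of_two_right
  set ζpK : ℚ⟮ξ⟯ := g0 ^ (4 * t) with hζpKdef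
  have hζpKι : algebraMap ℚ⟮ξ⟯ ℂ ζpK = ζp := by rw [hζpKdef, map_pow, hg0ι]
  have hζpK1 : ζpK ^ p = 1 := by
    apply hιinj
    rw [map_pow, hζpKι, map_one]
    exact hζp1
  have hζpKprim : IsPrimitiveRoot ζpK p := by
    have h : IsPrimitiveRoot ((ζpK : ℂ)) p := by
      have : ((ζpK : ℂ)) = ζp := hζpKι
      rw [this]
      exact hζpprim
    exact IsPrimitiveRoot.coe_submonoidClass_iff.mp h
  set iK : ℚ⟮ξ⟯ := g0 ^ (t * p) with hiKdef
  have hiKι : algebraMap ℚ⟮ξ⟯ ℂ iK = i0 := by rw [hiKdef, map_pow, hg0ι, hi0def]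
  -- characters and the Gauss sum
  set χ := quadraticChar (ZMod p) with hχdef
  set χC : MulChar (ZMod p) ℂ := χ.ringHomComp (Int.castRingHom ℂ) with hχCdef
  set χK : MulChar (ZMod p) ℚ⟮ξ⟯ := χ.ringHomComp (Int.castRingHom ℚ⟮ξ⟯) with hχKdef
  set ψK : AddChar (ZMod p) ℚ⟮ξ⟯ := AddChar.zmodChar p hζpK1 with hψKdef
  set ψC : AddChar (ZMod p) ℂ := AddChar.zmodChar p hζp1 with hψCdef
  set gK : ℚ⟮ξ⟯ := gaussSum χK ψK with hgKdef
  set G : ℂ := gaussSum χC ψC with hGdef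
  have hχquad : χ.IsQuadratic := quadraticChar_isQuadratic (ZMod p)
  have hring2 : ringChar (ZMod p) ≠ 2 := by rw [ZMod.ringChar_zmod_n]; exact hp2
  have hχKne : χK ≠ 1 := by
    rw [hχKdef]
    exact (MulChar.ringHomComp_ne_one_iff (Int.cast_injective)).mpr (quadraticChar_ne_one hring2)
  have hgK2 : gK ^ 2 = ((χ (-1) : ℤ) : ℚ⟮ξ⟯) * p := by
    have h2 : gaussSum χK ψK ^ 2 = χK (-1) * ((p : ℕ) : ℚ⟮ξ⟯) := by
      have h := gaussSum_sq hχKne (hχquad.comp _)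
        (AddChar.zmodChar_primitive_of_primitive_root p hζpKprim)
      rwa [ZMod.card] at h
    rw [hgKdef, h2, hχKdef]
    simp only [MulChar.ringHomComp_apply, Int.coe_castRingHom]
  have hgKι : algebraMap ℚ⟮ξ⟯ ℂ gK = G := by
    rw [hgKdef, hGdef]
    unfold gaussSum
    rw [map_sum]
    refine Finset.sum_congr rfl fun x _ => ?_
    rw [map_mul]
    congr 1
  -- embeddings
  have key : ∀ b : ℕ, Nat.Coprime b Mn → ∃ σ : ℚ⟮ξ⟯ →ₐ[ℚ] ℂ, σ g0 = ξ ^ b := by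
    intro b hb
    have hmin : minpoly ℚ ξ = cyclotomic Mn ℚ := (cyclotomic_eq_minpoly_rat hξ hMpos).symm
    have hroot : ξ ^ b ∈ (minpoly ℚ ξ).aroots ℂ := by
      rw [hmin, mem_aroots]
      refine ⟨cyclotomic_ne_zero Mn ℚ, ?_⟩
      haveI : NeZero ((Mn : ℕ) : ℂ) := ⟨by exact_mod_cast hM0⟩
      rw [aeval_def, ← eval_map, map_cyclotomic]
      exact isRoot_cyclotomic_iff.mpr (hξ.pow_of_coprime b hb)
    exact ⟨(IntermediateField.algHomAdjoinIntegralEquiv ℚ hint).symm ⟨ξ ^ b, hroot⟩,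
      IntermediateField.algHomAdjoinIntegralEquiv_symm_apply_gen ℚ hint _⟩
  -- action on the Gauss sum
  have hχpm : ∀ y : ZMod p, y ≠ 0 → χC y = 1 ∨ χC y = -1 := by
    intro y hy
    rcases quadraticChar_dichotomy hy with h | h <;>
      [left; right] <;>
      · rw [hχCdef]
        simp only [MulChar.ringHomComp_apply, Int.coe_castRingHom]
        rw [hχdef, h]
        norm_num
  have hσgauss : ∀ (σ : ℚ⟮ξ⟯ →ₐ[ℚ] ℂ) (b : ℕ), Nat.Coprime b p → σ g0 = ξ ^ b →
      σ gK = χC ((b : ZMod p)) * G := by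
    intro σ b hbp hσg
    have hσζpK : σ ζpK = ζp ^ b := by
      rw [hζpKdef, map_pow, hσg, ← pow_mul, mul_comm b (4 * t), pow_mul, hζpdef]
    have hbne : ((b : ZMod p)) ≠ 0 := by
      rw [Ne, ZMod.natCast_eq_zero_iff]
      intro hdvd
      have h1 : p ∣ Nat.gcd b p := Nat.dvd_gcd hdvd dvd_rfl
      rw [hbp] at h1
      have h2 := Nat.dvd_one.mp h1
      have h3 := hp.two_le
      omega
    have hmain : σ gK = gaussSum χC (AddChar.mulShift ψC ((b : ZMod p))) := by
      rw [hgKdef]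
      unfold gaussSum
      rw [map_sum]
      refine Finset.sum_congr rfl fun x _ => ?_
      rw [map_mul]
      congr 1
      · rw [hχKdef, hχCdef]
        simp only [MulChar.ringHomComp_apply, Int.coe_castRingHom, map_intCast]
      · rw [hψKdef, AddChar.mulShift_apply, hψCdef, AddChar.zmodChar_apply, map_pow, hσζpK,
          ← pow_mul]
        have h1 : ((b : ZMod p)) * x = (((b * x.val : ℕ)) : ZMod p) := by
          push_cast
          rw [ZMod.natCast_rightInverse x]
        rw [h1, AddChar.zmodChar_apply' hζp1]
    have hcb2 : χC ((b : ZMod p)) * χC ((b : ZMod p)) = 1 := by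
      rcases hχpm _ hbne with h | h <;> rw [h] <;> norm_num
    have hshift := gaussSum_mulShift χC ψC (ZMod.unitOfCoprime b hbp)
    rw [ZMod.coe_unitOfCoprime] at hshift
    rw [hmain]
    have : gaussSum χC (AddChar.mulShift ψC ((b : ZMod p))) = χC ((b : ZMod p)) * G := by
      rw [hGdef, ← hshift, ← mul_assoc, hcb2, one_mul]
    rw [this]
  -- the square root w
  set ε : ℤ := if q = (p : ℤ) ^ r then 1 else -1 with hεdef
  have hε1 : ε = 1 ∨ ε = -1 := by rw [hεdef]; split <;> simp
  have hqε : q = ε * (p : ℤ) ^ r := by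
    rcases hq with h | h
    · rw [hεdef, if_pos h]; linarith
    · have hne : q ≠ (p : ℤ) ^ r := by
        rw [h]
        have hpr : (0 : ℤ) < (p : ℤ) ^ r := by positivity
        intro hcon
        omega
      rw [hεdef, if_neg hne]; linarith
  set cχ : ℤ := χ (-1) with hcχdef
  have hm1ne : ((-1 : ZMod p)) ≠ 0 := by
    intro h
    have : ((1 : ZMod p)) = 0 := by rw [← neg_neg (1 : ZMod p), h, neg_zero]
    exact one_ne_zero this
  have hcχpm : cχ = 1 ∨ cχ = -1 := by
    rw [hcχdef, hχdef]
    exact quadraticChar_dichotomy hm1ne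
  set e : ℕ := if cχ = ε then 0 else 1 with hedef
  have he01 : e = 0 ∨ e = 1 := by rw [hedef]; split <;> simp
  have hsgn : ((-1 : ℤ)) ^ e * cχ = ε := by
    rw [hedef]
    split
    · next h => rw [pow_zero, one_mul]; exact h
    · next h =>
      rw [pow_one]
      rcases hcχpm with h1 | h1 <;> rcases hε1 with h2 | h2 <;> omega
  set wK : ℚ⟮ξ⟯ := iK ^ e * gK ^ r with hwKdef
  set W : ℂ := algebraMap ℚ⟮ξ⟯ ℂ wK with hWdef
  have hWval : W = i0 ^ e * G ^ r := by
    rw [hWdef, hwKdef, map_mul, map_pow _ iK e, map_pow _ gK r, hiKι, hgKι]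
  have hG2 : G ^ 2 = ((cχ : ℂ)) * p := by
    have h := congrArg (algebraMap ℚ⟮ξ⟯ ℂ) hgK2
    rw [map_pow, hgKι, map_mul, map_intCast, map_natCast] at h
    rw [h, hcχdef]
  have hcχC : ((cχ : ℂ)) = 1 ∨ ((cχ : ℂ)) = -1 := by
    rcases hcχpm with h | h <;> rw [h] <;> norm_num
  have hW2 : W ^ 2 = (q : ℂ) := by
    rw [hWval]
    have h1 : (i0 ^ e * G ^ r) ^ 2 = ((i0 ^ 2) ^ e) * ((G ^ 2) ^ r) := by ring
    rw [h1, hi02, hG2, mul_pow, pm_pow_odd' hcχC hr]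
    have h2 := congrArg (Int.cast : ℤ → ℂ) hsgn
    push_cast at h2
    have h3 := congrArg (Int.cast : ℤ → ℂ) hqε
    push_cast at h3
    rw [h3]
    linear_combination ((p : ℂ) ^ r) * h2
  obtain ⟨sK, hsKι, hsKpm⟩ : ∃ sK : ℚ⟮ξ⟯,
      algebraMap ℚ⟮ξ⟯ ℂ sK = s ∧ (sK = wK ∨ sK = -wK) := by
    have h0 : (s - W) * (s + W) = 0 := by linear_combination hs - hW2
    rcases mul_eq_zero.mp h0 with h | h
    · exact ⟨wK, by rw [← hWdef]; linear_combination -h, Or.inl rfl⟩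
    · refine ⟨-wK, ?_, Or.inr rfl⟩
      rw [map_neg, ← hWdef]
      linear_combination -h
  -- θ inside the field
  set θK : ℚ⟮ξ⟯ := sK * g0 ^ (p * j) with hθKdef
  have hθKι : algebraMap ℚ⟮ξ⟯ ℂ θK = s * ζ := by
    rw [hθKdef, map_mul, hsKι, map_pow, hg0ι, hζeq]
  have hminθ : minpoly ℚ (s * ζ) = minpoly ℚ θK := by
    rw [← hθKι]
    exact minpoly.algebraMap_eq hιinj θK
  have hθint : IsIntegral ℚ (s * ζ) := by
    rw [← hθKι]
    exact (IsIntegral.of_finite ℚ θK).map (IsScalarTower.toAlgHom ℚ ℚ⟮ξ⟯ ℂ)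
  -- the master conjugation fact
  have master : ∀ b : ℕ, Nat.Coprime b Mn → 0 < b →
      aeval (χC ((b : ZMod p)) * i0 ^ ((b - 1) * e) * (s * ζ ^ b)) (minpoly ℚ (s * ζ)) = 0 := by
    intro b hb hb0
    obtain ⟨σ, hσg⟩ := key b hb
    have hbp : Nat.Coprime b p := hb.coprime_dvd_right (dvd_mul_left p (4 * t))
    have hσgK := hσgauss σ b hbp hσg
    have hbne : ((b : ZMod p)) ≠ 0 := by
      rw [Ne, ZMod.natCast_eq_zero_iff]
      intro hdvd
      have h1 : p ∣ Nat.gcd b p := Nat.dvd_gcd hdvd dvd_rfl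
      rw [hbp] at h1
      have h2 := Nat.dvd_one.mp h1
      have h3 := hp.two_le
      omega
    have hσiK : σ iK = i0 ^ b := by
      rw [hiKdef, map_pow, hσg, hi0def, ← pow_mul, ← pow_mul]
      congr 1
      ring
    have hσwK : σ wK = χC ((b : ZMod p)) * i0 ^ ((b - 1) * e) * W := by
      rw [hwKdef, map_mul, map_pow _ iK e, map_pow _ gK r, hσiK, hσgK, mul_pow,
        pm_pow_odd' (hχpm _ hbne) hr, hWval]
      have hib : (i0 ^ b) ^ e = i0 ^ ((b - 1) * e) * i0 ^ e := by
        rw [← pow_add, ← pow_mul]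
        congr 1
        have hle : e ≤ b * e := Nat.le_mul_of_pos_left e hb0
        rw [Nat.sub_mul, one_mul]
        omega
      rw [hib]
      ring
    have hσsK : σ sK = χC ((b : ZMod p)) * i0 ^ ((b - 1) * e) * s := by
      rcases hsKpm with h | h
      · have hWs : W = s := by rw [hWdef, ← h, hsKι]
        rw [h, hσwK, hWs]
      · have hWs : W = -s := by
          have h2 : algebraMap ℚ⟮ξ⟯ ℂ (-wK) = s := by rw [← h, hsKι]
          rw [map_neg, ← hWdef] at h2
          linear_combination -h2
        rw [h, map_neg, hσwK, hWs]
        ring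
    have hσθ : σ θK = χC ((b : ZMod p)) * i0 ^ ((b - 1) * e) * (s * ζ ^ b) := by
      rw [hθKdef, map_mul, hσsK, map_pow, hσg]
      have : (ξ ^ b) ^ (p * j) = ζ ^ b := by rw [← pow_mul, mul_comm, pow_mul, hζeq]
      rw [this]
      ring
    rw [hminθ, ← hσθ, aeval_algHom_apply, minpoly.aeval, map_zero]
  -- ###### The endgame: each s ζ^a with a coprime is a root
  have hq41 : q % 4 = 1 → e = 0 := by
    intro h4
    suffices hce : cχ = ε by rw [hedef, if_pos hce]
    have hc4 : cχ = ZMod.χ₄ ((p : ℕ)) := by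
      rw [hcχdef, hχdef, quadraticChar_neg_one hring2, ZMod.card]
    have hpmod : p % 4 = 1 ∨ p % 4 = 3 := by
      rw [Nat.odd_iff] at hpodd
      omega
    have hq1 : ((q : ZMod 4)) = 1 := by
      have hmod : q ≡ 1 [ZMOD 4] := by
        unfold Int.ModEq
        simp [h4]
      have := (ZMod.intCast_eq_intCast_iff _ _ _).mpr hmod
      rwa [Int.cast_one] at this
    have hqz : ((q : ZMod 4)) = ((ε : ZMod 4)) * (((p : ℕ) : ZMod 4)) ^ r := by
      rw [hqε]
      push_cast
      ring
    have hp4cast : (((p : ℕ)) : ZMod 4) = (((p % 4 : ℕ)) : ZMod 4) :=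
      (ZMod.natCast_mod p 4).symm
    rcases hpmod with hp4 | hp4
    · have hx : (((p : ℕ)) : ZMod 4) = 1 := by rw [hp4cast, hp4]; norm_num
      have hχ4 : ZMod.χ₄ ((p : ℕ)) = 1 := ZMod.χ₄_nat_one_mod_four hp4
      have hεe : ε = 1 := by
        rcases hε1 with h | h
        · exact h
        · exfalso
          rw [h, hx] at hqz
          rw [hq1] at hqz
          norm_num at hqz
          exact (by decide : ((1 : ZMod 4)) ≠ -1) hqz
      rw [hc4, hχ4, hεe]
    · have hx : (((p : ℕ)) : ZMod 4) = -1 := by rw [hp4cast, hp4]; decide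
      have hχ4 : ZMod.χ₄ ((p : ℕ)) = -1 := ZMod.χ₄_nat_three_mod_four hp4
      have hεe : ε = -1 := by
        rcases hε1 with h | h
        · exfalso
          rw [h, hx, hr.neg_one_pow] at hqz
          rw [hq1] at hqz
          norm_num at hqz
          exact (by decide : ((1 : ZMod 4)) ≠ -1) hqz
        · exact h
      rw [hc4, hχ4, hεe]
  have hζpoweq : ∀ {b a : ℕ}, b ≡ a [MOD 4 * t] → ζ ^ b = ζ ^ a := by
    intro b a h
    rw [pow_eq_pow_mod b hζ1, pow_eq_pow_mod a hζ1, h]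
  have root_a : ∀ a ∈ (Finset.range (4 * t)).filter (fun a => Nat.Coprime a (4 * t)),
      aeval (s * ζ ^ a) (minpoly ℚ (s * ζ)) = 0 := by
    intro a ha
    rw [Finset.mem_filter, Finset.mem_range] at ha
    obtain ⟨halt, hacop⟩ := ha
    have haodd : a % 2 = 1 := by
      have h2 : Nat.Coprime a 2 := hacop.coprime_dvd_right ⟨2 * t, by ring⟩
      rcases Nat.even_or_odd a with hev | hod
      · exfalso
        have hd : (2 : ℕ) ∣ Nat.gcd a 2 := Nat.dvd_gcd hev.two_dvd dvd_rfl
        rw [h2] at hd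
        omega
      · exact Nat.odd_iff.mp hod
    have ha0 : 0 < a := by omega
    have hζa2t : ζ ^ (a + 2 * t) = -ζ ^ a := by
      rw [pow_add, hζ2t, mul_neg, mul_one]
    have hcop2 : Nat.Coprime (a + 2 * t) (4 * t) := by
      have hodd2 : (a + 2 * t) % 2 = 1 := by omega
      have hc2 : Nat.Coprime (a + 2 * t) 2 := by
        rw [Nat.coprime_comm, Nat.Prime.coprime_iff_not_dvd Nat.prime_two]
        omega
      have hc4 : Nat.Coprime (a + 2 * t) 4 := by
        rw [show (4 : ℕ) = 2 ^ 2 by norm_num]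
        exact hc2.pow_right 2
      have hct : Nat.Coprime (a + 2 * t) t :=
        (Nat.coprime_add_mul_right_left a t 2).mpr (hacop.coprime_dvd_right (dvd_mul_left t 4))
      exact Nat.Coprime.mul_right hc4 hct
    by_cases hpt : p ∣ t
    · -- p divides t : use b = a or b = a + 2t
      have hpa : ¬ p ∣ a := by
        intro hpa
        have h1 : p ∣ Nat.gcd a (4 * t) := Nat.dvd_gcd hpa (hpt.mul_left 4)
        rw [hacop] at h1
        have h2 := Nat.dvd_one.mp h1
        have h3 := hp.two_le
        omega
      have hane : ((a : ZMod p)) ≠ 0 := by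
        rw [Ne, ZMod.natCast_eq_zero_iff]
        exact hpa
      have hcopaM : Nat.Coprime a Mn := by
        rw [hMn]
        exact hacop.mul_right ((Nat.Prime.coprime_iff_not_dvd hp).mpr hpa).symm
      have hpa2 : ¬ p ∣ (a + 2 * t) := by
        intro h
        exact hpa (by
          have h2t : p ∣ 2 * t := hpt.mul_left 2
          have := Nat.dvd_sub h h2t
          simpa using this)
      have hcopa2M : Nat.Coprime (a + 2 * t) Mn := by
        rw [hMn]
        exact hcop2.mul_right ((Nat.Prime.coprime_iff_not_dvd hp).mpr hpa2).symm
      have hcast2t : (((a + 2 * t : ℕ)) : ZMod p) = ((a : ZMod p)) := by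
        have h0 : (((2 * t : ℕ)) : ZMod p) = 0 :=
          (ZMod.natCast_eq_zero_iff _ _).mpr (hpt.mul_left 2)
        push_cast at h0 ⊢
        rw [h0, add_zero]
      have hEt : e = 0 ∨ Even t := by
        rcases he01 with h | h
        · exact Or.inl h
        · rcases hcase with hc | hc | hc
          · exact Or.inr hc
          · exact absurd hpt hc
          · exact Or.inl (hq41 hc)
      -- the sign
      set z : ℂ := χC ((a : ZMod p)) * i0 ^ ((a - 1) * e) with hzdef
      have hi0a : i0 ^ ((a - 1) * e) = (-1 : ℂ) ^ (((a - 1) / 2) * e) := by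
        have hh : a - 1 = 2 * ((a - 1) / 2) := by omega
        rw [show (a - 1) * e = 2 * (((a - 1) / 2) * e) from by rw [← mul_assoc, ← hh],
          pow_mul, hi02]
      have hzpm : z = 1 ∨ z = -1 := by
        rw [hzdef, hi0a]
        rcases hχpm _ hane with h | h <;> rcases Nat.even_or_odd (((a - 1) / 2) * e) with hp' | hp' <;>
          rw [h] <;> [rw [hp'.neg_one_pow]; rw [hp'.neg_one_pow]; rw [hp'.neg_one_pow];
            rw [hp'.neg_one_pow]] <;> norm_num
      have hzsame : χC (((a + 2 * t : ℕ) : ZMod p)) * i0 ^ ((a + 2 * t - 1) * e) = z := by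
        rw [hcast2t, hzdef]
        congr 1
        have hexp : (a + 2 * t - 1) * e = (a - 1) * e + 2 * (t * e) := by
          rw [show a + 2 * t - 1 = (a - 1) + 2 * t by omega, add_mul]
          ring
        rw [hexp, pow_add, pow_mul i0 2 (t * e), hi02]
        have hEven : Even (t * e) := by
          rcases hEt with h | h
          · simp [h]
          · exact h.mul_right e
        rw [hEven.neg_one_pow, mul_one]
      rcases hzpm with hz | hz
      · have := master a hcopaM ha0
        rw [← hzdef, hz, one_mul] at this
        exact this
      · have := master (a + 2 * t) hcopa2M (by omega)
        rw [hzsame, hz, hζa2t] at this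
        have heq : (-1 : ℂ) * (s * -ζ ^ a) = s * ζ ^ a := by ring
        rwa [heq] at this
    · -- p does not divide t : CRT
      have hp4t : ¬ p ∣ 4 * t := by
        intro h
        rcases (Nat.Prime.dvd_mul hp).mp h with h4 | hT
        · have h22 : p ∣ 2 * 2 := by simpa using h4
          rcases (Nat.Prime.dvd_mul hp).mp h22 with h2 | h2 <;>
            exact hp2 ((Nat.prime_dvd_prime_iff_eq hp Nat.prime_two).mp h2)
        · exact hpt hT
      have co : Nat.Coprime (4 * t) p := ((Nat.Prime.coprime_iff_not_dvd hp).mpr hp4t).symm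
      -- choose the auxiliary residue v
      have hi0par : ∀ {b : ℕ}, b % 4 = a % 4 →
          i0 ^ ((b - 1) * e) = (-1 : ℂ) ^ (((a - 1) / 2) * e) := by
        intro b hb4
        have hbodd : b % 2 = 1 := by omega
        have hh : b - 1 = 2 * ((b - 1) / 2) := by omega
        rw [show (b - 1) * e = 2 * (((b - 1) / 2) * e) from by rw [← mul_assoc, ← hh],
          pow_mul, hi02]
        apply neg_one_pow_par'
        rcases he01 with h | h <;> rw [h]
        · simp
        · simp only [mul_one]
          omega
      set F : ℂ := (-1 : ℂ) ^ (((a - 1) / 2) * e) with hFdef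
      have hFpm : F = 1 ∨ F = -1 := by
        rcases Nat.even_or_odd (((a - 1) / 2) * e) with h | h
        · exact Or.inl (by rw [hFdef, h.neg_one_pow])
        · exact Or.inr (by rw [hFdef, h.neg_one_pow])
      obtain ⟨v, hvp, hχv⟩ : ∃ v : ℕ, Nat.Coprime v p ∧ χC ((v : ZMod p)) = F := by
        rcases hFpm with hF | hF
        · refine ⟨1, Nat.coprime_one_left p, ?_⟩
          rw [Nat.cast_one, map_one, hF]
        · obtain ⟨x, hx⟩ := FiniteField.exists_nonsquare hring2
          have hxne : x ≠ 0 := fun h0 => hx (h0 ▸ (IsSquare.zero : IsSquare (0 : ZMod p)))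
          have hχx : χ x = -1 := quadraticChar_neg_one_iff_not_isSquare.mpr hx
          refine ⟨x.val, ?_, ?_⟩
          · rw [Nat.coprime_comm, Nat.Prime.coprime_iff_not_dvd hp]
            intro hdvd
            have := (ZMod.natCast_eq_zero_iff x.val p).mpr hdvd
            rw [ZMod.natCast_rightInverse x] at this
            exact hxne this
          · rw [ZMod.natCast_rightInverse x, hχCdef]
            simp only [MulChar.ringHomComp_apply, Int.coe_castRingHom]
            rw [hχdef, hχx, hF]
            norm_num
      obtain ⟨b, hb1, hb2⟩ := Nat.chineseRemainder co a v
      have hbcop4t : Nat.Coprime b (4 * t) := coprime_of_modEq' hb1 hacop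
      have hbcopp : Nat.Coprime b p := coprime_of_modEq' hb2 hvp
      have hbM : Nat.Coprime b Mn := by rw [hMn]; exact hbcop4t.mul_right hbcopp
      have hbodd : b % 2 = 1 := by
        have h2 : Nat.Coprime b 2 := hbcop4t.coprime_dvd_right ⟨2 * t, by ring⟩
        rcases Nat.even_or_odd b with hev | hod
        · exfalso
          have hd : (2 : ℕ) ∣ Nat.gcd b 2 := Nat.dvd_gcd hev.two_dvd dvd_rfl
          rw [h2] at hd
          omega
        · exact Nat.odd_iff.mp hod
      have hb4 : b % 4 = a % 4 := by
        have h4 : (4 : ℕ) ∣ 4 * t := ⟨t, rfl⟩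
        exact hb1.of_dvd h4
      have hcastv : ((b : ZMod p)) = ((v : ZMod p)) := (ZMod.natCast_eq_natCast_iff _ _ _).mpr hb2
      have := master b hbM (by omega)
      rw [hcastv, hχv, hi0par hb4] at this
      have hFF : F * F = 1 := by rcases hFpm with h | h <;> rw [h] <;> norm_num
      rw [hζpoweq hb1, hFF, one_mul] at this
      exact this
  -- ###### Conclusion: counting roots
  set P : ℂ[X] := (minpoly ℚ (s * ζ)).map (algebraMap ℚ ℂ) with hPdef
  have hmono : (minpoly ℚ (s * ζ)).Monic := minpoly.monic hθint
  have hPmonic : P.Monic := hmono.map _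
  have hP0 : P ≠ 0 := hPmonic.ne_zero
  have hsep : P.Separable := ((minpoly.irreducible hθint).separable).map
  have hnodup : P.roots.Nodup := nodup_roots hsep
  set S := (Finset.range (4 * t)).filter (fun a => Nat.Coprime a (4 * t)) with hSdef
  have hScard : S.card = Nat.totient (4 * t) := by
    rw [hSdef, Nat.totient]
    congr 1
    apply Finset.filter_congr
    intro x _
    simp [Nat.coprime_comm]
  have hroots_mem : ∀ a ∈ S, s * ζ ^ a ∈ P.roots := by
    intro a ha
    rw [Polynomial.mem_roots hP0]
    have h0 := root_a a ha
    rw [IsRoot, hPdef, eval_map, ← aeval_def]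
    exact h0
  have hinj : ∀ x ∈ S, ∀ y ∈ S, s * ζ ^ x = s * ζ ^ y → x = y := by
    intro x hx y hy h
    rw [hSdef, Finset.mem_filter, Finset.mem_range] at hx hy
    exact hζ.pow_inj hx.1 hy.1 (mul_left_cancel₀ hs0 h)
  set M0 : Multiset ℂ := S.val.map (fun a => s * ζ ^ a) with hM0def
  have hM0nodup : M0.Nodup := Multiset.Nodup.map_on hinj S.nodup
  have hM0le : M0 ≤ P.roots := by
    rw [Multiset.le_iff_subset hM0nodup]
    intro x hx
    obtain ⟨a, ha, rfl⟩ := Multiset.mem_map.mp hx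
    exact hroots_mem a ha
  have hcard1 : Multiset.card M0 = Nat.totient (4 * t) := by
    rw [hM0def, Multiset.card_map]
    exact hScard
  have hub : Multiset.card P.roots ≤ P.natDegree := P.card_roots'
  have hPdeg : P.natDegree = (minpoly ℚ (s * ζ)).natDegree := natDegree_map _
  have hlow : Nat.totient (4 * t) ≤ Multiset.card P.roots := by
    rw [← hcard1]
    exact Multiset.card_le_card hM0le
  have hdegeq : (minpoly ℚ (s * ζ)).natDegree = Nat.totient (4 * t) := by omega
  refine ⟨hdegeq, ?_⟩
  have hcard_eq : Multiset.card P.roots = Nat.totient (4 * t) := by omega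
  have hM0eq : M0 = P.roots := Multiset.eq_of_le_of_card_le hM0le (by rw [hcard_eq, hcard1])
  have hsplit : P = (P.roots.map fun a => X - C a).prod :=
    (prod_multiset_X_sub_C_of_monic_of_roots_card_eq hPmonic (by omega)).symm
  rw [hsplit, ← hM0eq, hM0def, Multiset.map_map]
  rw [Finset.prod_eq_multiset_prod]
  rfl
end

section
/- Let r be an odd positive integer and q = 2^r or q = −2^r. Let s ∈ ℂ satisfy s² = q, let t be a positive integer with t ≢ 2 (mod 4), and let ζ be a primitive 4t-th root of unity in ℂ. Then the minimal polynomial over ℚ of θ = s·ζ has degree φ(4t), and its image in ℂ[X] equals ∏_{a ∈ (ℤ/4tℤ)ˣ} (X − s·ζ^a). -/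
open Polynomial IntermediateField

set_option maxHeartbeats 1600000

private lemma coeff_comp_neg_X {R : Type*} [CommRing R] (p : R[X]) (i : ℕ) :
    (p.comp (-X)).coeff i = (-1) ^ i * p.coeff i := by
  induction p using Polynomial.induction_on' with
  | add p q hp hq => simp [add_comp, hp, hq, mul_add]
  | monomial n a =>
      rw [← C_mul_X_pow_eq_monomial, mul_comp, C_comp, pow_comp, X_comp, neg_pow,
        show ((-1 : R[X]) ^ n) = C ((-1)^n) by rw [← C_1, ← C_neg, ← C_pow],
        ← mul_assoc, mul_comm (C a) _, mul_assoc, coeff_C_mul, coeff_C_mul, coeff_X_pow]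
      rcases eq_or_ne i n with rfl | hne
      · simp
      · simp [hne]

/-- Let r be an odd positive integer and q = 2^r or q = −2^r. Let s ∈ ℂ satisfy
s² = q, let t be a positive integer with t ≢ 2 (mod 4), and let ζ be a primitive 4t-th root of
unity in ℂ. Then the minimal polynomial over ℚ of θ = s·ζ has degree φ(4t), and its image in
ℂ[X] equals ∏_{a ∈ (ℤ/4tℤ)ˣ} (X − s·ζ^a). -/
theorem stmt_1 (r : ℕ) (hr : Odd r) (hr0 : 0 < r)
    (q : ℤ) (hq : q = 2 ^ r ∨ q = -(2 ^ r))
    (s : ℂ) (hs : s ^ 2 = (q : ℂ))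
    (t : ℕ) (ht : 0 < t) (ht2 : t % 4 ≠ 2)
    (ζ : ℂ) (hζ : IsPrimitiveRoot ζ (4 * t)) :
    (minpoly ℚ (s * ζ)).natDegree = Nat.totient (4 * t) ∧
    (minpoly ℚ (s * ζ)).map (algebraMap ℚ ℂ) =
      ∏ a ∈ (Finset.range (4 * t)).filter (fun a => Nat.Coprime a (4 * t)),
        (X - C (s * ζ ^ a)) := by
  classical
  have ht4 : 0 < 4 * t := by omega
  have ht2t : 0 < 2 * t := by omega
  have h2r : (0:ℤ) < 2 ^ r := by positivity
  have hqne : q ≠ 0 := by rcases hq with h | h <;> omega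
  have hqC : (q:ℂ) ≠ 0 := Int.cast_ne_zero.mpr hqne
  have hqQ : (q:ℚ) ≠ 0 := Int.cast_ne_zero.mpr hqne
  have hs0 : s ≠ 0 := by
    intro h
    apply hqC
    rw [← hs, h]; ring
  set θ : ℂ := s * ζ with hθdef
  have hθ0 : θ ≠ 0 := mul_ne_zero hs0 (hζ.ne_zero (by omega))
  set m := Nat.totient (2*t) with hmdef
  have htot : Nat.totient (4*t) = 2 * m := by
    rw [show 4*t = 2*(2*t) by ring, Nat.totient_mul_of_prime_of_dvd Nat.prime_two ⟨t, rfl⟩]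
  have hζ2 : IsPrimitiveRoot (ζ^2) (2*t) := hζ.pow ht4 (by ring)
  have hζ2t : ζ^(2*t) = -1 := by
    have h1 : ζ^(2*t) * ζ^(2*t) = 1 := by
      rw [← pow_add, show 2*t+2*t = 4*t by ring]; exact hζ.pow_eq_one
    rcases mul_self_eq_one_iff.mp h1 with h | h
    · exact absurd h (hζ.pow_ne_one_of_pos_of_lt (by omega) (by omega))
    · exact h
  -- index sets
  set B := (Finset.range (2*t)).filter (fun b => Nat.Coprime b (2*t)) with hBdef
  set A := (Finset.range (4*t)).filter (fun a => Nat.Coprime a (4*t)) with hAdef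
  have hco24 : ∀ a : ℕ, a.Coprime (4*t) ↔ a.Coprime (2*t) := by
    intro a
    constructor
    · intro h; exact Nat.Coprime.coprime_dvd_right ⟨2, by ring⟩ h
    · intro h
      have h2 : a.Coprime 2 := Nat.Coprime.coprime_dvd_right ⟨t, rfl⟩ h
      have h3 : a.Coprime (2*(2*t)) := Nat.Coprime.mul_right h2 h
      rwa [show 2*(2*t) = 4*t by ring] at h3
  have hAsplit : A = B ∪ B.image (· + 2*t) := by
    ext a
    simp only [hAdef, hBdef, Finset.mem_union, Finset.mem_image, Finset.mem_filter,
      Finset.mem_range]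
    constructor
    · rintro ⟨hlt, hcop⟩
      rw [hco24] at hcop
      rcases lt_or_ge a (2*t) with h | h
      · exact Or.inl ⟨h, hcop⟩
      · refine Or.inr ⟨a - 2*t, ⟨by omega, ?_⟩, by omega⟩
        have he : (a - 2*t) + 2*t = a := by omega
        rw [← he] at hcop
        exact Nat.coprime_add_self_left.mp hcop
    · rintro (⟨hlt, hcop⟩ | ⟨b, ⟨hlt, hcop⟩, rfl⟩)
      · exact ⟨by omega, (hco24 a).mpr hcop⟩
      · exact ⟨by omega, (hco24 _).mpr (Nat.coprime_add_self_left.mpr hcop)⟩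
  have hdisj : Disjoint B (B.image (· + 2*t)) := by
    rw [Finset.disjoint_left]
    rintro a ha hb
    obtain ⟨b, hbmem, rfl⟩ := Finset.mem_image.mp hb
    have := Finset.mem_range.mp (Finset.mem_filter.mp ha).1
    omega
  have hBcard : B.card = m := by
    rw [hmdef, Nat.totient_eq_card_coprime, hBdef]
    congr 1
    apply Finset.filter_congr
    intro x _
    simp [Nat.coprime_comm]
  -- the candidate polynomial
  set Q : ℚ[X] := cyclotomic (2*t) ℚ with hQdef
  set g : ℚ[X] := C ((q:ℚ)⁻¹) * X^2 with hgdef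
  set P : ℚ[X] := Q.comp g * C ((q:ℚ)^m) with hPdef
  have hQdeg : Q.natDegree = m := natDegree_cyclotomic _ _
  have hQmonic : Q.Monic := cyclotomic.monic _ _
  have hgdeg : g.natDegree = 2 := by
    rw [hgdef, natDegree_C_mul_X_pow _ _ (inv_ne_zero hqQ)]
  have hglc : g.leadingCoeff = (q:ℚ)⁻¹ := by
    rw [hgdef, leadingCoeff_C_mul_X_pow]
  have hQg_lc : (Q.comp g).leadingCoeff = ((q:ℚ)⁻¹)^m := by
    rw [leadingCoeff_comp (by rw [hgdeg]; omega), hglc, hQmonic.leadingCoeff, hQdeg, one_mul]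
  have hQgne : Q.comp g ≠ 0 := by
    intro h
    rw [h, leadingCoeff_zero] at hQg_lc
    exact (inv_ne_zero hqQ) (pow_eq_zero_iff'.mp hQg_lc.symm).1
  have hPlc : P.leadingCoeff = 1 := by
    rw [hPdef, leadingCoeff_mul, leadingCoeff_C, hQg_lc, inv_pow,
      inv_mul_cancel₀ (pow_ne_zero _ hqQ)]
  have hPmonic : P.Monic := hPlc
  have hCne : (C ((q:ℚ)^m) : ℚ[X]) ≠ 0 := fun h => pow_ne_zero m hqQ (C_eq_zero.mp h)
  have hPdeg : P.natDegree = 2*m := by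
    rw [hPdef, natDegree_mul hQgne hCne, natDegree_C, natDegree_comp, hQdeg, hgdeg, add_zero]
    ring
  have : NeZero (2*t) := ⟨by omega⟩
  have hPmap : P.map (algebraMap ℚ ℂ) = ∏ a ∈ A, (X - C (s * ζ^a)) := by
    have hcyc : (cyclotomic (2*t) ℂ) = ∏ b ∈ B, (X - C ((ζ^2)^b)) := by
      rw [cyclotomic_eq_prod_X_sub_primitiveRoots hζ2]
      have himg : primitiveRoots (2*t) ℂ = B.image (fun b => (ζ^2)^b) := by
        ext μ
        rw [mem_primitiveRoots ht2t]
        constructor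
        · intro hμ
          obtain ⟨i, hi, hpow⟩ := hζ2.eq_pow_of_pow_eq_one hμ.pow_eq_one
          refine Finset.mem_image.mpr ⟨i, ?_, hpow⟩
          refine Finset.mem_filter.mpr ⟨Finset.mem_range.mpr hi, ?_⟩
          exact (hζ2.pow_iff_coprime ht2t i).mp (hpow ▸ hμ)
        · intro hμ
          obtain ⟨b, hb, rfl⟩ := Finset.mem_image.mp hμ
          exact hζ2.pow_of_coprime b (Finset.mem_filter.mp hb).2
      rw [himg, Finset.prod_image]
      intro b hb b' hb' hbb
      exact hζ2.pow_inj (Finset.mem_range.mp (Finset.mem_filter.mp hb).1)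
        (Finset.mem_range.mp (Finset.mem_filter.mp hb').1) hbb
    have hmapg : g.map (algebraMap ℚ ℂ) = C ((q:ℂ)⁻¹) * X^2 := by
      rw [hgdef, Polynomial.map_mul, Polynomial.map_pow, map_X, map_C]
      congr 2
      rw [eq_ratCast]
      push_cast
      ring
    have hconst : (algebraMap ℚ ℂ) ((q:ℚ)^m) = (q:ℂ)^m := by
      rw [eq_ratCast]; push_cast; ring
    rw [hPdef, Polynomial.map_mul, Polynomial.map_comp, map_C, hmapg, hconst, hQdef,
      map_cyclotomic, hcyc, prod_comp,
      show (C ((q:ℂ)^m) : ℂ[X]) = ∏ _b ∈ B, C (q:ℂ) by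
        rw [Finset.prod_const, hBcard, ← C_pow],
      ← Finset.prod_mul_distrib, hAsplit,
      Finset.prod_union hdisj,
      Finset.prod_image (fun a _ b _ h => by omega), ← Finset.prod_mul_distrib]
    apply Finset.prod_congr rfl
    intro b _
    have hz : s * ζ^(b+2*t) = -(s*ζ^b) := by rw [pow_add, hζ2t]; ring
    have hu : (s*ζ^b) * (s*ζ^b) = (q:ℂ) * (ζ^2)^b := by
      have h1 : (s*ζ^b) * (s*ζ^b) = s^2 * (ζ^2)^b := by ring
      rw [h1, hs]
    rw [hz, sub_comp, X_comp, C_comp]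
    calc (C ((q:ℂ)⁻¹) * X ^ 2 - C ((ζ^2)^b)) * C (q:ℂ)
        = C ((q:ℂ)⁻¹ * (q:ℂ)) * X^2 - C ((ζ^2)^b * (q:ℂ)) := by push_cast [C_mul]; ring
      _ = X^2 - C ((s*ζ^b) * (s*ζ^b)) := by
            rw [inv_mul_cancel₀ hqC, C_1, one_mul, hu, mul_comm]
      _ = (X - C (s * ζ ^ b)) * (X - -C (s * ζ ^ b)) := by rw [C_mul]; ring
      _ = (X - C (s * ζ ^ b)) * (X - C (-(s * ζ ^ b))) := by rw [C_neg]
  have hProot : aeval θ P = 0 := by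
    have h1 : aeval θ P = (P.map (algebraMap ℚ ℂ)).eval θ := by
      rw [aeval_def, eval_map]
    rw [h1, hPmap, eval_prod]
    apply Finset.prod_eq_zero (i := 1)
    · refine Finset.mem_filter.mpr ⟨Finset.mem_range.mpr (by omega), Nat.coprime_one_left _⟩
    · simp [hθdef]
  have hint : IsIntegral ℚ θ := ⟨P, hPmonic, by rw [← aeval_def]; exact hProot⟩
  set p : ℚ[X] := minpoly ℚ θ with hpdef
  have hpmono : p.Monic := minpoly.monic hint
  have hp0 : p ≠ 0 := hpmono.ne_zero
  have hpdvdP : p ∣ P := minpoly.dvd ℚ θ hProot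
  have hdle : p.natDegree ≤ 2*m := hPdeg ▸ natDegree_le_of_dvd hpdvdP hPmonic.ne_zero
  -- the conjugate -θ is also a root of p
  have h8t : (8*t : ℕ) ≠ 0 := by omega
  have : NeZero (8*t) := ⟨h8t⟩
  obtain ⟨ξ, hξ⟩ : ∃ ξ : ℂ, IsPrimitiveRoot ξ (8*t) :=
    ⟨_, Complex.isPrimitiveRoot_exp (8*t) h8t⟩
  have hξ8t : ξ^(8*t) = 1 := hξ.pow_eq_one
  have hζpow8t : ζ^(8*t) = 1 := by
    rw [show 8*t = (4*t)*2 by ring, pow_mul, hζ.pow_eq_one, one_pow]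
  obtain ⟨c, hclt, hc⟩ := hξ.eq_pow_of_pow_eq_one hζpow8t
  have hξ4t : ξ^(4*t) = -1 := by
    have h1 : ξ^(4*t) * ξ^(4*t) = 1 := by
      rw [← pow_add, show 4*t+4*t = 8*t by ring]; exact hξ8t
    rcases mul_self_eq_one_iff.mp h1 with h | h
    · exact absurd h (hξ.pow_ne_one_of_pos_of_lt (by omega) (by omega))
    · exact h
  have hprod8 : ξ^t * ξ^(7*t) = 1 := by
    rw [← pow_add, show t+7*t = 8*t by ring]; exact hξ8t
  have hsqsum : ξ^(2*t) + ξ^(14*t) = 0 := by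
    have h14 : ξ^(14*t) = ξ^(6*t) := by
      rw [show 14*t = 6*t + 8*t by ring, pow_add, hξ8t, mul_one]
    have h6 : ξ^(6*t) = -ξ^(2*t) := by
      rw [show 6*t = 2*t + 4*t by ring, pow_add, hξ4t]; ring
    rw [h14, h6]; ring
  have hwplus : (ξ^t + ξ^(7*t))^2 = 2 := by
    have h1 : (ξ^t + ξ^(7*t))^2 = (ξ^(2*t) + ξ^(14*t)) + 2*(ξ^t*ξ^(7*t)) := by ring
    rw [h1, hsqsum, hprod8]; ring
  have hwminus : (ξ^t - ξ^(7*t))^2 = -2 := by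
    have h1 : (ξ^t - ξ^(7*t))^2 = (ξ^(2*t) + ξ^(14*t)) - 2*(ξ^t*ξ^(7*t)) := by ring
    rw [h1, hsqsum, hprod8]; ring
  obtain ⟨er, hrer⟩ := hr
  obtain ⟨e, c'', he, hc'', hsexpr⟩ : ∃ e c'' : ℚ, (e = 1 ∨ e = -1) ∧ (c'' = 1 ∨ c'' = -1) ∧
      s = (e:ℂ) * (2:ℂ)^er * (ξ^t + (c'':ℂ) * ξ^(7*t)) := by
    rcases hq with hqc | hqc
    · have hu2 : ((2:ℂ)^er * (ξ^t + ξ^(7*t)))^2 = (q:ℂ) := by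
        rw [mul_pow, hwplus, ← pow_mul]
        rw [hqc]
        push_cast
        rw [show er*2 = 2*er by ring, ← pow_succ, hrer]
      have hfac : (s - (2:ℂ)^er * (ξ^t + ξ^(7*t))) * (s + (2:ℂ)^er * (ξ^t + ξ^(7*t))) = 0 := by
        have : s^2 - ((2:ℂ)^er * (ξ^t + ξ^(7*t)))^2 = 0 := by rw [hs, hu2]; ring
        linear_combination this
      rcases mul_eq_zero.mp hfac with h | h
      · exact ⟨1, 1, Or.inl rfl, Or.inl rfl, by push_cast; linear_combination h⟩
      · exact ⟨-1, 1, Or.inr rfl, Or.inl rfl, by push_cast; linear_combination h⟩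
    · have hu2 : ((2:ℂ)^er * (ξ^t - ξ^(7*t)))^2 = (q:ℂ) := by
        rw [mul_pow, hwminus, ← pow_mul, hqc]
        push_cast
        rw [hrer, pow_succ]
        ring
      have hfac : (s - (2:ℂ)^er * (ξ^t - ξ^(7*t))) * (s + (2:ℂ)^er * (ξ^t - ξ^(7*t))) = 0 := by
        have : s^2 - ((2:ℂ)^er * (ξ^t - ξ^(7*t)))^2 = 0 := by rw [hs, hu2]; ring
        linear_combination this
      rcases mul_eq_zero.mp hfac with h | h
      · exact ⟨1, -1, Or.inl rfl, Or.inr rfl, by push_cast; linear_combination h⟩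
      · exact ⟨-1, -1, Or.inr rfl, Or.inr rfl, by push_cast; linear_combination h⟩
  obtain ⟨a, ha8, hat⟩ : ∃ a : ℕ, a.Coprime (8*t) ∧
      ((a = 1 + 2*t ∧ ¬ Odd t) ∨ (a = 1 + 4*t ∧ Odd t)) := by
    have hco8 : ∀ b : ℕ, Odd b → b.Coprime t → b.Coprime (8*t) := by
      intro b hb hbt
      refine Nat.Coprime.mul_right ?_ hbt
      have h2 : b.Coprime 2 := hb.coprime_two_right
      rw [show (8:ℕ) = 2^3 by norm_num]
      exact h2.pow_right 3
    rcases Nat.even_or_odd t with hev | hod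
    · refine ⟨1 + 2*t, hco8 _ ?_ ?_, Or.inl ⟨rfl, Nat.not_odd_iff_even.mpr hev⟩⟩
      · rcases hev with ⟨u, hu⟩
        exact Nat.odd_iff.mpr (by omega)
      · rw [show 1 + 2*t = 1 + t*2 by ring]
        exact (Nat.coprime_add_mul_left_left 1 t 2).mpr (Nat.coprime_one_left t)
    · refine ⟨1 + 4*t, hco8 _ ?_ ?_, Or.inr ⟨rfl, hod⟩⟩
      · exact Nat.odd_iff.mpr (by omega)
      · rw [show 1 + 4*t = 1 + t*4 by ring]
        exact (Nat.coprime_add_mul_left_left 1 t 4).mpr (Nat.coprime_one_left t)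
  have hξint : IsIntegral ℚ ξ :=
    ⟨X^(8*t) - C 1, monic_X_pow_sub_C 1 h8t, by simp [hξ8t]⟩
  set pb := IntermediateField.adjoin.powerBasis hξint with hpbdef
  have hinj : Function.Injective (algebraMap ℚ⟮ξ⟯ ℂ) := (algebraMap ℚ⟮ξ⟯ ℂ).injective
  have hpbgen : (algebraMap ℚ⟮ξ⟯ ℂ) pb.gen = ξ := by
    rw [hpbdef, IntermediateField.adjoin.powerBasis_gen]
    exact IntermediateField.AdjoinSimple.algebraMap_gen ℚ ξ
  have hminpb : minpoly ℚ pb.gen = cyclotomic (8*t) ℚ := by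
    rw [← minpoly.algebraMap_eq hinj pb.gen, hpbgen, ← cyclotomic_eq_minpoly_rat hξ (by omega)]
  have hrootpb : aeval (ξ^a) (minpoly ℚ pb.gen) = 0 := by
    rw [hminpb, aeval_def, ← eval_map, map_cyclotomic]
    exact (hξ.pow_of_coprime a ha8).isRoot_cyclotomic (by omega)
  set Φ : ℚ⟮ξ⟯ →ₐ[ℚ] ℂ := pb.lift (ξ^a) hrootpb with hΦdef
  have hΦgen : Φ pb.gen = ξ^a := pb.lift_gen (ξ^a) hrootpb
  set G : ℚ⟮ξ⟯ := pb.gen with hGdef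
  set θK : ℚ⟮ξ⟯ := (((e * 2^er : ℚ) : ℚ⟮ξ⟯)) *
      (G^t + ((c'' : ℚ) : ℚ⟮ξ⟯) * G^(7*t)) * G^c with hθKdef
  have hθKval : (algebraMap ℚ⟮ξ⟯ ℂ) θK = θ := by
    rw [hθKdef]
    rw [map_mul, map_mul, map_add, map_mul, map_pow, map_pow, map_pow, hpbgen,
      map_ratCast, map_ratCast]
    rw [hθdef, hsexpr, ← hc]
    push_cast
    ring
  have hpθK : minpoly ℚ θK = p := by rw [hpdef, ← hθKval, minpoly.algebraMap_eq hinj]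
  have hneg : aeval (-θ) p = 0 := by
    have hΦθK : Φ θK = -θ := by
      rw [hθKdef, map_mul, map_mul, map_add, map_mul, map_pow, map_pow, map_pow, hΦgen,
        map_ratCast, map_ratCast]
      have hac : (ξ^a)^c = ζ^a := by rw [← pow_mul, mul_comm a c, pow_mul, hc]
      rcases hat with ⟨hat, hnodd⟩ | ⟨hat, hoddt⟩
      · have h4dvd : 4 ∣ t := by
          have hevt : t % 2 = 0 := by
            rcases Nat.even_or_odd t with h | h
            · exact Nat.even_iff.mp h
            · exact absurd h hnodd
          omega
        obtain ⟨u, hu⟩ := h4dvd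
        have h2tt : ξ^(2*t*t) = 1 := by
          rw [show 2*t*t = (8*t)*u by rw [hu]; ring, pow_mul, hξ8t, one_pow]
        have h1 : (ξ^a)^t = ξ^t := by
          rw [← pow_mul, hat, show (1+2*t)*t = t + 2*t*t by ring, pow_add, h2tt, mul_one]
        have h2 : (ξ^a)^(7*t) = ξ^(7*t) := by
          rw [← pow_mul, hat, show (1+2*t)*(7*t) = 7*t + (2*t*t)*7 by ring, pow_add,
            show ξ^((2*t*t)*7) = (ξ^(2*t*t))^7 from pow_mul ξ (2*t*t) 7, h2tt, one_pow, mul_one]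
        have h3 : ζ^a = -ζ := by
          rw [hat, pow_add, pow_one, hζ2t]; ring
        rw [hac, h1, h2, h3, hθdef, hsexpr]
        push_cast
        ring
      · have h1 : (ξ^a)^t = -ξ^t := by
          rw [← pow_mul, hat, show (1+4*t)*t = t + (4*t)*t by ring, pow_add,
            show ξ^((4*t)*t) = (ξ^(4*t))^t from pow_mul ξ (4*t) t, hξ4t, hoddt.neg_one_pow]
          ring
        have h2 : (ξ^a)^(7*t) = -ξ^(7*t) := by
          have h7t : Odd (7*t) := (Nat.odd_iff.mpr (by norm_num)).mul hoddt
          rw [← pow_mul, hat, show (1+4*t)*(7*t) = 7*t + (4*t)*(7*t) by ring, pow_add,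
            show ξ^((4*t)*(7*t)) = (ξ^(4*t))^(7*t) from pow_mul ξ (4*t) (7*t), hξ4t,
            h7t.neg_one_pow]
          ring
        have h3 : ζ^a = ζ := by
          rw [hat, pow_add, pow_one, hζ.pow_eq_one, mul_one]
        rw [hac, h1, h2, h3, hθdef, hsexpr]
        push_cast
        ring
    have h0 : aeval (Φ θK) (minpoly ℚ θK) = 0 := by
      rw [aeval_algHom_apply, minpoly.aeval, map_zero]
    rw [hpθK, hΦθK] at h0
    exact h0
  -- p is an even polynomial
  have hc0 : p.coeff 0 ≠ 0 := minpoly.coeff_zero_ne_zero hint hθ0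
  have hnegroot : aeval θ (p.comp (-X)) = 0 := by
    rw [aeval_comp]
    simpa using hneg
  have hdvd2 : p ∣ p.comp (-X) := minpoly.dvd ℚ θ hnegroot
  obtain ⟨v, hv⟩ := hdvd2
  have hvne : v ≠ 0 := by
    rintro rfl
    rw [mul_zero] at hv
    have h00 := coeff_comp_neg_X p 0
    rw [hv] at h00
    simp only [coeff_zero, pow_zero, one_mul] at h00
    exact hc0 h00.symm
  have hcompdeg : (p.comp (-X)).natDegree = p.natDegree := by
    rw [natDegree_comp]
    simp
  have hvdeg : v.natDegree = 0 := by
    have hmd := natDegree_mul hp0 hvne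
    rw [← hv, hcompdeg] at hmd
    omega
  have hvC : v = C (v.coeff 0) := eq_C_of_natDegree_eq_zero hvdeg
  have hcoeffs : ∀ i, (-1:ℚ)^i * p.coeff i = p.coeff i * v.coeff 0 := by
    intro i
    have h1 := coeff_comp_neg_X p i
    rw [hv, hvC, coeff_mul_C] at h1
    exact h1.symm
  have hv0 : v.coeff 0 = 1 := by
    have h1 := hcoeffs 0
    simp only [pow_zero, one_mul] at h1
    exact (mul_left_cancel₀ hc0 (by rw [← h1, mul_one])).symm
  have hoddzero : ∀ i, ¬ Even i → p.coeff i = 0 := by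
    intro i hi
    have h1 := hcoeffs i
    rw [hv0, mul_one, (Nat.not_even_iff_odd.mp hi).neg_one_pow] at h1
    linarith
  have hdeven : Even p.natDegree := by
    have h1 := hcoeffs p.natDegree
    rw [hv0, mul_one, hpmono.coeff_natDegree, mul_one] at h1
    exact (neg_one_pow_eq_one_iff_even (by norm_num : (-1:ℚ) ≠ 1)).mp h1
  obtain ⟨m', hm'⟩ : ∃ m', p.natDegree = 2*m' := by
    rcases hdeven with ⟨k, hk⟩
    exact ⟨k, by omega⟩
  set hpoly : ℚ[X] :=
    ∑ i ∈ Finset.range (p.natDegree + 1),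
      if Even i then C (p.coeff i) * X^(i/2) else 0 with hhdef
  have hhcoeff : hpoly.coeff m' = 1 := by
    rw [hhdef, finset_sum_coeff, Finset.sum_eq_single (2*m')]
    · rw [if_pos (even_two_mul m'), coeff_C_mul, coeff_X_pow,
        if_pos (by omega), mul_one, ← hm', hpmono.coeff_natDegree]
    · intro i hi hne
      split_ifs with hev
      · rw [coeff_C_mul, coeff_X_pow, if_neg, mul_zero]
        rcases hev with ⟨k, hk⟩
        omega
      · simp
    · intro habs
      exact absurd (Finset.mem_range.mpr (by omega)) habs
  have hhne : hpoly ≠ 0 := fun h => by simp [h] at hhcoeff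
  have hhdeg : hpoly.natDegree ≤ m' := by
    rw [hhdef]
    apply natDegree_sum_le_of_forall_le
    intro i hi
    split_ifs with hev
    · refine (natDegree_C_mul_X_pow_le _ _).trans ?_
      have := Finset.mem_range.mp hi
      omega
    · simp
  have hheval : aeval (θ^2) hpoly = 0 := by
    have hexp : aeval (θ^2) hpoly =
        ∑ i ∈ Finset.range (p.natDegree+1),
          if Even i then (algebraMap ℚ ℂ) (p.coeff i) * θ^i else 0 := by
      rw [hhdef, map_sum]
      apply Finset.sum_congr rfl
      intro i _
      split_ifs with hev
      · rw [map_mul, aeval_C, map_pow, aeval_X, ← pow_mul]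
        rcases hev with ⟨k, hk⟩
        congr 2
        omega
      · simp
    have hpeval := minpoly.aeval ℚ θ
    rw [aeval_eq_sum_range, ← hpdef] at hpeval
    rw [hexp]
    calc (∑ i ∈ Finset.range (p.natDegree+1),
            if Even i then (algebraMap ℚ ℂ) (p.coeff i) * θ^i else 0)
        = ∑ i ∈ Finset.range (p.natDegree+1), p.coeff i • θ^i := by
          apply Finset.sum_congr rfl
          intro i _
          split_ifs with hev
          · rw [Algebra.smul_def]
          · rw [hoddzero i hev, zero_smul]
      _ = 0 := hpeval
  set h2 : ℚ[X] := hpoly.comp (C (q:ℚ) * X) with hh2def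
  have hh2eval : aeval (ζ^2 : ℂ) h2 = 0 := by
    rw [hh2def, aeval_comp]
    have heq : aeval (ζ^2 : ℂ) (C (q:ℚ) * X) = θ^2 := by
      rw [map_mul, aeval_C, aeval_X, hθdef, mul_pow, hs, eq_ratCast]
      push_cast
      ring
    rw [heq]
    exact hheval
  have hcycdvd : cyclotomic (2*t) ℚ ∣ h2 := by
    rw [cyclotomic_eq_minpoly_rat hζ2 ht2t]
    exact minpoly.dvd ℚ (ζ^2) hh2eval
  have hCqXdeg : (C (q:ℚ) * X).natDegree = 1 := natDegree_C_mul_X _ hqQ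
  have hh2ne : h2 ≠ 0 := by
    intro h0
    apply hhne
    have hlc : h2.leadingCoeff = hpoly.leadingCoeff * (C (q:ℚ) * X).leadingCoeff ^ hpoly.natDegree :=
      leadingCoeff_comp (by rw [hCqXdeg]; omega)
    rw [h0, leadingCoeff_zero, leadingCoeff_C_mul_X] at hlc
    rcases mul_eq_zero.mp hlc.symm with h | h
    · exact leadingCoeff_eq_zero.mp h
    · exact absurd (pow_eq_zero_iff'.mp h).1 hqQ
  have hmle : m ≤ m' := by
    have h1 := natDegree_le_of_dvd hcycdvd hh2ne
    rw [natDegree_cyclotomic] at h1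
    have h2d : h2.natDegree = hpoly.natDegree := by
      rw [hh2def, natDegree_comp, hCqXdeg, mul_one]
    omega
  have hdegeq : p.natDegree = 2*m := by omega
  have hPeq : P = p := by
    obtain ⟨v2, hv2⟩ := hpdvdP
    have hv2ne : v2 ≠ 0 := by
      rintro rfl
      rw [mul_zero] at hv2
      exact hPmonic.ne_zero hv2
    have hv2deg : v2.natDegree = 0 := by
      have hmd := natDegree_mul hp0 hv2ne
      rw [← hv2, hPdeg] at hmd
      omega
    have hv2C : v2 = C (v2.coeff 0) := eq_C_of_natDegree_eq_zero hv2deg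
    have hlcv : v2.coeff 0 = 1 := by
      have hl : P.leadingCoeff = p.leadingCoeff * v2.leadingCoeff := by
        rw [hv2, leadingCoeff_mul]
      rw [hPmonic.leadingCoeff, hpmono.leadingCoeff, one_mul, leadingCoeff, hv2deg] at hl
      exact hl.symm
    rw [hv2, hv2C, hlcv, map_one, mul_one]
  constructor
  · rw [hdegeq, htot]
  · rw [← hPeq]
    exact hPmap
end

section
/- Let p be an odd prime, r an odd positive integer, and q = p^r or q = −p^r, with q ≡ 3 (mod 4). Let t be an odd positive integer divisible by p, let ζ be a primitive 4t-th root of unity in ℂ, let s ∈ ℂ satisfy s² = q, and set θ = s·ζ. Then the minimal polynomial of θ over ℚ has degree φ(t) = φ(4t)/2, and there exist a primitive t-th root of unity η in ℂ and w ∈ ℂ with w² = −q such that θ = w·η and the image in ℂ[X] of the minimal polynomial of θ over ℚ equals ∏_{a ∈ (ℤ/tℤ)ˣ} (X − (a|p)·w·η^a). -/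
open Polynomial IntermediateField

lemma sign_aux (p : ℕ) (hfp : p.Prime) (hpodd : Odd p)
    (r : ℕ) (hr : Odd r)
    (q : ℤ) (hq : q = (p : ℤ) ^ r ∨ q = -((p : ℤ) ^ r)) (hq3 : q % 4 = 3) :
    (p % 4 = 1 ∧ q = -((p:ℤ) ^ r)) ∨ (p % 4 = 3 ∧ q = (p:ℤ) ^ r) := by
  have hp2 : p % 2 = 1 := Nat.odd_iff.mp hpodd
  have hp4 : p % 4 = 1 ∨ p % 4 = 3 := by omega
  have hq4 : (q : ZMod 4) = 3 := by
    have : q = 4 * (q / 4) + 3 := by omega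
    rw [this]; push_cast; ring_nf
    rw [show (4 : ZMod 4) = 0 by decide, mul_zero, add_zero]
  rcases hp4 with h4 | h4
  · left
    refine ⟨h4, ?_⟩
    have hp1 : ((p : ℕ) : ZMod 4) = 1 := by
      have : ((p : ZMod 4)) = ((p % 4 : ℕ) : ZMod 4) := (ZMod.natCast_mod p 4).symm
      rw [h4] at this
      simpa using this
    rcases hq with h | h
    · exfalso
      have : (q : ZMod 4) = 1 := by rw [h]; push_cast; rw [hp1]; simp
      rw [hq4] at this
      exact absurd this (by decide)
    · exact h
  · right
    refine ⟨h4, ?_⟩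
    have hp1 : ((p : ℕ) : ZMod 4) = -1 := by
      have : ((p : ZMod 4)) = ((p % 4 : ℕ) : ZMod 4) := (ZMod.natCast_mod p 4).symm
      rw [h4] at this
      rw [this]; decide
    rcases hq with h | h
    · exact h
    · exfalso
      have : (q : ZMod 4) = 1 := by
        rw [h]; push_cast; rw [hp1, hr.neg_one_pow]; ring
      rw [hq4] at this
      exact absurd this (by decide)


lemma decomp_aux (t : ℕ) (ht : Odd t) (ht0 : 0 < t)
    (ζ : ℂ) (hζ : IsPrimitiveRoot ζ (4 * t)) (s : ℂ) :
    ∃ η w : ℂ, IsPrimitiveRoot η t ∧ w ^ 2 = -(s ^ 2) ∧ s * ζ = w * η := by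
  have h4t : Nat.Coprime 4 t := by
    have := (Nat.coprime_two_left.mpr ht).pow_left 2
    norm_num at this
    exact this
  obtain ⟨c, hc4, hct⟩ := Nat.chineseRemainder h4t 0 1
  obtain ⟨d, hd4, hdt⟩ := Nat.chineseRemainder h4t 1 0
  have htlt : 1 < 4 * t := by omega
  have hcd : ζ ^ (c + d) = ζ := by
    have h1 : (c + d) ≡ 1 [MOD 4 * t] := by
      refine (Nat.modEq_and_modEq_iff_modEq_mul h4t).mp ⟨?_, ?_⟩
      · simpa using hc4.add hd4
      · simpa using hct.add hdt
    calc ζ ^ (c + d) = ζ ^ ((c + d) % (4 * t)) := pow_eq_pow_mod _ hζ.pow_eq_one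
    _ = ζ ^ (1 % (4 * t)) := by rw [show (c + d) % (4 * t) = 1 % (4 * t) from h1]
    _ = ζ := by rw [Nat.mod_eq_of_lt htlt, pow_one]
  -- η is a primitive t-th root of unity
  have hc4' : (4 : ℕ) ∣ c := Nat.dvd_of_mod_eq_zero (by simpa [Nat.ModEq] using hc4)
  have hζ4 : IsPrimitiveRoot (ζ ^ 4) t := hζ.pow (by omega) rfl
  have hctco : Nat.Coprime c t := by
    have h1 : Nat.gcd t c = 1 := by
      rw [Nat.gcd_rec t c, show c % t = 1 % t from hct, ← Nat.gcd_rec t 1]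
      exact Nat.gcd_one_right t
    exact Nat.Coprime.symm h1
  have hcdivco : Nat.Coprime (c / 4) t :=
    Nat.Coprime.coprime_dvd_left (Nat.div_dvd_of_dvd hc4') hctco
  have hη : IsPrimitiveRoot (ζ ^ c) t := by
    rw [show c = 4 * (c / 4) from (Nat.mul_div_cancel' hc4').symm, pow_mul]
    exact hζ4.pow_of_coprime _ hcdivco
  -- w
  have hζ2t : ζ ^ (2 * t) = -1 := by
    have h2 : (ζ ^ (2 * t)) ^ 2 = 1 := by
      rw [← pow_mul, show 2 * t * 2 = 4 * t by ring]
      exact hζ.pow_eq_one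
    exact (sq_eq_one_iff.mp h2).resolve_left
      (hζ.pow_ne_one_of_pos_of_lt (by omega) (by omega))
  have hdt' : (t : ℕ) ∣ d := Nat.dvd_of_mod_eq_zero (by simpa [Nat.ModEq] using hdt)
  have hd41 : d % 4 = 1 := by simpa [Nat.ModEq, Nat.mod_eq_of_lt] using hd4
  have hdodd : Odd d := by rw [Nat.odd_iff]; omega
  have hvodd : Odd (d / t) := by
    have h1 : t * (d / t) = d := Nat.mul_div_cancel' hdt'
    have := hdodd
    rw [← h1, Nat.odd_mul] at this
    exact this.2
  have hw2 : (s * ζ ^ d) ^ 2 = -(s ^ 2) := by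
    rw [mul_pow, ← pow_mul]
    have h1 : ζ ^ (d * 2) = -1 := by
      rw [show d * 2 = (2 * t) * (d / t) by
        rw [mul_assoc 2 t (d/t), Nat.mul_div_cancel' hdt']; ring]
      rw [pow_mul, hζ2t, hvodd.neg_one_pow]
    rw [h1, mul_neg_one]
  exact ⟨ζ ^ c, s * ζ ^ d, hη, hw2, by rw [mul_assoc, ← pow_add, add_comm d c, hcd]⟩


lemma core_aux (p : ℕ) [hfp : Fact p.Prime] (hpodd : Odd p)
    (r : ℕ) (hr : Odd r) (hr0 : 0 < r)
    (q : ℤ) (hq : q = (p : ℤ) ^ r ∨ q = -((p : ℤ) ^ r)) (hq3 : q % 4 = 3)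
    (t : ℕ) (ht : Odd t) (ht0 : 0 < t) (hpt : p ∣ t)
    (η w : ℂ) (hη : IsPrimitiveRoot η t) (hw2 : w ^ 2 = -(q : ℂ)) :
    (minpoly ℚ (w * η)).natDegree = Nat.totient t ∧
      (minpoly ℚ (w * η)).map (algebraMap ℚ ℂ) =
        ∏ a ∈ (Finset.range t).filter (fun a => Nat.Coprime a t),
          (X - C ((legendreSym p (a : ℤ) : ℂ) * w * η ^ a)) := by
  classical
  have hppos : 0 < p := hfp.out.pos
  have hp2 : p ≠ 2 := by rintro rfl; simp [Nat.odd_iff] at hpodd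
  haveI : NeZero p := ⟨hfp.out.ne_zero⟩
  have hq0 : q ≠ 0 := by
    have h1 : (p : ℤ) ^ r ≠ 0 := pow_ne_zero _ (by exact_mod_cast hfp.out.ne_zero)
    rcases hq with h | h <;> rw [h] <;> simpa using h1
  have hqC : (q : ℂ) ≠ 0 := Int.cast_ne_zero.mpr hq0
  have hw0 : w ≠ 0 := fun h => hqC (neg_eq_zero.mp
    (by rw [h, zero_pow two_ne_zero] at hw2; exact hw2.symm))
  -- Gauss sum setup
  have htp : t = (t / p) * p := (Nat.div_mul_cancel hpt).symm
  have hζp : IsPrimitiveRoot (η ^ (t / p)) p := hη.pow ht0 htp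
  have hζp1 : (η ^ (t / p)) ^ p = 1 := hζp.pow_eq_one
  set ψ : AddChar (ZMod p) ℂ := AddChar.zmodChar p hζp1 with hψdef
  set χ : MulChar (ZMod p) ℂ :=
    (quadraticChar (ZMod p)).ringHomComp (Int.castRingHom ℂ) with hχdef
  have hχquad : χ.IsQuadratic := (quadraticChar_isQuadratic _).comp _
  have hrc : ringChar (ZMod p) ≠ 2 := by rw [ZMod.ringChar_zmod_n]; exact hp2
  have hχne : χ ≠ 1 :=
    (MulChar.ringHomComp_ne_one_iff Int.cast_injective).mpr (quadraticChar_ne_one hrc)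
  have hψprim : ψ.IsPrimitive := AddChar.zmodChar_primitive_of_primitive_root p hζp
  set g := gaussSum χ ψ with hgdef
  have hχm1 : χ (-1) = ((ZMod.χ₄ p : ℤ) : ℂ) := by
    have h1 : legendreSym p (-1) = ZMod.χ₄ p := legendreSym.at_neg_one hp2
    have h2 : quadraticChar (ZMod p) (-1) = legendreSym p (-1) := by
      rw [legendreSym]; norm_num
    rw [hχdef, MulChar.ringHomComp_apply, h2, h1]
    norm_num
  have hg2 : g ^ 2 = ((ZMod.χ₄ p : ℤ) : ℂ) * p := by
    have := gaussSum_sq hχne hχquad hψprim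
    rwa [ZMod.card p, hχm1] at this
  -- sign analysis
  have hsgn := sign_aux p hfp.out hpodd r hr q hq hq3
  set cc : ℂ := (p : ℂ) ^ ((r - 1) / 2) * g with hccdef
  have hrk : ((r - 1) / 2) * 2 = r - 1 := by
    have := Nat.odd_iff.mp hr; omega
  have hc2 : cc ^ 2 = -(q : ℂ) := by
    rw [hccdef, mul_pow, ← pow_mul, hrk, hg2]
    rcases hsgn with ⟨h4, hqe⟩ | ⟨h4, hqe⟩
    · rw [ZMod.χ₄_nat_one_mod_four h4, hqe]
      push_cast
      rw [neg_neg, one_mul, ← pow_succ, show r - 1 + 1 = r by omega]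
    · rw [ZMod.χ₄_nat_three_mod_four h4, hqe]
      push_cast
      rw [show ((p:ℂ) ^ (r-1) * (-1 * (p:ℂ))) = -((p:ℂ)^(r-1) * (p:ℂ)) by ring,
        ← pow_succ, show r - 1 + 1 = r by omega]
  -- w = ± cc
  have hwcc : w = cc ∨ w = -cc := by
    have h1 : (w - cc) * (w + cc) = 0 := by
      have h2 : w ^ 2 = cc ^ 2 := by rw [hw2, hc2]
      linear_combination h2
    rcases mul_eq_zero.mp h1 with h | h
    · exact Or.inl (sub_eq_zero.mp h)
    · exact Or.inr (eq_neg_of_add_eq_zero_left h)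
  set εQ : ℚ := if w = cc then 1 else -1 with hεdef
  have hwc : w = (εQ : ℂ) * cc := by
    rcases hwcc with h | h
    · rw [hεdef, if_pos h]; push_cast; rw [one_mul]; exact h
    · have hcc0 : cc ≠ 0 := by
        intro h0; rw [h0, neg_zero] at h; exact hw0 h
      have hne : w ≠ cc := by
        intro h1
        apply hcc0
        have h2 : cc = -cc := h1 ▸ h
        exact add_self_eq_zero.mp (by linear_combination h2)
      rw [hεdef, if_neg hne]; push_cast; rw [h]; ring
  -- the field Q(η)
  have hηint : IsIntegral ℚ η := (hη.isIntegral ht0).tower_top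
  haveI : FiniteDimensional ℚ ℚ⟮η⟯ := IntermediateField.adjoin.finiteDimensional hηint
  set pb := IntermediateField.adjoin.powerBasis hηint with hpbdef
  set ηL : ℚ⟮η⟯ := IntermediateField.AdjoinSimple.gen ℚ η with hηLdef
  have hpbgen : pb.gen = ηL := IntermediateField.adjoin.powerBasis_gen hηint
  have hηLval : algebraMap ℚ⟮η⟯ ℂ ηL = η := IntermediateField.AdjoinSimple.algebraMap_gen ℚ η
  set gL : ℚ⟮η⟯ := ∑ x : ZMod p,
      ((quadraticChar (ZMod p) x : ℤ) : ℚ⟮η⟯) * ηL ^ ((t / p) * x.val) with hgLdef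
  have hgLval : algebraMap ℚ⟮η⟯ ℂ gL = g := by
    rw [hgLdef, map_sum, hgdef, gaussSum]
    refine Finset.sum_congr rfl fun x _ => ?_
    rw [map_mul, map_pow, map_intCast, hηLval, hψdef, AddChar.zmodChar_apply, hχdef,
      MulChar.ringHomComp_apply]
    rw [pow_mul]
    norm_num
  set θL : ℚ⟮η⟯ := (algebraMap ℚ ℚ⟮η⟯ (εQ * (p : ℚ) ^ ((r - 1) / 2))) * gL * ηL with hθLdef
  have hθLval : algebraMap ℚ⟮η⟯ ℂ θL = w * η := by
    rw [hθLdef, map_mul, map_mul, hgLval, hηLval,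
      ← IsScalarTower.algebraMap_apply ℚ ℚ⟮η⟯ ℂ]
    simp only [eq_ratCast, Rat.cast_mul, Rat.cast_pow, Rat.cast_natCast]
    rw [hwc, hccdef]
    ring
  have hmineq : minpoly ℚ (w * η) = minpoly ℚ θL := by
    rw [← hθLval, minpoly.algebraMap_eq (algebraMap ℚ⟮η⟯ ℂ).injective]
  have hθint : IsIntegral ℚ θL := IsIntegral.of_finite ℚ θL
  have hwηint : IsIntegral ℚ (w * η) := by
    rw [← hθLval]
    exact hθint.algebraMap
  have hub : (minpoly ℚ θL).natDegree ≤ Nat.totient t := by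
    have h1 : (minpoly ℚ θL).natDegree ≤ Module.finrank ℚ ℚ⟮η⟯ :=
      minpoly.natDegree_le θL
    rwa [IntermediateField.adjoin.finrank hηint, ← cyclotomic_eq_minpoly_rat hη ht0,
      natDegree_cyclotomic] at h1
  set m := (minpoly ℚ (w * η)).map (algebraMap ℚ ℂ) with hmdef
  have hmonic : (minpoly ℚ (w * η)).Monic := minpoly.monic hwηint
  have hm0 : m ≠ 0 := (hmonic.map (algebraMap ℚ ℂ)).ne_zero
  -- each claimed root is a conjugate of θ
  have hconj : ∀ a : ℕ, a.Coprime t →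
      ((legendreSym p (a : ℤ) : ℂ) * w * η ^ a) ∈ m.roots := by
    intro a hat
    have hap : Nat.Coprime a p := Nat.Coprime.coprime_dvd_right hpt hat
    have hmingen : minpoly ℚ pb.gen = cyclotomic t ℚ := by
      rw [hpbgen, hηLdef]; exact (IntermediateField.minpoly_gen ℚ η).trans (cyclotomic_eq_minpoly_rat hη ht0).symm
    have haroot : aeval (η ^ a) (minpoly ℚ pb.gen) = 0 := by
      rw [hmingen]
      have h2 : IsRoot (cyclotomic t ℂ) (η ^ a) :=
        (hη.pow_of_coprime a hat).isRoot_cyclotomic ht0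
      rw [aeval_def, ← eval_map, map_cyclotomic]
      exact h2
    set σ := pb.lift (η ^ a) haroot with hσdef
    have hσηL : σ ηL = η ^ a := by rw [← hpbgen]; exact pb.lift_gen _ _
    set u : (ZMod p)ˣ := ZMod.unitOfCoprime a hap with hudef
    have hu : (u : ZMod p) = (a : ZMod p) := ZMod.coe_unitOfCoprime a hap
    have hσgL : σ gL = gaussSum χ (AddChar.mulShift ψ ((u : ZMod p))) := by
      rw [hgLdef, map_sum, gaussSum]
      refine Finset.sum_congr rfl fun x _ => ?_
      have hxx : ((a : ZMod p) * x) = ((a * x.val : ℕ) : ZMod p) := by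
        push_cast
        rw [ZMod.natCast_val, ZMod.cast_id]
      have h1 : AddChar.mulShift ψ ((u : ZMod p)) x = (η ^ a) ^ (t / p * x.val) := by
        rw [AddChar.mulShift_apply, hu, hxx, hψdef, AddChar.zmodChar_apply',
          ← pow_mul, ← pow_mul]
        congr 1
        ring
      rw [map_mul, map_pow, hσηL, map_intCast, h1, hχdef, MulChar.ringHomComp_apply]
      norm_num
    have hshift : χ ((u : ZMod p)) * σ gL = g := by
      rw [hσgL, hgdef]; exact gaussSum_mulShift χ ψ u
    have hla : χ ((u : ZMod p)) = ((legendreSym p (a : ℤ) : ℤ) : ℂ) := by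
      rw [hu, hχdef, MulChar.ringHomComp_apply, legendreSym]
      norm_num
    have hl1 : legendreSym p (a : ℤ) = 1 ∨ legendreSym p (a : ℤ) = -1 := by
      apply legendreSym.eq_one_or_neg_one
      rw [Int.cast_natCast]
      have : ¬ (p ∣ a) := (Nat.Prime.coprime_iff_not_dvd hfp.out).mp hap.symm
      simpa [ZMod.natCast_eq_zero_iff] using this
    have hl2 : ((legendreSym p (a : ℤ) : ℂ)) ^ 2 = 1 := by
      rcases hl1 with h | h <;> rw [h] <;> norm_num
    have hσg : σ gL = (legendreSym p (a : ℤ) : ℂ) * g := by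
      have h3 := hshift
      rw [hla] at h3
      calc σ gL = ((legendreSym p (a : ℤ) : ℂ)) ^ 2 * σ gL := by rw [hl2, one_mul]
      _ = (legendreSym p (a : ℤ) : ℂ) * (((legendreSym p (a : ℤ) : ℤ) : ℂ) * σ gL) := by
          push_cast; ring
      _ = (legendreSym p (a : ℤ) : ℂ) * g := by rw [h3]
    have hσθL : σ θL = (legendreSym p (a : ℤ) : ℂ) * w * η ^ a := by
      rw [hθLdef, map_mul, map_mul, hσg, hσηL]; erw [σ.commutes]
      simp only [eq_ratCast, Rat.cast_mul, Rat.cast_pow, Rat.cast_natCast]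
      rw [hwc, hccdef]
      ring
    have hroot2 : aeval (σ θL) (minpoly ℚ θL) = 0 := by
      rw [Polynomial.aeval_algHom_apply, minpoly.aeval, map_zero]
    rw [hσθL] at hroot2
    rw [hmdef, hmineq, mem_roots']
    refine ⟨by rw [← hmineq]; exact hm0, ?_⟩
    rw [IsRoot, eval_map, ← aeval_def]
    exact hroot2
  -- assembly
  set A := (Finset.range t).filter (fun a => Nat.Coprime a t) with hAdef
  set f : ℕ → ℂ := fun a => (legendreSym p (a : ℤ) : ℂ) * w * η ^ a with hfdef
  have hηpow : ∀ b : ℕ, (η ^ b) ^ t = 1 := by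
    intro b
    rw [← pow_mul, mul_comm b t, pow_mul, hη.pow_eq_one, one_pow]
  have hlnz : ∀ a : ℕ, a.Coprime t →
      legendreSym p (a : ℤ) = 1 ∨ legendreSym p (a : ℤ) = -1 := by
    intro a hat
    apply legendreSym.eq_one_or_neg_one
    rw [Int.cast_natCast]
    have hap : Nat.Coprime a p := Nat.Coprime.coprime_dvd_right hpt hat
    have : ¬ (p ∣ a) := (Nat.Prime.coprime_iff_not_dvd hfp.out).mp hap.symm
    simpa [ZMod.natCast_eq_zero_iff] using this
  have hcancel : ∀ a b : ℕ, a < t → b < t → w * η ^ a = w * η ^ b → a = b :=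
    fun a b ha hb h => hη.pow_inj ha hb (mul_left_cancel₀ hw0 h)
  have hneg : ∀ a b : ℕ, w * η ^ a = -(w * η ^ b) → False := by
    intro a b h
    have h3 : η ^ a = -(η ^ b) := mul_left_cancel₀ hw0 (by rw [h]; ring)
    have h4 := hηpow a
    rw [h3, ht.neg_pow, hηpow b] at h4
    norm_num at h4
  have hinj : ∀ a ∈ A, ∀ b ∈ A, f a = f b → a = b := by
    intro a ha b hb hab
    rw [hAdef, Finset.mem_filter, Finset.mem_range] at ha hb
    rcases hlnz a ha.2 with h1 | h1 <;> rcases hlnz b hb.2 with h2 | h2 <;>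
      rw [hfdef] at hab <;> simp only [h1, h2] at hab <;> push_cast at hab
    · exact hcancel a b ha.1 hb.1 (by linear_combination hab)
    · exact ((hneg a b) (by linear_combination hab)).elim
    · exact ((hneg b a) (by linear_combination -hab)).elim
    · exact hcancel a b ha.1 hb.1 (by linear_combination -hab)
  have hAcard : A.card = Nat.totient t := by
    rw [hAdef, Nat.totient]
    congr 1
    apply Finset.filter_congr
    intro x _
    exact Nat.coprime_comm
  have hSdef : (A.image f).card = Nat.totient t := by
    rw [Finset.card_image_of_injOn (fun a ha b hb h => hinj a ha b hb h), hAcard]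
  have hSle : (A.image f).val ≤ m.roots := by
    rw [Multiset.le_iff_count]
    intro x
    by_cases hx : x ∈ A.image f
    · rw [Multiset.count_eq_one_of_mem (A.image f).nodup hx]
      obtain ⟨a, ha, rfl⟩ := Finset.mem_image.mp hx
      rw [hAdef, Finset.mem_filter] at ha
      exact Multiset.one_le_count_iff_mem.mpr (hconj a ha.2)
    · rw [Multiset.count_eq_zero_of_notMem (fun h => hx (Finset.mem_def.mpr h))]
      exact Nat.zero_le _
  have hdeg1 : Nat.totient t ≤ Multiset.card m.roots := by
    have h6 := Multiset.card_le_card hSle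
    have h7 : Multiset.card (A.image f).val = Nat.totient t := hSdef
    omega
  have hdeg2 : Multiset.card m.roots ≤ m.natDegree := m.card_roots'
  have hdeg3 : m.natDegree = (minpoly ℚ (w * η)).natDegree :=
    natDegree_map_eq_of_injective (algebraMap ℚ ℂ).injective _
  have hub' : (minpoly ℚ (w * η)).natDegree ≤ Nat.totient t := by
    rw [hmineq]; exact hub
  have hdegree : (minpoly ℚ (w * η)).natDegree = Nat.totient t := by omega
  have hcard_le : Multiset.card m.roots ≤ Multiset.card (A.image f).val := by
    have h7 : Multiset.card (A.image f).val = Nat.totient t := hSdef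
    omega
  have hroots : m.roots = (A.image f).val :=
    (Multiset.eq_of_le_of_card_le hSle hcard_le).symm
  have hsplit : m = (m.roots.map fun a => X - C a).prod :=
    (IsAlgClosed.splits m).eq_prod_roots_of_monic (hmonic.map _)
  refine ⟨hdegree, ?_⟩
  calc (minpoly ℚ (w * η)).map (algebraMap ℚ ℂ)
      = (m.roots.map fun a => X - C a).prod := hsplit
    _ = ((A.image f).val.map fun a => X - C a).prod := by rw [hroots]
    _ = ∏ b ∈ A.image f, (X - C b) := (Finset.prod_eq_multiset_prod _ _).symm
    _ = ∏ a ∈ A, (X - C (f a)) := Finset.prod_image hinj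


/-- Let p be an odd prime, r an odd positive integer, and q = p^r or q = −p^r,
with q ≡ 3 (mod 4). Let t be an odd positive integer divisible by p, let ζ be a primitive
4t-th root of unity in ℂ, let s ∈ ℂ satisfy s² = q, and set θ = s·ζ. Then the minimal
polynomial of θ over ℚ has degree φ(t) = φ(4t)/2, and there exist a primitive t-th root of
unity η in ℂ and w ∈ ℂ with w² = −q such that θ = w·η and the image in ℂ[X] of the minimal
polynomial of θ over ℚ equals ∏_{a ∈ (ℤ/tℤ)ˣ} (X − (a|p)·w·η^a). -/
theorem stmt_2 (p : ℕ) [hfp : Fact p.Prime] (hpodd : Odd p)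
    (r : ℕ) (hr : Odd r) (hr0 : 0 < r)
    (q : ℤ) (hq : q = (p : ℤ) ^ r ∨ q = -((p : ℤ) ^ r)) (hq3 : q % 4 = 3)
    (t : ℕ) (ht : Odd t) (ht0 : 0 < t) (hpt : p ∣ t)
    (ζ : ℂ) (hζ : IsPrimitiveRoot ζ (4 * t))
    (s : ℂ) (hs : s ^ 2 = (q : ℂ)) :
    (minpoly ℚ (s * ζ)).natDegree = Nat.totient t ∧
    Nat.totient t = Nat.totient (4 * t) / 2 ∧
    ∃ (η w : ℂ), IsPrimitiveRoot η t ∧ w ^ 2 = -(q : ℂ) ∧ s * ζ = w * η ∧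
      (minpoly ℚ (s * ζ)).map (algebraMap ℚ ℂ) =
        ∏ a ∈ (Finset.range t).filter (fun a => Nat.Coprime a t),
          (X - C ((legendreSym p (a : ℤ) : ℂ) * w * η ^ a)) := by
  obtain ⟨η, w, hη, hw2, hθ⟩ := decomp_aux t ht ht0 ζ hζ s
  rw [hs] at hw2
  have hcore := core_aux p hpodd r hr hr0 q hq hq3 t ht ht0 hpt η w hη hw2
  have htot : Nat.totient t = Nat.totient (4 * t) / 2 := by
    have h4t : Nat.Coprime 4 t := by
      have := (Nat.coprime_two_left.mpr ht).pow_left 2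
      norm_num at this
      exact this
    rw [Nat.totient_mul h4t, show Nat.totient 4 = 2 by decide]
    omega
  exact ⟨by rw [hθ]; exact hcore.1, htot, η, w, hη, hw2, hθ, by rw [hθ]; exact hcore.2⟩
end

section
/- Let r be an odd positive integer, q = 2^r, and let s be an odd positive integer (so that t = 2s satisfies t ≡ 2 (mod 4)). Let ζ be a primitive 8s-th root of unity in ℂ, and write ζ = ζ₈·ζ_s where ζ₈ is a primitive 8th root of unity and ζ_s is a primitive s-th root of unity (such a factorization exists and is unique). Then the minimal polynomial over ℚ of θ = √q·ζ (with √q the positive real square root) has degree 2φ(s) = φ(8s)/2, and its image in ℂ[X] equals ∏_{a ∈ (ℤ/sℤ)ˣ} (X − √q·ζ₈·ζ_s^a)·(X − √q·ζ₈^{−1}·ζ_s^a). -/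
open Polynomial IntermediateField

/-- Let r be an odd positive integer, q = 2^r, and let s be an odd positive
integer (so that t = 2s satisfies t ≡ 2 (mod 4)). Let ζ be a primitive 8s-th root of unity
in ℂ, and write ζ = ζ₈·ζ_s where ζ₈ is a primitive 8th root of unity and ζ_s is a primitive
s-th root of unity. Then the minimal polynomial over ℚ of θ = √q·ζ (with √q the positive
real square root) has degree 2φ(s) = φ(8s)/2, and its image in ℂ[X] equals
∏_{a ∈ (ℤ/sℤ)ˣ} (X − √q·ζ₈·ζ_s^a)·(X − √q·ζ₈^{−1}·ζ_s^a). -/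
theorem stmt_3 (r : ℕ) (hr : Odd r) (hr0 : 0 < r)
    (s : ℕ) (hs : Odd s) (hs0 : 0 < s)
    (ζ ζ₈ ζs : ℂ) (hζ : IsPrimitiveRoot ζ (8 * s))
    (h8 : IsPrimitiveRoot ζ₈ 8) (hss : IsPrimitiveRoot ζs s)
    (hfact : ζ = ζ₈ * ζs) :
    (minpoly ℚ ((Real.sqrt ((2 : ℝ) ^ r) : ℂ) * ζ)).natDegree = 2 * Nat.totient s ∧
    2 * Nat.totient s = Nat.totient (8 * s) / 2 ∧
    (minpoly ℚ ((Real.sqrt ((2 : ℝ) ^ r) : ℂ) * ζ)).map (algebraMap ℚ ℂ) =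
      ∏ a ∈ (Finset.range s).filter (fun a => Nat.Coprime a s),
        ((X - C ((Real.sqrt ((2 : ℝ) ^ r) : ℂ) * ζ₈ * ζs ^ a)) *
          (X - C ((Real.sqrt ((2 : ℝ) ^ r) : ℂ) * ζ₈⁻¹ * ζs ^ a))) := by
  obtain ⟨k, hk⟩ := hr
  have h8s0 : 0 < 8 * s := by omega
  have h8one : ζ₈ ^ 8 = 1 := h8.pow_eq_one
  have hsone : ζs ^ s = 1 := hss.pow_eq_one
  have h8ne : ζ₈ ≠ 0 := h8.ne_zero (by norm_num)
  have hsne : ζs ≠ 0 := hss.ne_zero (by omega)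
  have h4 : ζ₈ ^ 4 = -1 := by
    have hne : ζ₈ ^ 4 ≠ 1 := h8.pow_ne_one_of_pos_of_lt (by norm_num) (by norm_num)
    have : (ζ₈ ^ 4 - 1) * (ζ₈ ^ 4 + 1) = 0 := by linear_combination h8one
    rcases mul_eq_zero.mp this with h | h
    · exact absurd (by linear_combination h) hne
    · linear_combination h
  have hinv : ζ₈⁻¹ = ζ₈ ^ 7 := by
    refine inv_eq_of_mul_eq_one_right ?_
    rw [← pow_succ']; exact h8one
  have pm8 : ∀ m : ℕ, ζ₈ ^ m = ζ₈ ^ (m % 8) := by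
    intro m
    conv_lhs => rw [← Nat.mod_add_div m 8]
    rw [pow_add, pow_mul, h8one, one_pow, mul_one]
  have pms : ∀ m : ℕ, ζs ^ m = ζs ^ (m % s) := by
    intro m
    conv_lhs => rw [← Nat.mod_add_div m s]
    rw [pow_add, pow_mul, hsone, one_pow, mul_one]
  have hpow : ∀ m : ℕ, ζ ^ m = ζ₈ ^ (m % 8) * ζs ^ (m % s) := by
    intro m
    rw [hfact, mul_pow, pm8 m, pms m]
  have hs2 : s ^ 2 % 8 = 1 := by
    obtain ⟨j, hj⟩ := hs
    obtain ⟨m, hm⟩ := Nat.even_mul_succ_self j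
    have h1 : s ^ 2 = 4 * (j * (j + 1)) + 1 := by subst hj; ring
    omega
  have hss2 : s ^ 2 % s = 0 := by
    rw [Nat.pow_mod, Nat.mod_self]; simp
  set sq : ℂ := ((Real.sqrt ((2 : ℝ) ^ r) : ℝ) : ℂ) with hsqdef
  have hsq2 : sq ^ 2 = 2 ^ r := by
    rw [hsqdef]
    norm_cast
    rw [Real.sq_sqrt (by positivity)]
  have hsqne : sq ≠ 0 := by
    rw [hsqdef]
    exact_mod_cast ne_of_gt (Real.sqrt_pos.mpr (by positivity))
  have hq : ((2 : ℂ) ^ k * (ζ₈ + ζ₈ ^ 7)) ^ 2 = 2 ^ r := by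
    have hw2 : (ζ₈ + ζ₈ ^ 7) ^ 2 = 2 := by
      linear_combination (2 + ζ₈ ^ 6) * h8one + ζ₈ ^ 2 * h4
    rw [hk, mul_pow, hw2, ← pow_mul, mul_comm k 2, pow_succ]
  obtain ⟨εQ, hεpm, hsqw⟩ : ∃ εQ : ℚ, (εQ = 1 ∨ εQ = -1) ∧
      sq = (εQ : ℂ) * (2 ^ k * (ζ₈ + ζ₈ ^ 7)) := by
    have hmul : (sq - 2 ^ k * (ζ₈ + ζ₈ ^ 7)) * (sq + 2 ^ k * (ζ₈ + ζ₈ ^ 7)) = 0 := by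
      linear_combination hsq2 - hq
    rcases mul_eq_zero.mp hmul with h | h
    · exact ⟨1, Or.inl rfl, by push_cast; linear_combination h⟩
    · exact ⟨-1, Or.inr rfl, by push_cast; linear_combination h⟩
  -- the adjoined field
  have hζint : IsIntegral ℚ ζ := by
    refine ⟨X ^ (8 * s) - C 1, ?_, ?_⟩
    · exact monic_X_pow_sub_C 1 (by omega)
    · simp [hζ.pow_eq_one]
  haveI hFD : FiniteDimensional ℚ ℚ⟮ζ⟯ := IntermediateField.adjoin.finiteDimensional hζint
  set Z : ℚ⟮ζ⟯ := IntermediateField.AdjoinSimple.gen ℚ ζ with hZdef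
  have hZ : algebraMap ℚ⟮ζ⟯ ℂ Z = ζ := IntermediateField.AdjoinSimple.algebraMap_gen ℚ ζ
  set Θ : ℚ⟮ζ⟯ := (algebraMap ℚ ℚ⟮ζ⟯ εQ) * ((2 : ℚ⟮ζ⟯) ^ k * (Z ^ (s ^ 2) + Z ^ (7 * s ^ 2)) * Z)
    with hΘdef
  have hz1 : ζ ^ (s ^ 2) = ζ₈ := by
    rw [hpow, hs2, hss2]; simp
  have hz7 : ζ ^ (7 * s ^ 2) = ζ₈ ^ 7 := by
    have e8 : 7 * s ^ 2 % 8 = 7 := by rw [Nat.mul_mod, hs2]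
    have es : 7 * s ^ 2 % s = 0 := by rw [Nat.mul_mod, hss2]; simp
    rw [hpow, e8, es]; simp
  have hΘ : algebraMap ℚ⟮ζ⟯ ℂ Θ = sq * ζ := by
    rw [hΘdef]
    rw [map_mul, map_mul, map_mul, map_add, map_pow, map_pow, map_pow, hZ]
    rw [← IsScalarTower.algebraMap_apply ℚ ℚ⟮ζ⟯ ℂ]
    rw [hz1, hz7, hsqw]
    push_cast
    simp only [map_ofNat, eq_ratCast]
    ring
  have hθint : IsIntegral ℚ (sq * ζ) := by
    rw [← hΘ]
    exact (IsIntegral.of_finite ℚ Θ).map (IsScalarTower.toAlgHom ℚ ℚ⟮ζ⟯ ℂ)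
  have hminΘ : minpoly ℚ (sq * ζ) = minpoly ℚ Θ := by
    rw [← hΘ]
    exact minpoly.algebraMap_eq (algebraMap ℚ⟮ζ⟯ ℂ).injective Θ
  clear_value sq Z Θ
  haveI : NeZero ((8 * s : ℕ) : ℂ) := ⟨Nat.cast_ne_zero.mpr (by omega)⟩
  have hminZ : minpoly ℚ Z = cyclotomic (8 * s) ℚ := by
    rw [hZdef]; erw [IntermediateField.minpoly_gen ℚ ζ]; rw [← Polynomial.cyclotomic_eq_minpoly_rat hζ h8s0]
  have pb := IntermediateField.adjoin.powerBasis hζint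
  -- every conjugate expression is a root of the minimal polynomial
  have hconj : ∀ c : ℕ, Nat.Coprime c (8 * s) →
      aeval ((εQ : ℂ) * (2 ^ k * (ζ ^ (c * s ^ 2) + ζ ^ (c * (7 * s ^ 2))) * ζ ^ c))
        (minpoly ℚ (sq * ζ)) = 0 := by
    intro c hc
    have hprim : IsPrimitiveRoot (ζ ^ c) (8 * s) := hζ.pow_of_coprime c hc
    have hroot : aeval (ζ ^ c) (minpoly ℚ (IntermediateField.adjoin.powerBasis hζint).gen) = 0 := by
      rw [IntermediateField.adjoin.powerBasis_gen, ← hZdef, hminZ, aeval_def, ← eval_map,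
        map_cyclotomic]
      exact isRoot_cyclotomic_iff.mpr hprim
    set τ := (IntermediateField.adjoin.powerBasis hζint).lift (ζ ^ c) hroot with hτdef
    have hτZ : τ Z = ζ ^ c := by
      rw [hZdef, ← IntermediateField.adjoin.powerBasis_gen hζint]
      exact PowerBasis.lift_gen _ _ _
    have hτΘ : τ Θ = (εQ : ℂ) * (2 ^ k * (ζ ^ (c * s ^ 2) + ζ ^ (c * (7 * s ^ 2))) * ζ ^ c) := by
      rw [hΘdef, map_mul, map_mul, map_mul, map_add, map_pow, map_pow, map_pow, hτZ]
      erw [AlgHom.commutes]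
      rw [← pow_mul, ← pow_mul]
      simp only [map_ofNat, eq_ratCast]
    rw [hminΘ, ← hτΘ, aeval_algHom_apply, minpoly.aeval, map_zero]
  -- evaluating the conjugate expressions
  have hE1 : ∀ c : ℕ, (c % 8 = 1 ∨ c % 8 = 5) →
      (εQ : ℂ) * (2 ^ k * (ζ ^ (c * s ^ 2) + ζ ^ (c * (7 * s ^ 2))) * ζ ^ c) =
        sq * ζ₈ * ζs ^ (c % s) := by
    intro c hc8
    have e2 : c * s ^ 2 % s = 0 := by rw [Nat.mul_mod, hss2]; simp
    have e4 : c * (7 * s ^ 2) % s = 0 := by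
      rw [Nat.mul_mod, Nat.mul_mod 7, hss2]; simp
    rcases hc8 with hc8 | hc8
    · have e1 : c * s ^ 2 % 8 = 1 := by rw [Nat.mul_mod, hs2, hc8]
      have e3 : c * (7 * s ^ 2) % 8 = 7 := by rw [Nat.mul_mod, Nat.mul_mod 7, hs2, hc8]
      rw [hpow (c * s ^ 2), hpow (c * (7 * s ^ 2)), hpow c, e1, e2, e3, e4, hc8, hsqw]
      ring
    · have e1 : c * s ^ 2 % 8 = 5 := by rw [Nat.mul_mod, hs2, hc8]
      have e3 : c * (7 * s ^ 2) % 8 = 3 := by rw [Nat.mul_mod, Nat.mul_mod 7, hs2, hc8]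
      rw [hpow (c * s ^ 2), hpow (c * (7 * s ^ 2)), hpow c, e1, e2, e3, e4, hc8, hsqw]
      linear_combination ((εQ : ℂ) * 2 ^ k * ζs ^ (c % s) * ζ₈ ^ 2) * h8one
  have hE7 : ∀ c : ℕ, (c % 8 = 3 ∨ c % 8 = 7) →
      (εQ : ℂ) * (2 ^ k * (ζ ^ (c * s ^ 2) + ζ ^ (c * (7 * s ^ 2))) * ζ ^ c) =
        sq * ζ₈ ^ 7 * ζs ^ (c % s) := by
    intro c hc8
    have e2 : c * s ^ 2 % s = 0 := by rw [Nat.mul_mod, hss2]; simp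
    have e4 : c * (7 * s ^ 2) % s = 0 := by
      rw [Nat.mul_mod, Nat.mul_mod 7, hss2]; simp
    rcases hc8 with hc8 | hc8
    · have e1 : c * s ^ 2 % 8 = 3 := by rw [Nat.mul_mod, hs2, hc8]
      have e3 : c * (7 * s ^ 2) % 8 = 5 := by rw [Nat.mul_mod, Nat.mul_mod 7, hs2, hc8]
      rw [hpow (c * s ^ 2), hpow (c * (7 * s ^ 2)), hpow c, e1, e2, e3, e4, hc8, hsqw]
      linear_combination (-(εQ : ℂ) * 2 ^ k * ζs ^ (c % s) * ζ₈ ^ 6) * h8one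
    · have e1 : c * s ^ 2 % 8 = 7 := by rw [Nat.mul_mod, hs2, hc8]
      have e3 : c * (7 * s ^ 2) % 8 = 1 := by rw [Nat.mul_mod, Nat.mul_mod 7, hs2, hc8]
      rw [hpow (c * s ^ 2), hpow (c * (7 * s ^ 2)), hpow c, e1, e2, e3, e4, hc8, hsqw]
      ring
  have copmod : ∀ c n : ℕ, Nat.Coprime (c % n) n → Nat.Coprime c n := by
    intro c n h
    have hg : Nat.gcd n c = Nat.gcd (c % n) n := Nat.gcd_rec n c
    refine Nat.coprime_comm.mp ?_
    rw [Nat.Coprime] at h ⊢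
    rw [hg]; exact h
  have hco8s : Nat.Coprime 8 s := Nat.Coprime.pow_left 3 (Nat.coprime_two_left.mpr hs)
  -- direction B : both families are roots of the minimal polynomial
  have hB : ∀ a : ℕ, a < s → Nat.Coprime a s →
      aeval (sq * ζ₈ * ζs ^ a) (minpoly ℚ (sq * ζ)) = 0 ∧
        aeval (sq * ζ₈ ^ 7 * ζs ^ a) (minpoly ℚ (sq * ζ)) = 0 := by
    intro a ha hacop
    constructor
    · obtain ⟨c, hc8, hcs⟩ := Nat.chineseRemainder hco8s 1 a
      have hc8' : c % 8 = 1 := by simpa [Nat.ModEq] using hc8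
      have hcs' : c % s = a := by
        rw [Nat.ModEq] at hcs; rw [hcs, Nat.mod_eq_of_lt ha]
      have hccop : Nat.Coprime c (8 * s) := Nat.coprime_mul_iff_right.mpr
        ⟨copmod c 8 (by rw [hc8']; norm_num), copmod c s (by rw [hcs']; exact hacop)⟩
      have h0 := hconj c hccop
      rwa [hE1 c (Or.inl hc8'), hcs'] at h0
    · obtain ⟨c, hc8, hcs⟩ := Nat.chineseRemainder hco8s 7 a
      have hc8' : c % 8 = 7 := by simpa [Nat.ModEq] using hc8
      have hcs' : c % s = a := by
        rw [Nat.ModEq] at hcs; rw [hcs, Nat.mod_eq_of_lt ha]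
      have hccop : Nat.Coprime c (8 * s) := Nat.coprime_mul_iff_right.mpr
        ⟨copmod c 8 (by rw [hc8']; norm_num), copmod c s (by rw [hcs']; exact hacop)⟩
      have h0 := hconj c hccop
      rwa [hE7 c (Or.inr hc8'), hcs'] at h0
  -- direction C : every root of the minimal polynomial is in one of the two families
  haveI : NeZero (8 * s) := ⟨by omega⟩
  have hC : ∀ y : ℂ, aeval y (minpoly ℚ (sq * ζ)) = 0 →
      ∃ a : ℕ, a < s ∧ Nat.Coprime a s ∧
        (y = sq * ζ₈ * ζs ^ a ∨ y = sq * ζ₈ ^ 7 * ζs ^ a) := by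
    intro y hy
    obtain ⟨τ, hτΘ⟩ := IntermediateField.exists_algHom_of_splits_of_aeval
      (F := ℚ) (E := ℚ⟮ζ⟯) (K := ℂ) (x := Θ) (y := y)
      (fun z => ⟨IsIntegral.of_finite ℚ z, IsAlgClosed.splits _⟩)
      (by rw [← hminΘ]; exact hy)
    have hτZroot : aeval (τ Z) (cyclotomic (8 * s) ℚ) = 0 := by
      rw [← hminZ, aeval_algHom_apply, minpoly.aeval, map_zero]
    have hτZprim : IsPrimitiveRoot (τ Z) (8 * s) := by
      apply isRoot_cyclotomic_iff.mp
      rwa [aeval_def, ← eval_map, map_cyclotomic] at hτZroot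
    obtain ⟨c, hclt, hc⟩ := hζ.eq_pow_of_pow_eq_one hτZprim.pow_eq_one
    have hccop : Nat.Coprime c (8 * s) := (hζ.pow_iff_coprime h8s0 c).mp (hc ▸ hτZprim)
    have hτΘ' : τ Θ = (εQ : ℂ) * (2 ^ k * (ζ ^ (c * s ^ 2) + ζ ^ (c * (7 * s ^ 2))) * ζ ^ c) := by
      rw [hΘdef, map_mul, map_mul, map_mul, map_add, map_pow, map_pow, map_pow,
        AlgHom.commutes, ← hc, ← pow_mul, ← pow_mul]
      simp only [map_ofNat, eq_ratCast]
    have hcodd : c % 2 = 1 := by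
      have h1 : Nat.Coprime c 8 := (Nat.coprime_mul_iff_right.mp hccop).1
      have h2 : Nat.Coprime c 2 := Nat.Coprime.coprime_dvd_right (by norm_num) h1
      exact Nat.odd_iff.mp (Nat.coprime_two_right.mp h2)
    have hcs : Nat.Coprime (c % s) s := by
      have h1 : Nat.Coprime c s := (Nat.coprime_mul_iff_right.mp hccop).2
      have hg : Nat.gcd s c = Nat.gcd (c % s) s := Nat.gcd_rec s c
      have : Nat.gcd s c = 1 := Nat.coprime_comm.mp h1
      rw [Nat.Coprime]; rw [← hg]; exact this
    refine ⟨c % s, Nat.mod_lt c hs0, hcs, ?_⟩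
    have h8cases : c % 8 = 1 ∨ c % 8 = 3 ∨ c % 8 = 5 ∨ c % 8 = 7 := by omega
    rcases h8cases with h | h | h | h
    · exact Or.inl (by rw [← hτΘ, hτΘ', hE1 c (Or.inl h)])
    · exact Or.inr (by rw [← hτΘ, hτΘ', hE7 c (Or.inl h)])
    · exact Or.inl (by rw [← hτΘ, hτΘ', hE1 c (Or.inr h)])
    · exact Or.inr (by rw [← hτΘ, hτΘ', hE7 c (Or.inr h)])
  -- assembling everything
  set p : Polynomial ℚ := minpoly ℚ (sq * ζ) with hpdef
  have hpne : p ≠ 0 := minpoly.ne_zero hθint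
  have hmon : (p.map (algebraMap ℚ ℂ)).Monic := (minpoly.monic hθint).map _
  have hsep : (p.map (algebraMap ℚ ℂ)).Separable :=
    (Polynomial.separable_map _).mpr (minpoly.irreducible hθint).separable
  have hnd : (p.map (algebraMap ℚ ℂ)).roots.Nodup := Polynomial.nodup_roots hsep
  have hcard : p.natDegree = Multiset.card (p.map (algebraMap ℚ ℂ)).roots :=
    (natDegree_map _).symm.trans (IsAlgClosed.splits _).natDegree_eq_card_roots
  set Φ : Finset ℕ := (Finset.range s).filter (fun a => Nat.Coprime a s) with hΦdef
  have hΦmem : ∀ a : ℕ, a ∈ Φ ↔ a < s ∧ Nat.Coprime a s := by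
    intro a; rw [hΦdef, Finset.mem_filter, Finset.mem_range]
  set T : Finset ℂ := Φ.image (fun a => sq * ζ₈ * ζs ^ a) ∪
      Φ.image (fun a => sq * ζ₈ ^ 7 * ζs ^ a) with hTdef
  have hroots : (p.map (algebraMap ℚ ℂ)).roots.toFinset = T := by
    ext y
    rw [Multiset.mem_toFinset, mem_roots']
    constructor
    · rintro ⟨-, hroot⟩
      have hy : aeval y p = 0 := by rwa [aeval_def, ← eval_map]
      obtain ⟨a, ha, hacop, hform⟩ := hC y hy
      rw [hTdef, Finset.mem_union, Finset.mem_image, Finset.mem_image]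
      rcases hform with h | h
      · exact Or.inl ⟨a, (hΦmem a).mpr ⟨ha, hacop⟩, h.symm⟩
      · exact Or.inr ⟨a, (hΦmem a).mpr ⟨ha, hacop⟩, h.symm⟩
    · intro hyT
      rw [hTdef, Finset.mem_union, Finset.mem_image, Finset.mem_image] at hyT
      refine ⟨Polynomial.map_ne_zero hpne, ?_⟩
      rcases hyT with ⟨a, haΦ, hya⟩ | ⟨a, haΦ, hya⟩
      · obtain ⟨ha, hacop⟩ := (hΦmem a).mp haΦ
        rw [IsRoot, eval_map, ← aeval_def, ← hya]
        exact (hB a ha hacop).1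
      · obtain ⟨ha, hacop⟩ := (hΦmem a).mp haΦ
        rw [IsRoot, eval_map, ← aeval_def, ← hya]
        exact (hB a ha hacop).2
  have hrootsval : (p.map (algebraMap ℚ ℂ)).roots = T.val := by
    rw [← hroots, Multiset.toFinset_val, hnd.dedup]
  have hinj1 : ∀ a ∈ Φ, ∀ b ∈ Φ, sq * ζ₈ * ζs ^ a = sq * ζ₈ * ζs ^ b → a = b := by
    intro a ha b hb h
    have h' : ζs ^ a = ζs ^ b := mul_left_cancel₀ (mul_ne_zero hsqne h8ne) h
    exact hss.pow_inj ((hΦmem a).mp ha).1 ((hΦmem b).mp hb).1 h'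
  have hinj7 : ∀ a ∈ Φ, ∀ b ∈ Φ, sq * ζ₈ ^ 7 * ζs ^ a = sq * ζ₈ ^ 7 * ζs ^ b → a = b := by
    intro a ha b hb h
    have h' : ζs ^ a = ζs ^ b :=
      mul_left_cancel₀ (mul_ne_zero hsqne (pow_ne_zero 7 h8ne)) h
    exact hss.pow_inj ((hΦmem a).mp ha).1 ((hΦmem b).mp hb).1 h'
  have hdisj : Disjoint (Φ.image (fun a => sq * ζ₈ * ζs ^ a))
      (Φ.image (fun a => sq * ζ₈ ^ 7 * ζs ^ a)) := by
    rw [Finset.disjoint_left]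
    rintro y hy1 hy7
    obtain ⟨a, haΦ, hya⟩ := Finset.mem_image.mp hy1
    obtain ⟨b, hbΦ, hyb⟩ := Finset.mem_image.mp hy7
    have h : sq * ζ₈ * ζs ^ a = sq * ζ₈ ^ 7 * ζs ^ b := by rw [hya, hyb]
    have h' : ζ₈ * ζs ^ a = ζ₈ ^ 7 * ζs ^ b := by
      rw [mul_assoc, mul_assoc] at h
      exact mul_left_cancel₀ hsqne h
    have hps : ζ₈ ^ s = ζ₈ ^ (7 * s) := by
      have h2 := congrArg (· ^ s) h'
      simp only [mul_pow, ← pow_mul] at h2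
      rw [mul_comm a s, mul_comm b s, pow_mul ζs s a, pow_mul ζs s b, hsone, one_pow,
        one_pow, mul_one, mul_one, mul_comm 7 s] at h2
      rw [h2, mul_comm s 7]
    rw [pm8 s, pm8 (7 * s)] at hps
    have h78 : 7 * s % 8 = 7 * (s % 8) % 8 := by rw [Nat.mul_mod]
    have hsodd : s % 2 = 1 := Nat.odd_iff.mp hs
    have hcases : s % 8 = 1 ∨ s % 8 = 3 ∨ s % 8 = 5 ∨ s % 8 = 7 := by omega
    rcases hcases with hm | hm | hm | hm <;>
      rw [hm] at hps h78 <;> norm_num at h78 <;> rw [h78] at hps <;>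
      exact absurd (h8.pow_inj (by norm_num) (by norm_num) hps) (by norm_num)
  have hprod : p.map (algebraMap ℚ ℂ) =
      ∏ a ∈ Φ, ((X - C (sq * ζ₈ * ζs ^ a)) * (X - C (sq * ζ₈ ^ 7 * ζs ^ a))) := by
    have h1 := (IsAlgClosed.splits (p.map (algebraMap ℚ ℂ))).eq_prod_roots_of_monic hmon
    rw [h1, hrootsval, ← Finset.prod_eq_multiset_prod, hTdef,
      Finset.prod_union hdisj, Finset.prod_image hinj1, Finset.prod_image hinj7,
      ← Finset.prod_mul_distrib]
  have hΦcard : Φ.card = Nat.totient s := by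
    rw [hΦdef, Nat.totient]
    congr 1
    apply Finset.filter_congr
    intro x _
    simp [Nat.coprime_comm]
  have hdeg : p.natDegree = 2 * Nat.totient s := by
    rw [hcard, hrootsval]
    have hTc : Multiset.card T.val = T.card := rfl
    rw [hTc, hTdef, Finset.card_union_of_disjoint hdisj,
      Finset.card_image_of_injOn (fun a ha b hb h => hinj1 a ha b hb h),
      Finset.card_image_of_injOn (fun a ha b hb h => hinj7 a ha b hb h), hΦcard]
    omega
  refine ⟨hdeg, ?_, ?_⟩
  · have htot : Nat.totient (8 * s) = 4 * Nat.totient s := by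
      have h8t : Nat.totient 8 = 4 := by decide
      rw [Nat.totient_mul hco8s, h8t]
    omega
  · rw [hinv]
    exact hprod
end

section
/- Let r be an odd positive integer, q = −2^r, and let s be an odd positive integer (so that t = 2s satisfies t ≡ 2 (mod 4)). Let w ∈ ℂ satisfy w² = q, let ζ be a primitive 8s-th root of unity in ℂ, and write ζ = ζ₈·ζ_s where ζ₈ is a primitive 8th root of unity and ζ_s is a primitive s-th root of unity (such a factorization exists and is unique). Then the minimal polynomial over ℚ of θ = w·ζ has degree 2φ(s) = φ(8s)/2, and its image in ℂ[X] equals ∏_{a ∈ (ℤ/sℤ)ˣ} (X − w·ζ₈·ζ_s^a)·(X − w·ζ₈³·ζ_s^a). -/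
open Polynomial IntermediateField

private lemma coprime_of_mod_eq' {k j n : ℕ} (h : k % n = j % n) (hj : Nat.Coprime j n) :
    Nat.Coprime k n := by
  have h1 : Nat.gcd n k = Nat.gcd n j := by
    rw [Nat.gcd_rec n k, Nat.gcd_rec n j, h]
  have h2 : Nat.gcd n j = 1 := Nat.coprime_comm.mp hj
  exact Nat.coprime_comm.mp (by rw [Nat.Coprime, h1, h2])

set_option maxHeartbeats 1000000 in
/-- Let r be an odd positive integer, q = −2^r, and let s be an odd positive
integer (so that t = 2s satisfies t ≡ 2 (mod 4)). Let w ∈ ℂ satisfy w² = q, let ζ be a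
primitive 8s-th root of unity in ℂ, and write ζ = ζ₈·ζ_s where ζ₈ is a primitive 8th root of
unity and ζ_s is a primitive s-th root of unity. Then the minimal polynomial over ℚ of
θ = w·ζ has degree 2φ(s) = φ(8s)/2, and its image in ℂ[X] equals
∏_{a ∈ (ℤ/sℤ)ˣ} (X − w·ζ₈·ζ_s^a)·(X − w·ζ₈³·ζ_s^a). -/
theorem stmt_4 (r : ℕ) (hr : Odd r) (hr0 : 0 < r)
    (s : ℕ) (hs : Odd s) (hs0 : 0 < s)
    (w : ℂ) (hw : w ^ 2 = -((2 : ℂ) ^ r))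
    (ζ ζ₈ ζs : ℂ) (hζ : IsPrimitiveRoot ζ (8 * s))
    (h8 : IsPrimitiveRoot ζ₈ 8) (hss : IsPrimitiveRoot ζs s)
    (hfact : ζ = ζ₈ * ζs) :
    (minpoly ℚ (w * ζ)).natDegree = 2 * Nat.totient s ∧
    2 * Nat.totient s = Nat.totient (8 * s) / 2 ∧
    (minpoly ℚ (w * ζ)).map (algebraMap ℚ ℂ) =
      ∏ a ∈ (Finset.range s).filter (fun a => Nat.Coprime a s),
        ((X - C (w * ζ₈ * ζs ^ a)) * (X - C (w * ζ₈ ^ 3 * ζs ^ a))) := by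
  classical
  obtain ⟨m, hm⟩ := hr
  have hrm : r = 2 * m + 1 := by omega
  subst hrm
  have h8s0 : 0 < 8 * s := by positivity
  have h2r : ((2:ℂ)) ^ (2*m+1) ≠ 0 := pow_ne_zero _ two_ne_zero
  have hw0 : w ≠ 0 := by
    intro h
    rw [h] at hw
    exact h2r (by linear_combination hw)
  have h88 : ζ₈ ^ 8 = 1 := h8.pow_eq_one
  have hss1 : ζs ^ s = 1 := hss.pow_eq_one
  have h80 : ζ₈ ≠ 0 := by intro h; rw [h] at h88; simp at h88
  have hs00 : ζs ≠ 0 := by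
    intro h; rw [h] at hss1; rw [zero_pow hs0.ne'] at hss1; exact zero_ne_one hss1
  have h84 : ζ₈ ^ 4 = -1 := by
    have hne : ζ₈ ^ 4 ≠ 1 := h8.pow_ne_one_of_pos_of_lt (by norm_num) (by norm_num)
    have hq : (ζ₈ ^ 4 - 1) * (ζ₈ ^ 4 + 1) = 0 := by linear_combination h88
    rcases mul_eq_zero.1 hq with h | h
    · exact absurd (sub_eq_zero.1 h) hne
    · exact eq_neg_of_add_eq_zero_left h
  have hd2 : (ζ₈ + ζ₈ ^ 3) ^ 2 = -2 := by linear_combination (ζ₈ ^ 2 + 2) * h84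
  have hsq : (w - 2 ^ m * (ζ₈ + ζ₈ ^ 3)) * (w + 2 ^ m * (ζ₈ + ζ₈ ^ 3)) = 0 := by
    linear_combination hw - ((2:ℂ) ^ m) ^ 2 * hd2
  obtain ⟨ε, hε1, hwd⟩ : ∃ ε : ℂ, (ε = 1 ∨ ε = -1) ∧ w = ε * 2 ^ m * (ζ₈ + ζ₈ ^ 3) := by
    rcases mul_eq_zero.1 hsq with h | h
    · exact ⟨1, Or.inl rfl, by have h' := sub_eq_zero.1 h; rw [h']; ring⟩
    · exact ⟨-1, Or.inr rfl, by have h' := eq_neg_of_add_eq_zero_left h; rw [h']; ring⟩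
  have hcop8s : Nat.Coprime 8 s := by
    have h0 : Nat.Coprime (2 ^ 3) s := (Nat.coprime_two_left.mpr hs).pow_left 3
    simpa using h0
  have hpow8 : ∀ i j : ℕ, i % 8 = j % 8 → ζ₈ ^ i = ζ₈ ^ j := by
    intro i j hij
    rw [← Nat.mod_add_div i 8, ← Nat.mod_add_div j 8, pow_add, pow_add, pow_mul, pow_mul,
      h88, one_pow, one_pow, hij]
  have hpows : ∀ i j : ℕ, i % s = j % s → ζs ^ i = ζs ^ j := by
    intro i j hij
    rw [← Nat.mod_add_div i s, ← Nat.mod_add_div j s, pow_add, pow_add, pow_mul, pow_mul,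
      hss1, one_pow, one_pow, hij]
  obtain ⟨α, hα8, hαs⟩ := Nat.chineseRemainder hcop8s 1 0
  obtain ⟨β, hβ8, hβs⟩ := Nat.chineseRemainder hcop8s 0 1
  have hζα : ζ ^ α = ζ₈ := by
    rw [hfact, mul_pow, hpow8 α 1 hα8, pow_one, hpows α 0 hαs, pow_zero, mul_one]
  have hζβ : ζ ^ β = ζs := by
    rw [hfact, mul_pow, hpow8 β 0 hβ8, hpows β 1 hβs, pow_zero, pow_one, one_mul]
  -- ζ is integral over ℚ
  have hζint : IsIntegral ℚ ζ := by
    refine ⟨X ^ (8*s) - C 1, ?_, ?_⟩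
    · exact monic_X_pow_sub_C 1 (by positivity)
    · simp [hζ.pow_eq_one]
  haveI : FiniteDimensional ℚ ℚ⟮ζ⟯ := IntermediateField.adjoin.finiteDimensional hζint
  obtain ⟨εK, hεK1, hεKc⟩ : ∃ εK : ℚ⟮ζ⟯, (εK = 1 ∨ εK = -1) ∧ (algebraMap ℚ⟮ζ⟯ ℂ) εK = ε := by
    rcases hε1 with h | h
    · exact ⟨1, Or.inl rfl, by simp [h]⟩
    · exact ⟨-1, Or.inr rfl, by simp [h]⟩
  set gK : ℚ⟮ζ⟯ := IntermediateField.AdjoinSimple.gen ℚ ζ with hgK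
  set θK : ℚ⟮ζ⟯ := εK * 2 ^ m * (gK ^ α + gK ^ (3*α)) * gK ^ α * gK ^ β with hθKdef
  have hθKc : algebraMap ℚ⟮ζ⟯ ℂ θK = w * ζ := by
    simp only [hθKdef, map_mul, map_add, map_pow, map_ofNat, hεKc, hgK,
      IntermediateField.AdjoinSimple.algebraMap_gen]
    rw [pow_mul', hζα, hζβ, hfact, hwd]
    ring
  have hminθ : minpoly ℚ θK = minpoly ℚ (w * ζ) := by
    rw [← hθKc, minpoly.algebraMap_eq (algebraMap ℚ⟮ζ⟯ ℂ).injective]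
  have hθKint : IsIntegral ℚ θK := IsIntegral.of_finite ℚ θK
  have hwζint : IsIntegral ℚ (w * ζ) := by
    have h0 := hθKint.map (IsScalarTower.toAlgHom ℚ ℚ⟮ζ⟯ ℂ)
    rwa [show (IsScalarTower.toAlgHom ℚ ℚ⟮ζ⟯ ℂ) θK = w * ζ from hθKc] at h0
  have hroot : ∀ k : ℕ, Nat.Coprime k (8*s) → (k % 8 = 1 % 8 ∨ k % 8 = 3 % 8) →
      aeval (w * ζ₈ ^ k * ζs ^ k) (minpoly ℚ (w * ζ)) = 0 := by
    intro k hk hk8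
    have hprim : IsPrimitiveRoot (ζ ^ k) (8 * s) := hζ.pow_of_coprime k hk
    have hmem : ζ ^ k ∈ (minpoly ℚ ζ).aroots ℂ := by
      rw [← cyclotomic_eq_minpoly_rat hζ h8s0, aroots_def, map_cyclotomic, mem_roots']
      exact ⟨cyclotomic_ne_zero _ ℂ, hprim.isRoot_cyclotomic h8s0⟩
    set φ := (IntermediateField.algHomAdjoinIntegralEquiv ℚ (K := ℂ) hζint).symm ⟨ζ ^ k, hmem⟩
      with hφdef
    have hφg : φ gK = ζ ^ k :=
      IntermediateField.algHomAdjoinIntegralEquiv_symm_apply_gen ℚ hζint _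
    have hεφ : φ εK = ε := by
      rcases hεK1 with h | h <;> rw [h] at hεKc ⊢ <;> simp only [map_one, map_neg] at hεKc ⊢ <;>
        exact hεKc
    have e1 : (ζ ^ k) ^ α = ζ₈ ^ k := by
      rw [← pow_mul, mul_comm, pow_mul, hζα]
    have e2 : (ζ ^ k) ^ β = ζs ^ k := by
      rw [← pow_mul, mul_comm, pow_mul, hζβ]
    have e3 : (ζ ^ k) ^ (3*α) = (ζ₈ ^ k) ^ 3 := by
      rw [← pow_mul, show k * (3*α) = (α * k) * 3 by ring, pow_mul, pow_mul, hζα, ← pow_mul,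
        mul_comm k 3, pow_mul]
    have hφθ : φ θK = w * ζ₈ ^ k * ζs ^ k := by
      simp only [hθKdef, map_mul, map_add, map_pow, map_ofNat, hφg, hεφ]
      rw [e3, e1, e2]
      rcases hk8 with h | h
      · have hk1 : ζ₈ ^ k = ζ₈ ^ 1 := hpow8 k 1 h
        rw [hk1, pow_one, hwd]
      · have hk3 : ζ₈ ^ k = ζ₈ ^ 3 := hpow8 k 3 h
        have h9 : (ζ₈ ^ 3) ^ 3 = ζ₈ ^ 1 := by
          rw [← pow_mul]; exact hpow8 9 1 (by norm_num)
        rw [hk3, h9, pow_one, hwd]; ring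
    have h0 : aeval (w * ζ₈ ^ k * ζs ^ k) (minpoly ℚ θK) = 0 := by
      rw [← hφθ, aeval_algHom_apply, minpoly.aeval, map_zero]
    rwa [hminθ] at h0
  set A := (Finset.range s).filter (fun a => Nat.Coprime a s) with hA
  have hRoots : ∀ a ∈ A, ∀ j : ℕ, (j = 1 ∨ j = 3) →
      aeval (w * ζ₈ ^ j * ζs ^ a) (minpoly ℚ (w * ζ)) = 0 := by
    intro a ha j hj
    have hacop : Nat.Coprime a s := (Finset.mem_filter.1 ha).2
    obtain ⟨k, hk8, hks⟩ := Nat.chineseRemainder hcop8s j a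
    have hc8 : Nat.Coprime k 8 := by
      refine coprime_of_mod_eq' hk8 ?_
      rcases hj with h | h <;> subst h <;> decide
    have hkcop : Nat.Coprime k (8*s) :=
      Nat.Coprime.mul_right hc8 (coprime_of_mod_eq' hks hacop)
    have h18 : k % 8 = 1 % 8 ∨ k % 8 = 3 % 8 := by
      rcases hj with h | h <;> subst h
      · exact Or.inl hk8
      · exact Or.inr hk8
    have h0 := hroot k hkcop h18
    rwa [hpow8 k j hk8, hpows k a hks] at h0
  set pm := (minpoly ℚ (w * ζ)).map (algebraMap ℚ ℂ) with hpm
  have hpm_monic : pm.Monic := (minpoly.monic hwζint).map _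
  have hpm0 : pm ≠ 0 := hpm_monic.ne_zero
  have hroot_mem : ∀ a ∈ A, ∀ j : ℕ, (j = 1 ∨ j = 3) → (w * ζ₈ ^ j * ζs ^ a) ∈ pm.roots := by
    intro a ha j hj
    rw [mem_roots']
    refine ⟨hpm0, ?_⟩
    rw [IsRoot, hpm, eval_map, ← aeval_def]
    exact hRoots a ha j hj
  set M : Multiset ℂ := A.val.map (fun a => w * ζ₈ * ζs ^ a)
      + A.val.map (fun a => w * ζ₈ ^ 3 * ζs ^ a) with hM
  have hlt : ∀ a ∈ A, a < s := fun a ha => Finset.mem_range.1 (Finset.mem_filter.1 ha).1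
  have hw8 : w * ζ₈ ≠ 0 := mul_ne_zero hw0 h80
  have hw83 : w * ζ₈ ^ 3 ≠ 0 := mul_ne_zero hw0 (pow_ne_zero _ h80)
  have hnd : M.Nodup := by
    rw [hM, Multiset.nodup_add]
    refine ⟨Multiset.Nodup.map_on ?_ A.nodup, Multiset.Nodup.map_on ?_ A.nodup, ?_⟩
    · intro a ha b hb hab
      have h1 : ζs ^ a = ζs ^ b := by
        have h2 : (w * ζ₈) * ζs ^ a = (w * ζ₈) * ζs ^ b := by linear_combination hab
        exact mul_left_cancel₀ hw8 h2
      exact hss.pow_inj (hlt a ha) (hlt b hb) h1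
    · intro a ha b hb hab
      have h1 : ζs ^ a = ζs ^ b := by
        have h2 : (w * ζ₈ ^ 3) * ζs ^ a = (w * ζ₈ ^ 3) * ζs ^ b := by linear_combination hab
        exact mul_left_cancel₀ hw83 h2
      exact hss.pow_inj (hlt a ha) (hlt b hb) h1
    · rw [Multiset.disjoint_left]
      rintro x hx1 hx2
      obtain ⟨a, ha, rfl⟩ := Multiset.mem_map.1 hx1
      obtain ⟨b, hb, heq⟩ := Multiset.mem_map.1 hx2
      have h1 : ζ₈ ^ 2 * ζs ^ b = ζs ^ a := by
        have h2 : (w * ζ₈) * (ζ₈ ^ 2 * ζs ^ b) = (w * ζ₈) * ζs ^ a := by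
          linear_combination heq
        exact mul_left_cancel₀ hw8 h2
      have h3 : ζ₈ ^ (2*s) = 1 := by
        have h4 : (ζ₈ ^ 2 * ζs ^ b) ^ s = (ζs ^ a) ^ s := by rw [h1]
        have h5 : (ζs ^ b) ^ s = 1 := by
          rw [← pow_mul, mul_comm, pow_mul, hss1, one_pow]
        have h6 : (ζs ^ a) ^ s = 1 := by
          rw [← pow_mul, mul_comm, pow_mul, hss1, one_pow]
        rw [mul_pow, h5, h6, mul_one] at h4
        rw [pow_mul]
        exact h4
      have h7 : (8:ℕ) ∣ 2 * s := (h8.pow_eq_one_iff_dvd (2*s)).1 h3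
      obtain ⟨c, hc⟩ := h7
      obtain ⟨t, ht⟩ := hs
      omega
  have hMle : M ≤ pm.roots := by
    rw [Multiset.le_iff_count]
    intro x
    by_cases hx : x ∈ M
    · rw [Multiset.count_eq_one_of_mem hnd hx]
      refine Multiset.one_le_count_iff_mem.2 ?_
      rw [hM, Multiset.mem_add] at hx
      rcases hx with hx | hx
      · obtain ⟨a, ha, rfl⟩ := Multiset.mem_map.1 hx
        have h0 := hroot_mem a ha 1 (Or.inl rfl)
        rwa [pow_one] at h0
      · obtain ⟨a, ha, rfl⟩ := Multiset.mem_map.1 hx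
        exact hroot_mem a ha 3 (Or.inr rfl)
    · rw [Multiset.count_eq_zero_of_notMem hx]
      exact Nat.zero_le _
  have hdvd : (M.map (fun x => X - C x)).prod ∣ pm :=
    (Multiset.prod_dvd_prod_of_le (Multiset.map_le_map hMle)).trans
      (prod_multiset_X_sub_C_dvd pm)
  have hPeq : (∏ a ∈ A, ((X - C (w * ζ₈ * ζs ^ a)) * (X - C (w * ζ₈ ^ 3 * ζs ^ a))))
      = (M.map (fun x => X - C x)).prod := by
    rw [hM, Multiset.map_add, Multiset.prod_add, Multiset.map_map, Multiset.map_map,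
      Finset.prod_mul_distrib, Finset.prod_eq_multiset_prod, Finset.prod_eq_multiset_prod]
    rfl
  have hcardA : A.card = s.totient := by
    rw [Nat.totient, hA]
    apply congrArg
    apply Finset.filter_congr
    intro x _
    simp [Nat.coprime_comm]
  have hcardM : Multiset.card M = 2 * s.totient := by
    rw [hM, Multiset.card_add, Multiset.card_map, Multiset.card_map]
    have h0 : Multiset.card A.val = A.card := rfl
    omega
  have hdegP : ((M.map (fun x => X - C x)).prod).natDegree = 2 * s.totient := by
    rw [natDegree_multiset_prod_X_sub_C_eq_card, hcardM]
  have hPmonic : ((M.map (fun x => X - C x)).prod).Monic :=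
    monic_multiset_prod_of_monic M _ (fun a _ => monic_X_sub_C a)
  -- upper bound on the degree of the minimal polynomial
  obtain ⟨εq, hεq⟩ : ∃ εq : ℚ, (algebraMap ℚ ℂ) εq = ε := by
    rcases hε1 with h | h
    · exact ⟨1, by simp [h]⟩
    · exact ⟨-1, by simp [h]⟩
  have hq2C : (w * ζ₈) ^ 2 + ε * 2 ^ (m+1) * (w * ζ₈) + 2 ^ (2*m+1) = 0 := by
    rcases hε1 with h | h <;> subst h <;> rw [hwd] <;>
      linear_combination ((2:ℂ)^(2*m) * ζ₈^2) * hd2 + (2:ℂ)^(2*m+1) * h84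
  set q2 : ℚ[X] := X ^ 2 + (C (εq * 2 ^ (m+1)) * X + C ((2:ℚ) ^ (2*m+1))) with hq2def
  have hq2monic : q2.Monic := by
    rw [hq2def]
    monicity!
  have hq2aeval : aeval (w * ζ₈) q2 = 0 := by
    rw [hq2def]
    simp only [map_add, map_mul, map_pow, aeval_X, aeval_C, hεq, map_ofNat]
    linear_combination hq2C
  have hq20 : q2 ≠ 0 := hq2monic.ne_zero
  have hu_int : IsIntegral ℚ (w * ζ₈) := ⟨q2, hq2monic, by rw [← aeval_def]; exact hq2aeval⟩
  have hmin_u : (minpoly ℚ (w * ζ₈)).natDegree ≤ 2 := by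
    refine le_trans (natDegree_le_of_dvd (minpoly.dvd ℚ _ hq2aeval) hq20) ?_
    rw [hq2def]
    compute_degree
  haveI hFDE : FiniteDimensional ℚ ℚ⟮w * ζ₈⟯ :=
    IntermediateField.adjoin.finiteDimensional hu_int
  have hfinE : Module.finrank ℚ ℚ⟮w * ζ₈⟯ ≤ 2 := by
    rw [IntermediateField.adjoin.finrank hu_int]; exact hmin_u
  have hζs_int : IsIntegral ℚ⟮w * ζ₈⟯ ζs := by
    refine ⟨X ^ s - C 1, monic_X_pow_sub_C 1 hs0.ne', ?_⟩
    rw [← aeval_def]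
    simp [hss1]
  haveI hFDF : FiniteDimensional ℚ⟮w * ζ₈⟯ ℚ⟮w * ζ₈⟯⟮ζs⟯ :=
    IntermediateField.adjoin.finiteDimensional hζs_int
  have hcyc_root : aeval ζs (cyclotomic s ℚ⟮w * ζ₈⟯) = 0 := by
    rw [aeval_def, ← eval_map, map_cyclotomic]
    exact hss.isRoot_cyclotomic hs0
  have hfinF : Module.finrank ℚ⟮w * ζ₈⟯ ℚ⟮w * ζ₈⟯⟮ζs⟯ ≤ s.totient := by
    rw [IntermediateField.adjoin.finrank hζs_int]
    refine le_trans (natDegree_le_of_dvd (minpoly.dvd _ _ hcyc_root)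
      (cyclotomic_ne_zero s _)) ?_
    exact le_of_eq (natDegree_cyclotomic s _)
  haveI : FiniteDimensional ℚ ℚ⟮w * ζ₈⟯⟮ζs⟯ := FiniteDimensional.trans ℚ ℚ⟮w * ζ₈⟯ _
  have hmem2 : w * ζ ∈ ℚ⟮w * ζ₈⟯⟮ζs⟯ := by
    have h1 : (w * ζ₈) ∈ ℚ⟮w * ζ₈⟯⟮ζs⟯ := by
      have h0 := IntermediateField.algebraMap_mem ℚ⟮w * ζ₈⟯⟮ζs⟯
        (⟨w * ζ₈, IntermediateField.mem_adjoin_simple_self ℚ (w * ζ₈)⟩ : ℚ⟮w * ζ₈⟯)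
      simpa using h0
    have h2 : ζs ∈ ℚ⟮w * ζ₈⟯⟮ζs⟯ := IntermediateField.mem_adjoin_simple_self _ ζs
    have h3 := mul_mem h1 h2
    rwa [show w * ζ₈ * ζs = w * ζ by rw [hfact]; ring] at h3
  have hdegle : (minpoly ℚ (w * ζ)).natDegree ≤ 2 * s.totient := by
    have h4 := minpoly.algebraMap_eq (A := ℚ) (algebraMap (ℚ⟮w * ζ₈⟯⟮ζs⟯) ℂ).injective
      (⟨w * ζ, hmem2⟩ : ℚ⟮w * ζ₈⟯⟮ζs⟯)
    rw [show (algebraMap (ℚ⟮w * ζ₈⟯⟮ζs⟯) ℂ) ⟨w * ζ, hmem2⟩ = w * ζ from rfl] at h4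
    calc (minpoly ℚ (w * ζ)).natDegree
        = (minpoly ℚ (⟨w * ζ, hmem2⟩ : ℚ⟮w * ζ₈⟯⟮ζs⟯)).natDegree := by rw [← h4]
      _ ≤ Module.finrank ℚ ℚ⟮w * ζ₈⟯⟮ζs⟯ := minpoly.natDegree_le _
      _ = Module.finrank ℚ ℚ⟮w * ζ₈⟯ * Module.finrank ℚ⟮w * ζ₈⟯ ℚ⟮w * ζ₈⟯⟮ζs⟯ :=
          (Module.finrank_mul_finrank ℚ ℚ⟮w * ζ₈⟯ ℚ⟮w * ζ₈⟯⟮ζs⟯).symm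
      _ ≤ 2 * s.totient := Nat.mul_le_mul hfinE hfinF
  have hfinal : pm = (M.map (fun x => X - C x)).prod := by
    refine eq_of_monic_of_dvd_of_natDegree_le hPmonic hpm_monic hdvd ?_
    rw [hdegP, hpm, (minpoly.monic hwζint).natDegree_map]
    exact hdegle
  have htot8 : Nat.totient (8 * s) = 4 * s.totient := by
    rw [Nat.totient_mul hcop8s, show Nat.totient 8 = 4 from by decide]
  refine ⟨?_, ?_, ?_⟩
  · have h5 := congrArg natDegree hfinal
    rw [hpm, (minpoly.monic hwζint).natDegree_map, hdegP] at h5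
    exact h5
  · omega
  · exact hfinal.trans hPeq.symm
end

section
/- Let p be a prime with p ≡ 1 (mod 4) and let t be an odd positive integer. Then Ψ_{p,t} is a reciprocal (palindromic) polynomial: X^{φ(pt)}·Ψ_{p,t}(1/X) = Ψ_{p,t}(X), i.e. the coefficient of X^k in Ψ_{p,t} equals the coefficient of X^{φ(pt)−k} for every 0 ≤ k ≤ φ(pt). -/
open Polynomial
open Finset

lemma leg_congr {p : ℕ} [Fact p.Prime] {a b : ℤ} (h : (a : ZMod p) = (b : ZMod p)) :
    legendreSym p a = legendreSym p b := by
  unfold legendreSym; rw [h]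

lemma my_reverse_X_sub_C (r : ℂ) : (X - C r).reverse = 1 - C r * X := by
  rw [reverse, natDegree_X_sub_C, reflect_sub, reflect_one_X, reflect_C]
  ring

lemma my_reverse_prod {ι : Type*} (s : Finset ι) (f : ι → Polynomial ℂ)
    (hf : ∀ i ∈ s, (f i).Monic) :
    (∏ i ∈ s, f i).reverse = ∏ i ∈ s, (f i).reverse := by
  classical
  induction s using Finset.cons_induction with
  | empty => simpa using reverse_C (1 : ℂ)
  | cons a s ha ih =>
    rw [prod_cons, prod_cons, reverse_mul, ih (fun i hi => hf i (mem_cons_of_mem hi))]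
    rw [(hf a (mem_cons_self a s)).leadingCoeff,
      (monic_prod_of_monic s f fun i hi => hf i (mem_cons_of_mem hi)).leadingCoeff]
    norm_num


/-- For an odd prime `p` and an odd positive integer `t`, given a primitive `p*t`-th root of
unity `ζ` in ℂ, `Psi p t ζ = ∏_{a ∈ (ℤ/ptℤ)ˣ} (X − (a|p)·ζ^a)`, where `(a|p)` is the
Legendre symbol. -/
noncomputable def Psi (p t : ℕ) [Fact p.Prime] (ζ : ℂ) : Polynomial ℂ :=
  ∏ a ∈ (Finset.range (p * t)).filter (fun a => Nat.Coprime a (p * t)),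
    (X - C ((legendreSym p (a : ℤ) : ℂ) * ζ ^ a))

/-- Let p be a prime with p ≡ 1 (mod 4) and let t be an odd positive integer.
Then Ψ_{p,t} is a reciprocal (palindromic) polynomial: the coefficient of X^k in Ψ_{p,t}
equals the coefficient of X^{φ(pt)−k} for every 0 ≤ k ≤ φ(pt). -/
theorem stmt_6 (p : ℕ) [Fact p.Prime] (hp4 : p % 4 = 1)
    (t : ℕ) (ht : Odd t) (ht0 : 0 < t)
    (ζ : ℂ) (hζ : IsPrimitiveRoot ζ (p * t)) :
    ∀ k ≤ Nat.totient (p * t),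
      (Psi p t ζ).coeff k = (Psi p t ζ).coeff (Nat.totient (p * t) - k) := by
  have hp : p.Prime := Fact.out
  set n := p * t with hn
  have hp2 : p ≠ 2 := by rintro rfl; omega
  have hpodd : p % 2 = 1 := by omega
  have hn1 : 1 < n := lt_of_lt_of_le hp.one_lt (Nat.le_mul_of_pos_right p ht0)
  have hnodd : Odd n := (Nat.odd_iff.mpr (by omega)).mul ht
  set S := (Finset.range n).filter (fun a => Nat.Coprime a n) with hS
  set r : ℕ → ℂ := fun a => (legendreSym p (a : ℤ) : ℂ) * ζ ^ a with hr
  have hmem : ∀ a ∈ S, 0 < a ∧ a < n ∧ a.Coprime n := by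
    intro a ha
    simp only [hS, mem_filter, mem_range] at ha
    refine ⟨?_, ha.1, ha.2⟩
    rcases Nat.eq_zero_or_pos a with rfl | h
    · exact absurd (Nat.coprime_zero_left n |>.mp ha.2) (by omega)
    · exact h
  have hsub : ∀ a ∈ S, n - a ∈ S := by
    intro a ha
    obtain ⟨h0, h1, h2⟩ := hmem a ha
    simp only [hS, mem_filter, mem_range]
    refine ⟨by omega, ?_⟩
    have h3 : Nat.Coprime (n - a) a := (Nat.coprime_sub_self_left h1.le).mpr h2.symm
    have h4 : a + (n - a) = n := by omega
    have h5 := Nat.coprime_add_self_right.mpr h3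
    rwa [h4] at h5
  have hleg_ne : ∀ a ∈ S, ((a : ℤ) : ZMod p) ≠ 0 := by
    intro a ha
    obtain ⟨h0, h1, h2⟩ := hmem a ha
    have hcop : a.Coprime p := Nat.Coprime.coprime_dvd_right ⟨t, rfl⟩ h2
    rw [Int.cast_natCast, Ne, ZMod.natCast_eq_zero_iff]
    intro hdvd
    exact hp.one_lt.ne' (hcop.symm.eq_one_of_dvd hdvd)
  have hleg : ∀ a ∈ S, legendreSym p ((n - a : ℕ) : ℤ) = legendreSym p (a : ℤ) := by
    intro a ha
    obtain ⟨h0, h1, h2⟩ := hmem a ha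
    have h3 : ((n - a : ℕ) : ℤ) = (n : ℤ) - (a : ℤ) := by
      have := h1.le; push_cast [this]; ring
    have h5 : (Int.cast ((n : ℤ) - (a : ℤ)) : ZMod p) = (Int.cast (-(a : ℤ)) : ZMod p) := by
      have h6 : ((n : ℕ) : ZMod p) = 0 := by
        rw [ZMod.natCast_eq_zero_iff]; exact ⟨t, rfl⟩
      push_cast
      push_cast at h6
      rw [h6]; ring
    rw [h3, leg_congr h5, show (-(a : ℤ)) = -1 * a by ring, legendreSym.mul,
      legendreSym.at_neg_one hp2, ZMod.χ₄_nat_one_mod_four hp4, one_mul]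
  have hpair : ∀ a ∈ S, r a * r (n - a) = 1 := by
    intro a ha
    obtain ⟨h0, h1, h2⟩ := hmem a ha
    have hz : ζ ^ a * ζ ^ (n - a) = 1 := by
      rw [← pow_add, show a + (n - a) = n by omega]
      exact hζ.pow_eq_one
    have hsq : (legendreSym p (a : ℤ)) ^ 2 = 1 := legendreSym.sq_one p (hleg_ne a ha)
    have : r a * r (n - a)
        = ((legendreSym p (a : ℤ) : ℂ) * (legendreSym p ((n - a : ℕ) : ℤ) : ℂ))
          * (ζ ^ a * ζ ^ (n - a)) := by
      rw [hr]; ring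
    rw [this, hleg a ha, hz, mul_one, ← Int.cast_mul, ← sq, hsq, Int.cast_one]
  have hginv : ∀ a ∈ S, n - (n - a) = a := by
    intro a ha; obtain ⟨h0, h1, _⟩ := hmem a ha; omega
  have hconst : ∏ a ∈ S, (-(r a)) = 1 := by
    refine Finset.prod_involution (fun a _ => n - a) ?_ ?_ hsub ?_
    · intro a ha
      have := hpair a ha
      simp only [neg_mul_neg]
      exact this
    · intro a ha _
      obtain ⟨h0, h1, _⟩ := hmem a ha
      intro hEq
      have hEq' : n - a = a := hEq
      obtain ⟨m, hm⟩ := hnodd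
      omega
    · exact hginv
  have hPsi : Psi p t ζ = ∏ a ∈ S, (X - C (r a)) := rfl
  have hrev : (Psi p t ζ).reverse = Psi p t ζ := by
    rw [hPsi, my_reverse_prod _ _ (fun i _ => monic_X_sub_C _)]
    have step1 : ∀ a ∈ S, (X - C (r a)).reverse = (-C (r a)) * (X - C (r (n - a))) := by
      intro a ha
      rw [my_reverse_X_sub_C, neg_mul, mul_sub, ← C_mul, hpair a ha, map_one, neg_sub]
    rw [Finset.prod_congr rfl step1, Finset.prod_mul_distrib]
    have h1 : ∏ a ∈ S, (-C (r a)) = 1 := by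
      have h2 : ∀ a ∈ S, (-C (r a) : ℂ[X]) = C (-(r a)) := by intro a _; simp
      rw [Finset.prod_congr rfl h2, ← map_prod, hconst, map_one]
    rw [h1, one_mul]
    exact Finset.prod_nbij' (fun a => n - a) (fun a => n - a) hsub hsub hginv hginv
      (fun a ha => rfl)
  have hdeg : (Psi p t ζ).natDegree = Nat.totient n := by
    rw [hPsi, natDegree_prod _ _ (fun a _ => X_sub_C_ne_zero _)]
    simp only [natDegree_X_sub_C, Finset.sum_const, smul_eq_mul, mul_one]
    rw [Nat.totient]
    congr 1
    apply Finset.filter_congr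
    intro a _
    simp [Nat.coprime_comm]
  intro k hk
  have hk' : k ≤ (Psi p t ζ).natDegree := by rw [hdeg]; exact hk
  calc (Psi p t ζ).coeff k = (Psi p t ζ).reverse.coeff k := by rw [hrev]
    _ = (Psi p t ζ).coeff (revAt (Psi p t ζ).natDegree k) := coeff_reverse _ _
    _ = (Psi p t ζ).coeff (Nat.totient n - k) := by rw [revAt_le hk', hdeg]
end

section
/- Let p be a prime with p ≡ 3 (mod 4) and let t be an odd positive integer. Then the multiset of complex roots of Ψ_{p,t} is invariant under the map x ↦ −1/x; that is, Ψ_{p,t} is anti-reciprocal in the sense that x is a root of Ψ_{p,t} (with a given multiplicity) if and only if −1/x is a root with the same multiplicity. -/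
open Polynomial

/-- Let p be a prime with p ≡ 3 (mod 4) and let t be an odd positive integer.
Then the multiset of complex roots of Ψ_{p,t} is invariant under the map x ↦ −1/x. -/
theorem stmt_7 (p : ℕ) [Fact p.Prime] (hp4 : p % 4 = 3)
    (t : ℕ) (ht : Odd t) (ht0 : 0 < t)
    (ζ : ℂ) (hζ : IsPrimitiveRoot ζ (p * t)) :
    (Psi p t ζ).roots.map (fun x => -1 / x) = (Psi p t ζ).roots := by
  classical
  have hp : p.Prime := Fact.out
  set n := p * t with hn
  have hn1 : 1 < n := by
    have h2 : 2 ≤ p := hp.two_le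
    calc 1 < 2 := one_lt_two
    _ ≤ p := h2
    _ = p * 1 := (mul_one p).symm
    _ ≤ p * t := Nat.mul_le_mul_left p ht0
  set s := (Finset.range n).filter (fun a => Nat.Coprime a n) with hs
  set f : ℕ → ℂ := fun a => (legendreSym p (a : ℤ) : ℂ) * ζ ^ a with hf
  set σ : ℕ → ℕ := fun a => n - a with hσ
  -- membership facts
  have hmem : ∀ a ∈ s, a < n ∧ Nat.Coprime a n := fun a ha => by
    simpa [hs] using Finset.mem_filter.mp ha
  have hpos : ∀ a ∈ s, 0 < a := by
    intro a ha
    rcases Nat.eq_zero_or_pos a with rfl | h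
    · exact absurd (Nat.coprime_zero_left n |>.mp (hmem 0 ha).2) (by omega)
    · exact h
  have hσmem : ∀ a ∈ s, σ a ∈ s := by
    intro a ha
    obtain ⟨hlt, hcop⟩ := hmem a ha
    have h0 : 0 < a := hpos a ha
    refine Finset.mem_filter.mpr ⟨Finset.mem_range.mpr (by simp only [hσ]; omega), ?_⟩
    show Nat.Coprime (n - a) n
    unfold Nat.Coprime
    rw [Nat.gcd_self_sub_left hlt.le]
    exact hcop
  have hσσ : ∀ a ∈ s, σ (σ a) = a := by
    intro a ha
    have hlt := (hmem a ha).1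
    simp only [hσ]
    omega
  -- image of σ on s is s
  have himg : Finset.image σ s = s := by
    apply Finset.Subset.antisymm
    · intro b hb
      obtain ⟨a, ha, rfl⟩ := Finset.mem_image.mp hb
      exact hσmem a ha
    · intro a ha
      exact Finset.mem_image.mpr ⟨σ a, hσmem a ha, hσσ a ha⟩
  have hinj : Set.InjOn σ s := by
    intro a ha b hb hab
    have := hσσ a ha
    rw [hab, hσσ b hb] at this
    exact this.symm
  have hmapσ : s.val.map σ = s.val := by
    rw [← Finset.image_val_of_injOn hinj, himg]
  -- roots of Psi
  have hroots : (Psi p t ζ).roots = s.val.map f := by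
    have hPsi : Psi p t ζ = ((s.val.map f).map (fun r => X - C r)).prod := by
      rw [Psi, Multiset.map_map]
      rfl
    rw [hPsi, Polynomial.roots_multiset_prod_X_sub_C]
  -- key computation
  have hζ0 : ζ ≠ 0 := hζ.ne_zero (by omega)
  have key : ∀ a ∈ s, -1 / f a = f (σ a) := by
    intro a ha
    obtain ⟨hlt, hcop⟩ := hmem a ha
    have hpa : ¬ (p ∣ a) := by
      have hc : Nat.Coprime p a := Nat.coprime_comm.mp (hcop.coprime_dvd_right ⟨t, rfl⟩)
      exact (Nat.Prime.coprime_iff_not_dvd hp).mp hc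
    have haz : ((a : ℤ) : ZMod p) ≠ 0 := by
      intro h
      apply hpa
      have : ((a : ℕ) : ZMod p) = 0 := by exact_mod_cast h
      exact (ZMod.natCast_eq_zero_iff a p).mp this
    have hsq : legendreSym p (a : ℤ) ^ 2 = 1 := legendreSym.sq_one (p := p) haz
    -- Legendre symbol of n - a
    have hcast : ((n - a : ℕ) : ℤ) = (n : ℤ) - a := by
      push_cast [hlt.le]; ring
    have hleg : legendreSym p ((n - a : ℕ) : ℤ) = - legendreSym p (a : ℤ) := by
      rw [hcast]
      have h1 : legendreSym p ((n : ℤ) - a) = legendreSym p (-(a : ℤ)) := by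
        rw [legendreSym.mod p ((n : ℤ) - a), legendreSym.mod p (-(a : ℤ))]
        congr 1
        have h2 : (n : ℤ) - a = -(a : ℤ) + p * t := by
          rw [hn]; push_cast; ring
        rw [h2, Int.add_mul_emod_self_left]
      rw [h1, show (-(a : ℤ)) = (-1) * a by ring, legendreSym.mul,
        legendreSym.at_neg_one (by omega), ZMod.χ₄_nat_three_mod_four hp4]
      ring
    -- power of ζ
    have hpow : ζ ^ (n - a) = (ζ ^ a)⁻¹ := by
      have : ζ ^ (n - a) * ζ ^ a = 1 := by
        rw [← pow_add, Nat.sub_add_cancel hlt.le, hζ.pow_eq_one]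
      field_simp at this ⊢
      linear_combination this
    have hc0 : (legendreSym p (a : ℤ) : ℂ) ≠ 0 := by
      intro h
      have : legendreSym p (a : ℤ) = 0 := by exact_mod_cast h
      exact haz ((legendreSym.eq_zero_iff p _).mp this)
    have hcsq : (legendreSym p (a : ℤ) : ℂ) ^ 2 = 1 := by exact_mod_cast hsq
    simp only [hf, hσ, hleg, hpow]
    push_cast
    field_simp
    linear_combination hcsq
  -- finish
  rw [hroots, Multiset.map_map]
  calc s.val.map ((fun x => -1 / x) ∘ f)
      = s.val.map (f ∘ σ) := Multiset.map_congr rfl (fun a ha => key a ha)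
    _ = (s.val.map σ).map f := by rw [Multiset.map_map]
    _ = s.val.map f := by rw [hmapσ]
end

section
/- Let p be an odd prime and t an odd positive integer. Then Ψ_{p,t}(X)·Ψ_{p,t}(−X) = Φ_{pt}(X²), where Φ_{pt} denotes the pt-th cyclotomic polynomial (viewed in ℂ[X]) and Φ_{pt}(X²) denotes its composition with X². -/
open Polynomial

lemma cyclo_prod_aux {n : ℕ} (hn : 0 < n) {ζ' : ℂ} (h : IsPrimitiveRoot ζ' n) :
    cyclotomic n ℂ =
      ∏ a ∈ (Finset.range n).filter (fun a => Nat.Coprime a n), (X - C (ζ' ^ a)) := by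
  rw [cyclotomic_eq_prod_X_sub_primitiveRoots h]
  refine (Finset.prod_bij (fun a _ => ζ' ^ a) ?_ ?_ ?_ ?_).symm
  · intro a ha
    rw [Finset.mem_filter, Finset.mem_range] at ha
    exact (mem_primitiveRoots hn).2 (h.pow_of_coprime a ha.2)
  · intro a ha b hb hab
    rw [Finset.mem_filter, Finset.mem_range] at ha hb
    exact h.pow_inj ha.1 hb.1 hab
  · intro ξ hξ
    have : NeZero n := ⟨hn.ne'⟩
    obtain ⟨i, hi, hcop, hξi⟩ := h.isPrimitiveRoot_iff.1 ((mem_primitiveRoots hn).1 hξ)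
    exact ⟨i, Finset.mem_filter.2 ⟨Finset.mem_range.2 hi, hcop⟩, hξi⟩
  · intros; rfl

/-- Let p be an odd prime and t an odd positive integer. Then
Ψ_{p,t}(X)·Ψ_{p,t}(−X) = Φ_{pt}(X²), where Φ_{pt} is the pt-th cyclotomic polynomial. -/
theorem stmt_8 (p : ℕ) [Fact p.Prime] (hpodd : Odd p)
    (t : ℕ) (ht : Odd t) (ht0 : 0 < t)
    (ζ : ℂ) (hζ : IsPrimitiveRoot ζ (p * t)) :
    Psi p t ζ * (Psi p t ζ).comp (-X) = (cyclotomic (p * t) ℂ).comp (X ^ 2) := by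
  have hp := Fact.out (p := p.Prime)
  have hn : 0 < p * t := Nat.mul_pos hp.pos ht0
  have hnodd : Odd (p * t) := hpodd.mul ht
  have hcop2 : Nat.Coprime 2 (p * t) := by
    rw [Nat.prime_two.coprime_iff_not_dvd]
    exact fun h2 => (Nat.not_even_iff_odd.2 hnodd) (even_iff_two_dvd.2 h2)
  have hζ2 : IsPrimitiveRoot (ζ ^ 2) (p * t) := hζ.pow_of_coprime 2 hcop2
  set S := (Finset.range (p * t)).filter (fun a => Nat.Coprime a (p * t)) with hS
  have hcard : S.card = Nat.totient (p * t) := by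
    rw [Nat.totient]
    congr 1
    exact Finset.filter_congr (fun a _ => by simp [Nat.coprime_comm])
  have heven : Even S.card := by
    rw [hcard]
    refine Nat.totient_even ?_
    have hp3 : 2 < p := lt_of_le_of_ne hp.two_le
      (fun h => by rw [← h] at hpodd; exact (by decide : ¬ Odd 2) hpodd)
    calc 2 < p := hp3
      _ ≤ p * t := Nat.le_mul_of_pos_right p ht0
  rw [cyclo_prod_aux hn hζ2, prod_comp, Psi, prod_comp, ← Finset.prod_mul_distrib]
  have step : ∀ a ∈ S,
      (X - C ((legendreSym p (a : ℤ) : ℂ) * ζ ^ a)) *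
        (X - C ((legendreSym p (a : ℤ) : ℂ) * ζ ^ a)).comp (-X) =
      -((X - C ((ζ ^ 2) ^ a)).comp (X ^ 2)) := by
    intro a ha
    rw [Finset.mem_filter] at ha
    have hpa : ¬ (p : ℤ) ∣ (a : ℤ) := by
      rw [Int.natCast_dvd_natCast]
      intro hdvd
      have h1 : ¬ Nat.Coprime p (p * t) := by
        rw [Nat.Prime.coprime_iff_not_dvd hp]
        exact fun h => h (Dvd.intro t rfl)
      exact h1 (Nat.Coprime.coprime_dvd_left hdvd ha.2)
    have hsq : ((legendreSym p (a : ℤ) : ℂ)) ^ 2 = 1 := by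
      have h2 := legendreSym.sq_one (p := p) (a := (a : ℤ)) (by
        rwa [Ne, ZMod.intCast_zmod_eq_zero_iff_dvd])
      rw [← Int.cast_pow, h2, Int.cast_one]
    simp only [sub_comp, X_comp, C_comp]
    have h3 : ((legendreSym p (a : ℤ) : ℂ) * ζ ^ a) ^ 2 = (ζ ^ 2) ^ a := by
      rw [mul_pow, hsq, one_mul, ← pow_mul, ← pow_mul, mul_comm a 2]
    rw [← h3, C_pow]
    ring
  rw [Finset.prod_congr rfl step]
  have : ∀ a ∈ S, -((X - C ((ζ ^ 2) ^ a)).comp (X ^ 2)) =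
      (-1 : Polynomial ℂ) * ((X - C ((ζ ^ 2) ^ a)).comp (X ^ 2)) := fun a _ => by ring
  rw [Finset.prod_congr rfl this, Finset.prod_mul_distrib, Finset.prod_const,
    heven.neg_one_pow, one_mul]
end

section
/- Let p be an odd prime, t an odd positive integer, and √(p*) a fixed complex square root of p* = (−1)^{(p−1)/2}·p. Then the polynomial Ψ_{p,t}^{[√(p*)]}(X) := (√(p*))^{φ(pt)}·Ψ_{p,t}(X/√(p*)) has rational coefficients, and, regarded as an element of ℚ[X], it is irreducible over ℚ. -/
open Polynomial

set_option maxHeartbeats 2000000 in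
open IntermediateField in
/-- Let p be an odd prime, t an odd positive integer, and √(p*) a fixed complex
square root of p* = (−1)^{(p−1)/2}·p. Then the polynomial
Ψ_{p,t}^{[√(p*)]}(X) := (√(p*))^{φ(pt)}·Ψ_{p,t}(X/√(p*)) has rational coefficients, and,
regarded as an element of ℚ[X], it is irreducible over ℚ. -/
theorem stmt_11 (p : ℕ) [Fact p.Prime] (hpodd : Odd p)
    (t : ℕ) (ht : Odd t) (ht0 : 0 < t)
    (ζ : ℂ) (hζ : IsPrimitiveRoot ζ (p * t))
    (sp : ℂ) (hsp : sp ^ 2 = ((((-1 : ℤ) ^ ((p - 1) / 2) * p : ℤ) : ℂ))) :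
    ∃ Q : Polynomial ℚ,
      Q.map (algebraMap ℚ ℂ) =
        C (sp ^ Nat.totient (p * t)) * (Psi p t ζ).comp (C sp⁻¹ * X) ∧
      Irreducible Q := by
  classical
  have hp : p.Prime := Fact.out
  have hp2 : p ≠ 2 := by rintro rfl; exact (by decide : ¬ Odd 2) hpodd
  have hn0 : 0 < p * t := Nat.mul_pos hp.pos ht0
  have hnodd : Odd (p * t) := hpodd.mul ht
  have hζ0 : ζ ≠ 0 := by
    intro h
    exact one_ne_zero ((h ▸ hζ.pow_eq_one).symm.trans (zero_pow hn0.ne'))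
  have hsp0 : sp ≠ 0 := by
    intro h
    rw [h, zero_pow two_ne_zero] at hsp
    have : ((p : ℂ)) ≠ 0 := Nat.cast_ne_zero.mpr hp.pos.ne'
    apply this
    push_cast at hsp
    rcases mul_eq_zero.mp hsp.symm with h1 | h2
    · exact absurd h1 (pow_ne_zero _ (by norm_num))
    · exact h2
  -- the set of exponents
  set S : Finset ℕ := (Finset.range (p * t)).filter (fun a => Nat.Coprime a (p * t)) with hS
  have hScard : S.card = Nat.totient (p * t) := by
    rw [Nat.totient_eq_card_coprime]
    congr 1
    apply Finset.filter_congr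
    intro a _
    simp [Nat.coprime_comm]
  -- power cancellation for ζ
  have hmod : ∀ i j : ℕ, ζ ^ i = ζ ^ j → i ≡ j [MOD (p * t)] := by
    have key : ∀ i j : ℕ, i ≤ j → ζ ^ i = ζ ^ j → (p * t) ∣ (j - i) := by
      intro i j hij h
      have : ζ ^ i * ζ ^ (j - i) = ζ ^ i * 1 := by
        rw [mul_one, ← pow_add, Nat.add_sub_cancel' hij, h]
      exact (hζ.pow_eq_one_iff_dvd _).mp (mul_left_cancel₀ (pow_ne_zero _ hζ0) this)
    intro i j h
    rcases le_total i j with hij | hij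
    · exact (Nat.modEq_iff_dvd' hij).mpr (key i j hij h)
    · exact ((Nat.modEq_iff_dvd' hij).mpr (key j i hij h.symm)).symm
  have hpowinj : ∀ a ∈ S, ∀ b ∈ S, ζ ^ a = ζ ^ b → a = b := by
    intro a ha b hb h
    have ha' := Finset.mem_range.mp (Finset.mem_filter.mp ha).1
    have hb' := Finset.mem_range.mp (Finset.mem_filter.mp hb).1
    have := hmod a b h
    rwa [Nat.ModEq, Nat.mod_eq_of_lt ha', Nat.mod_eq_of_lt hb'] at this
  -- the primitive p-th root of unity and characters mod p
  have hζp : IsPrimitiveRoot (ζ ^ t) p := hζ.pow hn0 (mul_comm p t)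
  set ψ : AddChar (ZMod p) ℂ := AddChar.zmodChar p hζp.pow_eq_one with hψdef
  have hψprim : ψ.IsPrimitive := AddChar.zmodChar_primitive_of_primitive_root p hζp
  set χ : MulChar (ZMod p) ℂ := (quadraticChar (ZMod p)).ringHomComp (Int.castRingHom ℂ) with hχdef
  have hpchar : ringChar (ZMod p) ≠ 2 := (ZMod.ringChar_zmod_n p).substr hp2
  have hχquad : χ.IsQuadratic := (quadraticChar_isQuadratic (ZMod p)).comp _
  have hχne : χ ≠ 1 :=
    (MulChar.ringHomComp_ne_one_iff (RingHom.injective_int _)).mpr (quadraticChar_ne_one hpchar)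
  have hχval : ∀ a : ZMod p, χ a = ((quadraticChar (ZMod p) a : ℤ) : ℂ) := fun a => rfl
  set g : ℂ := gaussSum χ ψ with hgdef
  have hg2 : g ^ 2 = sp ^ 2 := by
    rw [hgdef, gaussSum_sq hχne hχquad hψprim, hsp]
    rw [hχval, quadraticChar_neg_one hpchar, ZMod.card p,
      ZMod.χ₄_eq_neg_one_pow (Nat.odd_iff.mp hpodd)]
    have : p / 2 = (p - 1) / 2 := by obtain ⟨m, hm⟩ := hpodd; omega
    rw [this]
    push_cast
    ring
  have hspg : sp = g ∨ sp = -g := by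
    have h0 : (sp - g) * (sp + g) = 0 := by ring_nf; rw [← hg2]; ring
    rcases mul_eq_zero.mp h0 with h | h
    · exact Or.inl (by linear_combination h)
    · exact Or.inr (by linear_combination h)
  -- the cyclotomic field ℚ(ζ) inside ℂ
  have hζint : IsIntegral ℚ ζ :=
    ⟨X ^ (p * t) - C 1, monic_X_pow_sub_C 1 hn0.ne', by simp [hζ.pow_eq_one]⟩
  haveI : FiniteDimensional ℚ ℚ⟮ζ⟯ := adjoin.finiteDimensional hζint
  set ζK : ℚ⟮ζ⟯ := AdjoinSimple.gen ℚ ζ with hζKdef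
  have hmapζ : algebraMap ℚ⟮ζ⟯ ℂ ζK = ζ := AdjoinSimple.algebraMap_gen ℚ ζ
  -- the Gauss sum as an element of ℚ(ζ)
  set gK : ℚ⟮ζ⟯ := ∑ b : ZMod p, ((quadraticChar (ZMod p) b : ℤ) : ℚ⟮ζ⟯) * ζK ^ (t * b.val)
    with hgKdef
  have hgKmap : algebraMap ℚ⟮ζ⟯ ℂ gK = g := by
    rw [hgKdef, map_sum, hgdef, gaussSum]
    refine Finset.sum_congr rfl fun b _ => ?_
    rw [map_mul, map_pow, hmapζ, map_intCast, hχval, hψdef, AddChar.zmodChar_apply, pow_mul]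
  set spK : ℚ⟮ζ⟯ := if sp = g then gK else -gK with hspKdef
  have hspKmap : algebraMap ℚ⟮ζ⟯ ℂ spK = sp := by
    by_cases hc : sp = g
    · rw [hspKdef, if_pos hc, hgKmap, hc]
    · have h : sp = -g := hspg.resolve_left hc
      rw [hspKdef, if_neg hc, map_neg, hgKmap, h]
  set αK : ℚ⟮ζ⟯ := spK * ζK with hαKdef
  set M : Polynomial ℚ := minpoly ℚ αK with hMdef
  have hαint : IsIntegral ℚ αK := IsIntegral.of_finite ℚ αK
  have hMmonic : M.Monic := minpoly.monic hαint
  have hMirr : Irreducible M := minpoly.irreducible hαint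
  have hMdeg : M.natDegree ≤ Nat.totient (p * t) := by
    have h1 := minpoly.natDegree_le (A := ℚ) αK
    rwa [IntermediateField.adjoin.finrank hζint, ← cyclotomic_eq_minpoly_rat hζ hn0,
      natDegree_cyclotomic] at h1
  -- conjugates of αK
  set pb := IntermediateField.adjoin.powerBasis hζint with hpbdef
  have hroots : ∀ a ∈ S,
      Polynomial.aeval (sp * ((legendreSym p (a : ℤ) : ℂ) * ζ ^ a)) M = 0 := by
    intro a haS
    obtain ⟨haR, hacop⟩ := Finset.mem_filter.mp haS
    have hap : a.Coprime p := Nat.Coprime.coprime_dvd_right (dvd_mul_right p t) hacop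
    have hζa : IsPrimitiveRoot (ζ ^ a) (p * t) := hζ.pow_of_coprime a hacop
    have haev : Polynomial.aeval (ζ ^ a) (minpoly ℚ pb.gen) = 0 := by
      rw [hpbdef, IntermediateField.adjoin.powerBasis_gen]
      erw [minpoly_gen ℚ ζ]
      rw [← cyclotomic_eq_minpoly_rat hζ hn0, cyclotomic_eq_minpoly_rat hζa hn0]
      exact minpoly.aeval ℚ (ζ ^ a)
    set σ : ℚ⟮ζ⟯ →ₐ[ℚ] ℂ := pb.lift (ζ ^ a) haev with hσdef
    have hσζ : σ ζK = ζ ^ a := by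
      rw [hζKdef, ← IntermediateField.adjoin.powerBasis_gen hζint, hσdef, ← hpbdef]
      exact pb.lift_gen _ haev
    set u : (ZMod p)ˣ := ZMod.unitOfCoprime a hap with hudef
    have hu : ((u : ZMod p)) = ((a : ℕ) : ZMod p) := ZMod.coe_unitOfCoprime a hap
    have hL : χ ((a : ℕ) : ZMod p) = ((legendreSym p (a : ℤ) : ℤ) : ℂ) := by
      rw [hχval, legendreSym]
      norm_cast
    have hL2 : χ ((a : ℕ) : ZMod p) * χ ((a : ℕ) : ZMod p) = 1 := by
      have ha0 : (((a : ℤ) : ZMod p)) ≠ 0 := by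
        push_cast
        rw [← hu]
        exact Units.ne_zero u
      have := legendreSym.sq_one (p := p) ha0
      rw [hL, ← Int.cast_mul, ← sq, this, Int.cast_one]
    have hσg : σ gK = χ ((a : ℕ) : ZMod p) * g := by
      have h1 : σ gK = gaussSum χ (AddChar.mulShift ψ (u : ZMod p)) := by
        rw [hgKdef, map_sum, gaussSum]
        refine Finset.sum_congr rfl fun b _ => ?_
        rw [map_mul, map_pow, hσζ, map_intCast, ← hχval]
        congr 1
        rw [AddChar.mulShift_apply]
        have h2 : ((u : ZMod p) * b) = ((a * b.val : ℕ) : ZMod p) := by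
          rw [hu]
          push_cast [ZMod.natCast_val, ZMod.cast_id]
          try rfl
        rw [h2, hψdef, AddChar.zmodChar_apply', ← pow_mul, ← pow_mul]
        ring_nf
      have h3 := gaussSum_mulShift χ ψ u
      rw [← hgdef] at h3
      rw [h1]
      calc gaussSum χ (AddChar.mulShift ψ (u : ZMod p))
          = (χ ((a:ℕ) : ZMod p) * χ ((a:ℕ) : ZMod p)) *
              gaussSum χ (AddChar.mulShift ψ (u : ZMod p)) := by rw [hL2, one_mul]
        _ = χ ((a:ℕ) : ZMod p) * g := by
              rw [mul_assoc]
              congr 1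
    have hσsp : σ spK = χ ((a : ℕ) : ZMod p) * sp := by
      by_cases hc : sp = g
      · rw [hspKdef, if_pos hc, hσg, hc]
      · have h : sp = -g := hspg.resolve_left hc
        rw [hspKdef, if_neg hc, map_neg, hσg, h]
        ring
    have hσα : σ αK = sp * ((legendreSym p (a : ℤ) : ℂ) * ζ ^ a) := by
      rw [hαKdef, map_mul, hσsp, hσζ, hL]
      push_cast
      ring
    rw [← hσα, Polynomial.aeval_algHom_apply, hMdef, minpoly.aeval, map_zero]
  -- the roots are pairwise distinct
  set r : ℕ → ℂ := fun a => sp * ((legendreSym p (a : ℤ) : ℂ) * ζ ^ a) with hrdef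
  have key0 : ∀ a : ℕ, a.Coprime p → (legendreSym p (a : ℤ)) ^ 2 = 1 := by
    intro a hap
    apply legendreSym.sq_one (p := p)
    have h0 : ((a : ℕ) : ZMod p) ≠ 0 := by
      rw [← ZMod.coe_unitOfCoprime a hap]; exact Units.ne_zero _
    exact_mod_cast h0
  have hrinj : ∀ a ∈ S, ∀ b ∈ S, r a = r b → a = b := by
    intro a ha b hb hr
    obtain ⟨haR, hacop⟩ := Finset.mem_filter.mp ha
    obtain ⟨hbR, hbcop⟩ := Finset.mem_filter.mp hb
    have h1 : (legendreSym p (a : ℤ) : ℂ) * ζ ^ a = (legendreSym p (b : ℤ) : ℂ) * ζ ^ b :=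
      mul_left_cancel₀ hsp0 hr
    have ha2 : ((legendreSym p (a : ℤ) : ℂ)) ^ 2 = 1 := by
      rw [← Int.cast_pow, key0 a (Nat.Coprime.coprime_dvd_right (dvd_mul_right p t) hacop),
        Int.cast_one]
    have hb2 : ((legendreSym p (b : ℤ) : ℂ)) ^ 2 = 1 := by
      rw [← Int.cast_pow, key0 b (Nat.Coprime.coprime_dvd_right (dvd_mul_right p t) hbcop),
        Int.cast_one]
    have h2 : ζ ^ (a * 2) = ζ ^ (b * 2) := by
      have := congrArg (· ^ 2) h1
      simp only [mul_pow, ← pow_mul] at this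
      rwa [ha2, hb2, one_mul, one_mul] at this
    have h3 := Nat.ModEq.cancel_right_of_coprime
      ((Nat.coprime_comm.mp (Nat.coprime_two_left.mpr hnodd)) : Nat.gcd (p*t) 2 = 1) (hmod _ _ h2)
    apply hpowinj a ha b hb
    congr 1
    rwa [Nat.ModEq, Nat.mod_eq_of_lt (Finset.mem_range.mp haR),
      Nat.mod_eq_of_lt (Finset.mem_range.mp hbR)] at h3
  -- the product of the linear factors divides M over ℂ
  set P : Polynomial ℂ := ∏ a ∈ S, (X - C (r a)) with hPdef
  have hPmonic : P.Monic := monic_prod_of_monic _ _ fun a _ => monic_X_sub_C _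
  have hPd : P ∣ M.map (algebraMap ℚ ℂ) := by
    apply Finset.prod_dvd_of_coprime
    · intro a ha b hb hab
      exact isCoprime_X_sub_C_of_isUnit_sub
        (IsUnit.mk0 _ (sub_ne_zero_of_ne fun h => hab (hrinj a ha b hb h)))
    · intro a ha
      rw [dvd_iff_isRoot, IsRoot.def, eval_map, ← aeval_def]
      exact hroots a ha
  have hMmap0 : M.map (algebraMap ℚ ℂ) ≠ 0 := (hMmonic.map _).ne_zero
  have hPdeg : P.natDegree = Nat.totient (p * t) := by
    rw [hPdef, natDegree_prod _ _ (fun a _ => X_sub_C_ne_zero (r a))]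
    simp only [natDegree_X_sub_C]
    rw [Finset.sum_const, smul_eq_mul, mul_one, hScard]
  have hdeg_le : (M.map (algebraMap ℚ ℂ)).natDegree ≤ Nat.totient (p * t) := by
    rw [natDegree_map]; exact hMdeg
  have hdeg_ge : Nat.totient (p * t) ≤ (M.map (algebraMap ℚ ℂ)).natDegree :=
    hPdeg ▸ natDegree_le_of_dvd hPd hMmap0
  have hPM : P = M.map (algebraMap ℚ ℂ) := by
    obtain ⟨c, hc⟩ := hPd
    have hc0 : c ≠ 0 := by rintro rfl; rw [mul_zero] at hc; exact hMmap0 hc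
    have hcdeg : c.natDegree = 0 := by
      have h1 : (M.map (algebraMap ℚ ℂ)).natDegree = P.natDegree + c.natDegree := by
        rw [hc, natDegree_mul hPmonic.ne_zero hc0]
      omega
    have hlc : c.leadingCoeff = 1 := by
      have h2 := congrArg leadingCoeff hc
      rwa [(hMmonic.map (algebraMap ℚ ℂ)).leadingCoeff, leadingCoeff_mul,
        hPmonic.leadingCoeff, one_mul, eq_comm] at h2
    have hc1 : c = 1 := by
      rw [eq_C_of_natDegree_eq_zero hcdeg,
        show c.coeff 0 = c.leadingCoeff by rw [Polynomial.leadingCoeff, hcdeg], hlc, C_1]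
    rw [hc, hc1, mul_one]
  -- identify the right-hand side with P
  have hRHS : C (sp ^ Nat.totient (p * t)) * (Psi p t ζ).comp (C sp⁻¹ * X) = P := by
    rw [Psi, prod_comp, ← hS, ← hScard, C_pow, ← Finset.prod_const, ← Finset.prod_mul_distrib,
      hPdef]
    refine Finset.prod_congr rfl fun a ha => ?_
    rw [sub_comp, X_comp, C_comp, mul_sub, ← mul_assoc, ← C_mul, mul_inv_cancel₀ hsp0, C_1,
      one_mul, ← C_mul, hrdef]
  exact ⟨M, (hRHS.trans hPM).symm, hMirr⟩
end

section
/- Let ζ be any primitive 5th root of unity in ℂ. Then there exists ε ∈ {1, −1} such that ∏_{a ∈ (ℤ/5ℤ)ˣ} (X − (a|5)·ζ^a) = X⁴ + ε√5·X³ + 3X² + ε√5·X + 1, where √5 denotes the positive real square root of 5. -/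
open Polynomial

instance : Fact (Nat.Prime 5) := ⟨by norm_num⟩

/-- Let ζ be any primitive 5th root of unity in ℂ. Then there exists
ε ∈ {1, −1} such that ∏_{a ∈ (ℤ/5ℤ)ˣ} (X − (a|5)·ζ^a)
= X⁴ + ε√5·X³ + 3X² + ε√5·X + 1, where √5 is the positive real square root of 5. -/
theorem stmt_12 (ζ : ℂ) (hζ : IsPrimitiveRoot ζ 5) :
    ∃ ε : ℂ, (ε = 1 ∨ ε = -1) ∧
      ∏ a ∈ (Finset.range 5).filter (fun a => Nat.Coprime a 5),
        (X - C ((legendreSym 5 (a : ℤ) : ℂ) * ζ ^ a)) =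
      X ^ 4 + C (ε * (Real.sqrt 5 : ℂ)) * X ^ 3 + C 3 * X ^ 2 +
        C (ε * (Real.sqrt 5 : ℂ)) * X + 1 := by
  have h5 : ζ ^ 5 = 1 := hζ.pow_eq_one
  have hsum : ζ ^ 4 + ζ ^ 3 + ζ ^ 2 + ζ + 1 = 0 := by
    have := hζ.geom_sum_eq_zero (by norm_num)
    simp [Finset.sum_range_succ] at this
    linear_combination this
  set c : ℂ := ζ ^ 2 + ζ ^ 3 - ζ - ζ ^ 4 with hc
  have hsq : ((Real.sqrt 5 : ℝ) : ℂ) ^ 2 = 5 := by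
    exact mod_cast Real.sq_sqrt (by norm_num)
  have hc2 : c ^ 2 = 5 := by
    rw [hc]
    linear_combination (ζ^3 - 2*ζ^2 - ζ + 4) * h5 - hsum
  have key : ∏ a ∈ (Finset.range 5).filter (fun a => Nat.Coprime a 5),
        (X - C ((legendreSym 5 (a : ℤ) : ℂ) * ζ ^ a)) =
      X ^ 4 + C c * X ^ 3 + C 3 * X ^ 2 + C c * X + 1 := by
    rw [show (Finset.range 5).filter (fun a => Nat.Coprime a 5) = {1, 2, 3, 4} from by decide,
      Finset.prod_insert (by decide), Finset.prod_insert (by decide),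
      Finset.prod_insert (by decide), Finset.prod_singleton]
    have l1 : legendreSym 5 ((1 : ℕ) : ℤ) = 1 := by decide
    have l2 : legendreSym 5 ((2 : ℕ) : ℤ) = -1 := by decide
    have l3 : legendreSym 5 ((3 : ℕ) : ℤ) = -1 := by decide
    have l4 : legendreSym 5 ((4 : ℕ) : ℤ) = 1 := by decide
    rw [l1, l2, l3, l4]
    apply Polynomial.funext
    intro x
    simp only [eval_mul, eval_sub, eval_add, eval_pow, eval_X, eval_C, eval_one, hc]
    push_cast
    linear_combination (x^2 * (2 - ζ - ζ^2) + x * (ζ^2 + ζ^3 - ζ - ζ^4) + ζ^5 + 1) * h5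
      - x^2 * hsum
  have hcases : c = ((Real.sqrt 5 : ℝ) : ℂ) ∨ c = -((Real.sqrt 5 : ℝ) : ℂ) := by
    have h0 : (c - ((Real.sqrt 5 : ℝ) : ℂ)) * (c + ((Real.sqrt 5 : ℝ) : ℂ)) = 0 := by
      linear_combination hc2 - hsq
    rcases mul_eq_zero.mp h0 with h | h
    · left; linear_combination h
    · right; linear_combination h
  rcases hcases with h | h
  · exact ⟨1, Or.inl rfl, by rw [key, h]; ring_nf⟩
  · exact ⟨-1, Or.inr rfl, by rw [key, h]; ring_nf⟩
end

section
/- Let p be a prime with p > 2 such that 2p + 1 is not prime. Then there is no positive integer n with φ(n) = p, and there is no positive integer n with φ(n) = 2p. -/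
/-- Let p be a prime with p > 2 such that 2p + 1 is not prime. Then there is no
positive integer n with φ(n) = p, and there is no positive integer n with φ(n) = 2p. -/
theorem stmt_17 (p : ℕ) (hp : p.Prime) (hp2 : 2 < p) (h : ¬ (2 * p + 1).Prime) :
    (¬ ∃ n : ℕ, 0 < n ∧ Nat.totient n = p) ∧
    (¬ ∃ n : ℕ, 0 < n ∧ Nat.totient n = 2 * p) := by
  have hpodd : Odd p := hp.odd_of_ne_two (by omega)
  constructor
  · rintro ⟨n, hn, hφ⟩
    rcases lt_or_ge n 3 with h3 | h3
    · interval_cases n <;> simp_all <;> omega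
    · have he := Nat.totient_even h3
      rw [hφ] at he
      exact (Nat.not_even_iff_odd.mpr hpodd) he
  · rintro ⟨n, hn, hφ⟩
    have hp3 : p ≠ 3 := by rintro rfl; exact h (by norm_num)
    -- every prime factor of n is 2 or 3
    have key : ∀ q, q.Prime → q ∣ n → q = 2 ∨ q = 3 := by
      intro q hq hqn
      have hq2 := hq.two_le
      have hdvd : (q - 1) ∣ 2 * p := by
        rw [← hφ, ← Nat.totient_prime hq]
        exact Nat.totient_dvd_of_dvd hqn
      by_cases hpd : p ∣ (q - 1)
      · obtain ⟨e, he⟩ := hpd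
        have hed : e ∣ 2 := by
          rcases hdvd with ⟨c, hc⟩
          refine ⟨c, ?_⟩
          have hp0 : 0 < p := hp.pos
          rw [he, mul_assoc] at hc
          rw [mul_comm 2 p] at hc
          exact Nat.eq_of_mul_eq_mul_left hp0 hc
        have he2 : e ≤ 2 := Nat.le_of_dvd (by norm_num) hed
        interval_cases e
        · omega
        · -- q = p + 1, even prime > 2: contradiction
          have hqe : Even q := by
            obtain ⟨k, hk⟩ := hpodd
            exact ⟨k + 1, by omega⟩
          have := (Nat.Prime.even_iff hq).mp hqe
          omega
        · exact absurd (show (2 * p + 1).Prime by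
            have : q = 2 * p + 1 := by omega
            rwa [← this]) h
      · have hcop : Nat.Coprime (q - 1) p := ((hp.coprime_iff_not_dvd).mpr hpd).symm
        have hd2 : (q - 1) ∣ 2 := hcop.dvd_of_dvd_mul_right hdvd
        have : q - 1 ≤ 2 := Nat.le_of_dvd (by norm_num) hd2
        have : q ≤ 3 := by omega
        interval_cases q
        · left; rfl
        · right; rfl
    -- 9 does not divide n
    have h9 : ¬ (3 ^ 2 ∣ n) := by
      intro h9
      have : Nat.totient (3 ^ 2) ∣ Nat.totient n := Nat.totient_dvd_of_dvd h9
      rw [hφ] at this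
      norm_num at this
      have h3p : (3 : ℕ) ∣ 2 * p := dvd_trans ⟨2, rfl⟩ this
      have := (Nat.Prime.dvd_mul (by norm_num)).mp h3p
      rcases this with h' | h'
      · norm_num at h'
      · exact hp3 ((Nat.prime_dvd_prime_iff_eq (by norm_num) hp).mp h').symm
    -- n = 2^a * 3^c
    set a := n.factorization 2 with ha
    set c := n.factorization 3 with hc
    clear_value a c
    have hc1 : c ≤ 1 := by
      by_contra hc1
      push_neg at hc1
      rw [hc] at hc1
      exact h9 ((Nat.Prime.pow_dvd_iff_le_factorization (by norm_num) hn.ne').mpr (by omega : 2 ≤ n.factorization 3))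
    have hsupp : n.factorization.support ⊆ {2, 3} := by
      intro q hq
      rw [Nat.support_factorization] at hq
      rcases key q (Nat.prime_of_mem_primeFactors hq) (Nat.dvd_of_mem_primeFactors hq) with h' | h' <;> simp [h']
    have hne : n = 2 ^ a * 3 ^ c := by
      conv_lhs => rw [← Nat.factorization_prod_pow_eq_self hn.ne']
      rw [Finsupp.prod_of_support_subset _ hsupp _ (by intros; simp)]
      rw [Finset.prod_pair (by norm_num), ha, hc]
    have hcop23 : Nat.Coprime (2 ^ a) (3 ^ c) := Nat.Coprime.pow _ _ (by norm_num)
    have hφn : Nat.totient n = Nat.totient (2 ^ a) * Nat.totient (3 ^ c) := by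
      rw [hne, Nat.totient_mul hcop23]
    -- totient n is a power of 2
    have hpow : ∃ s, Nat.totient n = 2 ^ s := by
      interval_cases c
      · rcases Nat.eq_zero_or_pos a with rfl | ha0
        · exact ⟨0, by simp [hφn]⟩
        · exact ⟨a - 1, by rw [hφn, Nat.totient_prime_pow Nat.prime_two ha0]; simp⟩
      · rcases Nat.eq_zero_or_pos a with rfl | ha0
        · exact ⟨1, by simp [hφn, Nat.totient_prime (by norm_num : Nat.Prime 3)]⟩
        · refine ⟨a, ?_⟩
          rw [hφn, Nat.totient_prime_pow Nat.prime_two ha0]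
          simp [Nat.totient_prime (by norm_num : Nat.Prime 3)]
          rw [← pow_succ]
          congr 1
          omega
    obtain ⟨s, hs⟩ := hpow
    have hpdvd : p ∣ 2 ^ s := by rw [← hs, hφ]; exact ⟨2, by ring⟩
    have := hp.dvd_of_dvd_pow hpdvd
    have := Nat.le_of_dvd (by norm_num) this
    omega
end

section
/- The set of positive integers g such that no positive integer n satisfies φ(n) = g and no positive integer n satisfies φ(n) = 2g is infinite. -/
private lemma pow25mod3 (k : ℕ) : (5:ℕ) ^ (2 * k) % 3 = 1 := by
  induction k with
  | zero => rfl
  | succ k ih =>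
    have h2 : 2 * (k+1) = 2*k + 2 := by ring
    rw [h2, pow_add, Nat.mul_mod, ih]; rfl

private lemma key (k : ℕ) (hk : 1 ≤ k) (n : ℕ) (hn : 0 < n) :
    n.totient ≠ 2 * 5 ^ (2 * k) := by
  intro h
  set N := 2 * 5 ^ (2 * k) with hN
  have h5odd : Odd ((5:ℕ) ^ (2*k)) := Odd.pow (by decide)
  have hN4 : ¬ (4 ∣ N) := by
    obtain ⟨c, hc⟩ := h5odd
    rw [hN, hc]; omega
  -- at most one odd prime divides n
  have uniq : ∀ p q : ℕ, p.Prime → q.Prime → p ≠ 2 → q ≠ 2 → p ∣ n → q ∣ n → p = q := by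
    intro p q hp hq hp2 hq2 hpn hqn
    by_contra hne
    have hcop : Nat.Coprime p q := (Nat.coprime_primes hp hq).2 hne
    have hpq : p * q ∣ n := Nat.Coprime.mul_dvd_of_dvd_of_dvd hcop hpn hqn
    have h4 : 4 ∣ (p * q).totient := by
      rw [Nat.totient_mul hcop, Nat.totient_prime hp, Nat.totient_prime hq]
      obtain ⟨x, hx⟩ := hp.even_sub_one hp2
      obtain ⟨y, hy⟩ := hq.even_sub_one hq2
      exact ⟨x * y, by rw [hx, hy]; ring⟩
    exact hN4 (h ▸ dvd_trans h4 (Nat.totient_dvd_of_dvd hpq))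
  -- decompose n = 2^a * m
  set a := n.factorization 2 with ha
  set m := n / 2 ^ a with hm
  have hdecomp : 2 ^ a * m = n := Nat.ordProj_mul_ordCompl_eq_self n 2
  have hmpos : 0 < m := Nat.ordCompl_pos 2 hn.ne'
  have hmodd : ¬ 2 ∣ m := Nat.not_dvd_ordCompl Nat.prime_two hn.ne'
  have hcop2m : Nat.Coprime (2 ^ a) m :=
    Nat.Coprime.pow_left a (Nat.coprime_ordCompl Nat.prime_two hn.ne')
  have htot : (2:ℕ).totient ^ 0 = 1 := rfl
  have hsplit : (2 ^ a).totient * m.totient = N := by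
    rw [← Nat.totient_mul hcop2m, hdecomp, h]
  rcases eq_or_lt_of_le (Nat.one_le_iff_ne_zero.mpr hmpos.ne') with hm1 | hm2
  · -- m = 1, n = 2^a : power of two, but 5 ∣ N
    have hm1 : m = 1 := hm1.symm
    have h5N : (5:ℕ) ∣ N := by
      rw [hN]
      exact Dvd.dvd.mul_left (dvd_pow_self 5 (by omega)) 2
    rw [hm1, Nat.totient_one, mul_one] at hsplit
    rcases Nat.eq_zero_or_pos a with ha0 | hapos
    · rw [ha0] at hsplit; simp at hsplit
      rw [← hsplit] at h5N; omega
    · rw [Nat.totient_prime_pow Nat.prime_two hapos] at hsplit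
      simp at hsplit
      rw [← hsplit] at h5N
      have h52 : (5:ℕ) = 2 := by
        have := (Nat.prime_dvd_prime_iff_eq (by norm_num) Nat.prime_two).mp
          (Nat.Prime.dvd_of_dvd_pow (p := 5) (by norm_num) h5N)
        exact this
      norm_num at h52
  · -- m > 1 : m = p ^ e for an odd prime p
    obtain ⟨p, hp, hpm⟩ := Nat.exists_prime_and_dvd (by omega : m ≠ 1)
    have hp2 : p ≠ 2 := fun hpe => hmodd (hpe ▸ hpm)
    have hmdvdn : m ∣ n := Nat.ordCompl_dvd n 2
    have hq : ∀ {d : ℕ}, d.Prime → d ∣ m → d = p := by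
      intro d hd hdm
      have hd2 : d ≠ 2 := fun hde => hmodd (hde ▸ hdm)
      exact uniq d p hd hp hd2 hp2 (hdm.trans hmdvdn) (hpm.trans hmdvdn)
    have hme : m = p ^ m.primeFactorsList.length :=
      Nat.eq_prime_pow_of_unique_prime_dvd hmpos.ne' hq
    set e := m.primeFactorsList.length with he
    have hepos : 0 < e := by
      rcases Nat.eq_zero_or_pos e with h0 | h1
      · rw [h0, pow_zero] at hme; omega
      · exact h1
    -- compute totient of m
    have htm : m.totient = p ^ (e - 1) * (p - 1) := by
      rw [hme, Nat.totient_prime_pow hp hepos]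
    -- a ≤ 1 : otherwise 4 ∣ N
    have hppos := hp.two_le
    have ha1 : (2 ^ a).totient = 1 := by
      by_contra hne
      have ha2 : 2 ≤ a := by
        rcases Nat.lt_or_ge a 2 with h' | h'
        · exfalso; interval_cases a
          · exact hne (by decide)
          · exact hne (by decide)
        · exact h'
      have h2t : 2 ∣ (2 ^ a).totient := by
        rw [Nat.totient_prime_pow Nat.prime_two (by omega)]
        exact Dvd.dvd.mul_right (dvd_pow_self 2 (by omega)) _
      have h2m : 2 ∣ m.totient := by
        rw [htm]
        obtain ⟨x, hx⟩ := hp.even_sub_one hp2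
        exact ⟨p ^ (e-1) * x, by rw [hx]; ring⟩
      exact hN4 (hsplit ▸ mul_dvd_mul h2t h2m)
    rw [ha1, one_mul] at hsplit
    -- so p^(e-1) * (p-1) = N
    rw [htm] at hsplit
    rcases Nat.lt_or_ge e 2 with he1 | he2
    · -- e = 1 : p - 1 = N, so p = N + 1 divisible by 3
      have he1 : e = 1 := by omega
      rw [he1] at hsplit; simp at hsplit
      have hpval : p = N + 1 := by omega
      have h3p : 3 ∣ p := by
        have := pow25mod3 k
        rw [hpval, hN]; omega
      have hp3 : p = 3 := ((Nat.prime_dvd_prime_iff_eq (by norm_num) hp).mp h3p).symm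
      rw [hp3, hN] at hpval
      have : (5:ℕ) ^ (2 * k) ≥ 5 := by
        calc (5:ℕ)^(2*k) ≥ 5 ^ 1 := Nat.pow_le_pow_right (by norm_num) (by omega)
        _ = 5 := pow_one 5
      omega
    · -- e ≥ 2 : p ∣ N so p = 5, then 4 ∣ N
      have hpN : p ∣ N := by
        rw [← hsplit]
        exact Dvd.dvd.mul_right (dvd_pow_self p (by omega)) _
      have hp5 : p = 5 := by
        rw [hN] at hpN
        rcases (Nat.Prime.dvd_mul hp).mp hpN with h' | h'
        · exact absurd ((Nat.prime_dvd_prime_iff_eq hp Nat.prime_two).mp h') hp2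
        · exact (Nat.prime_dvd_prime_iff_eq hp (by norm_num)).mp (hp.dvd_of_dvd_pow h')
      apply hN4
      rw [← hsplit, hp5]
      exact Dvd.dvd.mul_left (by norm_num : (4:ℕ) ∣ 5 - 1) _

/-- The set of positive integers g such that no positive integer n satisfies
φ(n) = g and no positive integer n satisfies φ(n) = 2g is infinite. -/
theorem stmt_18 :
    {g : ℕ | 0 < g ∧ (¬ ∃ n : ℕ, 0 < n ∧ Nat.totient n = g) ∧
      (¬ ∃ n : ℕ, 0 < n ∧ Nat.totient n = 2 * g)}.Infinite := by
  apply Set.infinite_of_injective_forall_mem (f := fun k : ℕ => 5 ^ (2 * (k + 1)))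
  · intro i j hij
    simpa using Nat.pow_right_injective (by norm_num) hij
  · intro k
    refine ⟨pow_pos (by norm_num) _, ?_, ?_⟩
    · rintro ⟨n, hn, hφ⟩
      have hodd : Odd ((5:ℕ) ^ (2 * (k + 1))) := Odd.pow (by decide)
      have hbig : 25 ≤ (5:ℕ) ^ (2 * (k + 1)) := by
        calc (25:ℕ) = 5 ^ 2 := by norm_num
        _ ≤ 5 ^ (2 * (k+1)) := Nat.pow_le_pow_right (by norm_num) (by omega)
      rcases Nat.lt_or_ge n 3 with h3 | h3
      · have h1 : Nat.totient n = 1 := by interval_cases n <;> rfl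
        omega
      · have := Nat.totient_even h3
        rw [hφ] at this
        exact (Nat.not_even_iff_odd.mpr hodd) this
    · rintro ⟨n, hn, hφ⟩
      exact key (k + 1) (by omega) n hn hφ
end
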